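/- arXiv:2105.09661 — 14 statements merged into one kernel-verified Lean document; each statement's English description precedes it below -/
import Mathlib

section
/- In the odd case, for every index i ≤ η and every point x ∈ Ω¹ = [a,ξ], the mapped Lagrange basis function converges pointwise to the classical Lagrange basis polynomial of the left node group: lim_{κ→∞} ℓ_i^κ(x) = ∏_{j=0, j≠i}^{η} (x − x_j)/(x_i − x_j). -/
open Filter Finset Real Topology

lemma aux_tendsto_one (c d : ℝ) :
    Tendsto (fun κ : ℝ => (c - κ) / (d - κ)) atTop (𝓝 1) := by
  have h0 : Tendsto (fun κ : ℝ => κ - d) atTop atTop :=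
    tendsto_atTop_add_const_right atTop (-d) tendsto_id
  have hinv : Tendsto (fun κ : ℝ => (d - κ)⁻¹) atTop (𝓝 0) := by
    have := h0.inv_tendsto_atTop.neg
    simpa [neg_inv, neg_sub] using this
  have h1 : Tendsto (fun κ : ℝ => 1 + (c - d) * (d - κ)⁻¹) atTop (𝓝 1) := by
    simpa using tendsto_const_nhds.add (tendsto_const_nhds.mul hinv)
  refine h1.congr' ?_
  filter_upwards [eventually_gt_atTop d] with κ hκ
  have hne : d - κ ≠ 0 := by linarith
  field_simp
  ring

theorem stmt_0
    (a b ξ : ℝ) (hab : a < b) (hξ : ξ ∈ Set.Ioo a b)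
    (n : ℕ) (hn : Odd n) (η : ℕ) (hη : η = (n - 1) / 2)
    (x : Fin (n + 1) → ℝ) (hmono : StrictMono x)
    (hxΩ : ∀ i, x i ∈ Set.Icc a b)
    (hleft : ∀ i : Fin (n + 1), (i : ℕ) ≤ η → x i ≤ ξ)
    (hright : ∀ i : Fin (n + 1), η < (i : ℕ) → ξ < x i)
    (S : ℝ → ℝ → ℝ)
    (hS : ∀ κ t, S κ t = if t ≤ ξ then t else t + κ)
    (ℓ : ℝ → Fin (n + 1) → ℝ → ℝ)
    (hℓ : ∀ κ i t, ℓ κ i t =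
      ∏ j ∈ Finset.univ.erase i, (S κ t - S κ (x j)) / (S κ (x i) - S κ (x j)))
    (i : Fin (n + 1)) (hi : (i : ℕ) ≤ η)
    (t : ℝ) (ht : t ∈ Set.Icc a ξ) :
    Tendsto (fun κ => ℓ κ i t) atTop
      (𝓝 (∏ j ∈ (Finset.univ.filter (fun j : Fin (n + 1) => (j : ℕ) ≤ η)).erase i,
        (t - x j) / (x i - x j))) := by
  set p : Fin (n + 1) → Prop := fun j => (j : ℕ) ≤ η with hp
  have hSt : ∀ κ, S κ t = t := fun κ => by rw [hS, if_pos ht.2]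
  have hSi : ∀ κ, S κ (x i) = x i := fun κ => by
    rw [hS, if_pos (hleft i hi)]
  have key : ∀ κ, ℓ κ i t =
      (∏ j ∈ (Finset.univ.filter p).erase i, (t - x j) / (x i - x j)) *
      ∏ j ∈ Finset.univ.filter (fun j => ¬ p j),
        ((t - x j) - κ) / ((x i - x j) - κ) := by
    intro κ
    rw [hℓ, ← Finset.prod_filter_mul_prod_filter_not (Finset.univ.erase i) p]
    congr 1
    · rw [Finset.filter_erase]
      refine Finset.prod_congr rfl fun j hj => ?_
      have hpj : p j := (Finset.mem_filter.1 (Finset.mem_of_mem_erase hj)).2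
      rw [hSt, hSi, hS, if_pos (hleft j hpj)]
    · have hiNot : i ∉ Finset.univ.filter (fun j => ¬ p j) := by
        simp only [Finset.mem_filter, not_and, not_not]
        intro _; exact hi
      rw [Finset.filter_erase, Finset.erase_eq_self.2 hiNot]
      refine Finset.prod_congr rfl fun j hj => ?_
      have hpj : ¬ p j := (Finset.mem_filter.1 hj).2
      have hxj : ¬ x j ≤ ξ := not_le.2 (hright j (not_le.1 hpj))
      rw [hSt, hSi, hS, if_neg hxj]
      ring_nf
  have h2 : Tendsto (fun κ => ∏ j ∈ Finset.univ.filter (fun j => ¬ p j),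
      ((t - x j) - κ) / ((x i - x j) - κ)) atTop (𝓝 1) := by
    have := tendsto_finset_prod (Finset.univ.filter (fun j => ¬ p j))
      (fun j (_ : j ∈ Finset.univ.filter (fun j => ¬ p j)) =>
        aux_tendsto_one (t - x j) (x i - x j))
    simpa using this
  have h3 : Tendsto (fun κ => (∏ j ∈ (Finset.univ.filter p).erase i,
      (t - x j) / (x i - x j)) *
      ∏ j ∈ Finset.univ.filter (fun j => ¬ p j),
        ((t - x j) - κ) / ((x i - x j) - κ)) atTop
      (𝓝 ((∏ j ∈ (Finset.univ.filter p).erase i, (t - x j) / (x i - x j)) * 1)) :=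
    tendsto_const_nhds.mul h2
  rw [mul_one] at h3
  exact h3.congr fun κ => (key κ).symm
end

section
/- In the odd case, for every index i ≤ η and every point x ∈ Ω² = (ξ,b], the mapped Lagrange basis function vanishes in the limit: lim_{κ→∞} ℓ_i^κ(x) = 0. -/
open Filter Finset Real Topology

theorem stmt_1
    (a b ξ : ℝ) (hab : a < b) (hξ : ξ ∈ Set.Ioo a b)
    (n : ℕ) (hn : Odd n) (η : ℕ) (hη : η = (n - 1) / 2)
    (x : Fin (n + 1) → ℝ) (hmono : StrictMono x)
    (hxΩ : ∀ i, x i ∈ Set.Icc a b)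
    (hleft : ∀ i : Fin (n + 1), (i : ℕ) ≤ η → x i ≤ ξ)
    (hright : ∀ i : Fin (n + 1), η < (i : ℕ) → ξ < x i)
    (S : ℝ → ℝ → ℝ)
    (hS : ∀ κ t, S κ t = if t ≤ ξ then t else t + κ)
    (ℓ : ℝ → Fin (n + 1) → ℝ → ℝ)
    (hℓ : ∀ κ i t, ℓ κ i t =
      ∏ j ∈ Finset.univ.erase i, (S κ t - S κ (x j)) / (S κ (x i) - S κ (x j)))
    (i : Fin (n + 1)) (hi : (i : ℕ) ≤ η)
    (t : ℝ) (ht : t ∈ Set.Ioc ξ b) :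
    Tendsto (fun κ => ℓ κ i t) atTop (𝓝 0) := by
  classical
  have hxi : x i ≤ ξ := hleft i hi
  set P : Polynomial ℝ := ∏ j ∈ Finset.univ.erase i,
      (if (j : ℕ) ≤ η then Polynomial.X + Polynomial.C (t - x j)
       else Polynomial.C (t - x j)) with hP
  set Q : Polynomial ℝ := ∏ j ∈ Finset.univ.erase i,
      (if (j : ℕ) ≤ η then Polynomial.C (x i - x j)
       else Polynomial.C (x i - x j) - Polynomial.X) with hQ
  have key : ∀ κ : ℝ, ℓ κ i t = P.eval κ / Q.eval κ := by
    intro κ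
    rw [hℓ, Finset.prod_div_distrib, hP, hQ, Polynomial.eval_prod, Polynomial.eval_prod]
    congr 1
    · refine Finset.prod_congr rfl fun j hj => ?_
      by_cases h : (j : ℕ) ≤ η
      · rw [if_pos h, hS, hS, if_neg (not_le.mpr ht.1), if_pos (hleft j h)]
        simp; ring
      · rw [if_neg h, hS, hS, if_neg (not_le.mpr ht.1),
          if_neg (not_le.mpr (hright j (not_le.mp h)))]
        simp
    · refine Finset.prod_congr rfl fun j hj => ?_
      by_cases h : (j : ℕ) ≤ η
      · rw [if_pos h, hS, hS, if_pos hxi, if_pos (hleft j h)]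
        simp
      · rw [if_neg h, hS, hS, if_pos hxi,
          if_neg (not_le.mpr (hright j (not_le.mp h)))]
        simp; ring
  -- cardinalities
  set sL : Finset (Fin (n + 1)) := (Finset.univ.erase i).filter (fun j => (j : ℕ) ≤ η)
    with hsL
  set sR : Finset (Fin (n + 1)) := (Finset.univ.erase i).filter (fun j => ¬ (j : ℕ) ≤ η)
    with hsR
  have hcard : sL.card + sR.card = n := by
    rw [hsL, hsR, Finset.card_filter_add_card_filter_not]
    simp [Finset.card_erase_of_mem]
  have hL_le : sL.card ≤ η := by
    have : sL.card ≤ ((Finset.range (η + 1)).erase (i : ℕ)).card := by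
      refine Finset.card_le_card_of_injOn (fun j => (j : ℕ)) ?_ ?_
      · intro j hj
        rw [hsL, Finset.mem_coe, Finset.mem_filter, Finset.mem_erase] at hj
        rw [Finset.mem_coe, Finset.mem_erase, Finset.mem_range]
        exact ⟨fun h => hj.1.1 (Fin.val_injective h), Nat.lt_succ_of_le hj.2⟩
      · exact fun j _ k _ h => Fin.val_injective h
    rwa [Finset.card_erase_of_mem (by simp [Nat.lt_succ_of_le hi]),
      Finset.card_range, Nat.add_sub_cancel] at this
  have hLR : sL.card < sR.card := by
    obtain ⟨k, hk⟩ := hn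
    omega
  have hdegP : P.degree ≤ (sL.card : WithBot ℕ) := by
    calc P.degree ≤ ∑ j ∈ Finset.univ.erase i,
        (if (j : ℕ) ≤ η then (1 : WithBot ℕ) else 0) := by
          refine le_trans (Polynomial.degree_prod_le _ _) (Finset.sum_le_sum fun j _ => ?_)
          by_cases h : (j : ℕ) ≤ η
          · simp only [if_pos h]
            exact le_of_eq (Polynomial.degree_X_add_C _)
          · simp only [if_neg h]
            exact Polynomial.degree_C_le
      _ = (sL.card : WithBot ℕ) := by
          rw [hsL, Finset.card_filter]
          push_cast [Finset.sum_ite, Finset.sum_const]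
          simp [Finset.sum_ite, Finset.sum_const]
  have hdegQ : Q.degree = (sR.card : WithBot ℕ) := by
    rw [hQ, Polynomial.degree_prod]
    have : ∀ j ∈ Finset.univ.erase i,
        (if (j : ℕ) ≤ η then Polynomial.C (x i - x j)
          else Polynomial.C (x i - x j) - Polynomial.X).degree
        = (if (j : ℕ) ≤ η then (0 : WithBot ℕ) else 1) := by
      intro j hj
      have hne : x i - x j ≠ 0 := sub_ne_zero.mpr
        (fun h => (Finset.mem_erase.mp hj).1 (hmono.injective h.symm))
      by_cases h : (j : ℕ) ≤ η
      · simp only [if_pos h]; exact Polynomial.degree_C hne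
      · simp only [if_neg h]
        have : Polynomial.C (x i - x j) - Polynomial.X
            = -(Polynomial.X - Polynomial.C (x i - x j)) := by ring
        rw [this, Polynomial.degree_neg, Polynomial.degree_X_sub_C]
    rw [Finset.sum_congr rfl this, hsR, Finset.card_filter]
    simp [Finset.sum_ite, Finset.sum_const]
  have hdeg : P.degree < Q.degree := by
    refine lt_of_le_of_lt hdegP ?_
    rw [hdegQ]
    exact_mod_cast hLR
  have := Polynomial.div_tendsto_zero_of_degree_lt P Q hdeg
  simpa only [key] using this
end

section
/- In the odd case, for every index i > η and every point x ∈ Ω¹ = [a,ξ], the mapped Lagrange basis function vanishes in the limit: lim_{κ→∞} ℓ_i^κ(x) = 0. -/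
open Filter Finset Real Topology

lemma lim_left (c d : ℝ) : Tendsto (fun κ : ℝ => κ * (c / (d + κ))) atTop (𝓝 c) := by
  have h1 : Tendsto (fun κ : ℝ => c / (d * κ⁻¹ + 1)) atTop (𝓝 c) := by
    have hden : Tendsto (fun κ : ℝ => d * κ⁻¹ + 1) atTop (𝓝 1) := by
      have := (tendsto_inv_atTop_zero.const_mul d).add (tendsto_const_nhds (x := (1:ℝ)))
      simpa using this
    have := (tendsto_const_nhds (x := c)).div hden one_ne_zero
    rw [div_one] at this
    exact this
  refine h1.congr' ?_
  filter_upwards [eventually_gt_atTop (0:ℝ), eventually_gt_atTop (-d)] with κ hκ hκd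
  have hκ0 : κ ≠ 0 := ne_of_gt hκ
  have hdκ : d + κ ≠ 0 := by linarith
  field_simp

lemma lim_right (c e : ℝ) : Tendsto (fun κ : ℝ => κ⁻¹ * ((c - κ) / e)) atTop (𝓝 (-e⁻¹)) := by
  have h1 : Tendsto (fun κ : ℝ => (c * κ⁻¹ - 1) / e) atTop (𝓝 (-e⁻¹)) := by
    have hnum : Tendsto (fun κ : ℝ => c * κ⁻¹ - 1) atTop (𝓝 (-1)) := by
      have := (tendsto_inv_atTop_zero.const_mul c).sub (tendsto_const_nhds (x := (1:ℝ)))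
      simpa using this
    have := hnum.div_const e
    simpa [neg_div, one_div] using this
  refine h1.congr' ?_
  filter_upwards [eventually_gt_atTop (0:ℝ)] with κ hκ
  have hκ0 : κ ≠ 0 := ne_of_gt hκ
  field_simp

theorem stmt_2
    (a b ξ : ℝ) (hab : a < b) (hξ : ξ ∈ Set.Ioo a b)
    (n : ℕ) (hn : Odd n) (η : ℕ) (hη : η = (n - 1) / 2)
    (x : Fin (n + 1) → ℝ) (hmono : StrictMono x)
    (hxΩ : ∀ i, x i ∈ Set.Icc a b)
    (hleft : ∀ i : Fin (n + 1), (i : ℕ) ≤ η → x i ≤ ξ)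
    (hright : ∀ i : Fin (n + 1), η < (i : ℕ) → ξ < x i)
    (S : ℝ → ℝ → ℝ)
    (hS : ∀ κ t, S κ t = if t ≤ ξ then t else t + κ)
    (ℓ : ℝ → Fin (n + 1) → ℝ → ℝ)
    (hℓ : ∀ κ i t, ℓ κ i t =
      ∏ j ∈ Finset.univ.erase i, (S κ t - S κ (x j)) / (S κ (x i) - S κ (x j)))
    (i : Fin (n + 1)) (hi : η < (i : ℕ))
    (t : ℝ) (ht : t ∈ Set.Icc a ξ) :
    Tendsto (fun κ => ℓ κ i t) atTop (𝓝 0) := by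
  obtain ⟨k, hk⟩ := hn
  have hnη : n = 2 * η + 1 := by omega
  have hηn : η < n + 1 := by omega
  set w : ℝ → Fin (n + 1) → ℝ := fun κ j => if (j : ℕ) ≤ η then κ else κ⁻¹ with hw
  set g : ℝ → Fin (n + 1) → ℝ :=
    fun κ j => w κ j * ((S κ t - S κ (x j)) / (S κ (x i) - S κ (x j))) with hg
  have hSt : ∀ κ, S κ t = t := by
    intro κ; rw [hS]; simp [ht.2]
  have hSi : ∀ κ, S κ (x i) = x i + κ := by
    intro κ; rw [hS]; simp [not_le.mpr (hright i hi)]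
  -- counting
  have hleftcard :
      ((univ.erase i).filter (fun j : Fin (n + 1) => (j : ℕ) ≤ η)).card = η + 1 := by
    rw [Finset.filter_erase, Finset.erase_eq_of_notMem (by simp [Nat.not_le.mpr hi])]
    have heq : (univ.filter (fun j : Fin (n + 1) => (j : ℕ) ≤ η)) = Finset.Iic ⟨η, hηn⟩ := by
      ext j
      simp [Fin.le_def]
    rw [heq, Fin.card_Iic]
  have hrightcard :
      ((univ.erase i).filter (fun j : Fin (n + 1) => ¬ (j : ℕ) ≤ η)).card = η := by
    have htot := Finset.card_filter_add_card_filter_not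
      (s := univ.erase i) (p := fun j : Fin (n + 1) => (j : ℕ) ≤ η)
    have hcard : (univ.erase i).card = n := by
      rw [Finset.card_erase_of_mem (Finset.mem_univ i)]
      simp
    omega
  have hprodw : ∀ κ : ℝ, 0 < κ → ∏ j ∈ univ.erase i, w κ j = κ := by
    intro κ hκ
    have hκ0 : κ ≠ 0 := ne_of_gt hκ
    rw [hw]
    rw [Finset.prod_ite, Finset.prod_const, Finset.prod_const, hleftcard, hrightcard]
    rw [pow_succ, inv_pow]
    field_simp
  -- eventual equality
  have heq : (fun κ => ℓ κ i t) =ᶠ[atTop]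
      (fun κ => κ⁻¹ * ∏ j ∈ univ.erase i, g κ j) := by
    filter_upwards [eventually_gt_atTop (0:ℝ)] with κ hκ
    rw [hℓ]
    have hdist : ∏ j ∈ univ.erase i, g κ j =
        (∏ j ∈ univ.erase i, w κ j) *
          ∏ j ∈ univ.erase i, (S κ t - S κ (x j)) / (S κ (x i) - S κ (x j)) :=
      Finset.prod_mul_distrib
    rw [hdist, hprodw κ hκ, ← mul_assoc, inv_mul_cancel₀ (ne_of_gt hκ), one_mul]
  -- limits of each factor
  have hgj : ∀ j ∈ univ.erase i, Tendsto (fun κ => g κ j) atTop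
      (𝓝 (if (j : ℕ) ≤ η then t - x j else -(x i - x j)⁻¹)) := by
    intro j hj
    by_cases hjη : (j : ℕ) ≤ η
    · have hSxj : ∀ κ, S κ (x j) = x j := by
        intro κ; rw [hS]; simp [hleft j hjη]
      simp only [hg, hw, hjη, if_true, hSt, hSi, hSxj]
      refine (lim_left (t - x j) (x i - x j)).congr fun κ => ?_
      ring_nf
    · have hSxj : ∀ κ, S κ (x j) = x j + κ := by
        intro κ; rw [hS]; simp [not_le.mpr (hright j (lt_of_not_ge hjη))]
      simp only [hg, hw, hjη, if_false, hSt, hSi, hSxj]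
      refine (lim_right (t - x j) (x i - x j)).congr fun κ => ?_
      have h1 : t - (x j + κ) = t - x j - κ := by ring
      have h2 : x i + κ - (x j + κ) = x i - x j := by ring
      rw [h1, h2]
  have hprod := tendsto_finset_prod (univ.erase i) hgj
  have hmain := tendsto_inv_atTop_zero.mul hprod
  rw [zero_mul] at hmain
  exact hmain.congr' heq.symm
end

section
/- In the odd case, for every index i > η and every point x ∈ Ω² = (ξ,b], the mapped Lagrange basis function converges pointwise to the classical Lagrange basis polynomial of the right node group: lim_{κ→∞} ℓ_i^κ(x) = ∏_{j=η+1, j≠i}^{n} (x − x_j)/(x_i − x_j). -/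
open Filter Finset Real Topology

lemma aux_ratio_tendsto (c d : ℝ) :
    Tendsto (fun κ : ℝ => (κ + c) / (κ + d)) atTop (𝓝 1) := by
  have h1 : Tendsto (fun κ : ℝ => κ + d) atTop atTop :=
    tendsto_atTop_add_const_right _ _ tendsto_id
  have h2 : Tendsto (fun κ : ℝ => (c - d) * (κ + d)⁻¹) atTop (𝓝 0) := by
    simpa using (tendsto_inv_atTop_zero.comp h1).const_mul (c - d)
  have h3 : Tendsto (fun κ : ℝ => 1 + (c - d) * (κ + d)⁻¹) atTop (𝓝 1) := by
    simpa using h2.const_add 1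
  refine Tendsto.congr' ?_ h3
  filter_upwards [eventually_gt_atTop (-d)] with κ hκ
  have hne : κ + d ≠ 0 := by linarith
  field_simp
  ring

theorem stmt_3
    (a b ξ : ℝ) (hab : a < b) (hξ : ξ ∈ Set.Ioo a b)
    (n : ℕ) (hn : Odd n) (η : ℕ) (hη : η = (n - 1) / 2)
    (x : Fin (n + 1) → ℝ) (hmono : StrictMono x)
    (hxΩ : ∀ i, x i ∈ Set.Icc a b)
    (hleft : ∀ i : Fin (n + 1), (i : ℕ) ≤ η → x i ≤ ξ)
    (hright : ∀ i : Fin (n + 1), η < (i : ℕ) → ξ < x i)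
    (S : ℝ → ℝ → ℝ)
    (hS : ∀ κ t, S κ t = if t ≤ ξ then t else t + κ)
    (ℓ : ℝ → Fin (n + 1) → ℝ → ℝ)
    (hℓ : ∀ κ i t, ℓ κ i t =
      ∏ j ∈ Finset.univ.erase i, (S κ t - S κ (x j)) / (S κ (x i) - S κ (x j)))
    (i : Fin (n + 1)) (hi : η < (i : ℕ))
    (t : ℝ) (ht : t ∈ Set.Ioc ξ b) :
    Tendsto (fun κ => ℓ κ i t) atTop
      (𝓝 (∏ j ∈ (Finset.univ.filter (fun j : Fin (n + 1) => η < (j : ℕ))).erase i,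
        (t - x j) / (x i - x j))) := by
  have hxi : ξ < x i := hright i hi
  have htξ : ξ < t := ht.1
  set L : Fin (n + 1) → ℝ :=
    fun j => if η < (j : ℕ) then (t - x j) / (x i - x j) else 1 with hL
  have key : ∀ j ∈ Finset.univ.erase i,
      Tendsto (fun κ => (S κ t - S κ (x j)) / (S κ (x i) - S κ (x j)))
        atTop (𝓝 (L j)) := by
    intro j hj
    by_cases hjη : η < (j : ℕ)
    · have hxj : ξ < x j := hright j hjη
      have heq : (fun κ => (S κ t - S κ (x j)) / (S κ (x i) - S κ (x j)))
          = fun _ : ℝ => (t - x j) / (x i - x j) := by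
        funext κ
        rw [hS, hS, hS, if_neg (not_le.2 htξ), if_neg (not_le.2 hxj),
          if_neg (not_le.2 hxi)]
        ring_nf
      rw [heq, hL]
      simp only [if_pos hjη]
      exact tendsto_const_nhds
    · push_neg at hjη
      have hxj : x j ≤ ξ := hleft j hjη
      have heq : (fun κ => (S κ t - S κ (x j)) / (S κ (x i) - S κ (x j)))
          = fun κ : ℝ => (κ + (t - x j)) / (κ + (x i - x j)) := by
        funext κ
        rw [hS, hS, hS, if_neg (not_le.2 htξ), if_pos hxj, if_neg (not_le.2 hxi)]
        ring_nf
      rw [heq, hL]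
      simp only [if_neg (not_lt.2 hjη)]
      exact aux_ratio_tendsto _ _
  have hmain := tendsto_finset_prod (Finset.univ.erase i) key
  have hprodeq : ∏ j ∈ Finset.univ.erase i, L j
      = ∏ j ∈ (Finset.univ.filter (fun j : Fin (n + 1) => η < (j : ℕ))).erase i,
        (t - x j) / (x i - x j) := by
    rw [← Finset.filter_erase, Finset.prod_filter]
  have hfun : (fun κ => ℓ κ i t)
      = fun κ => ∏ j ∈ Finset.univ.erase i,
        (S κ t - S κ (x j)) / (S κ (x i) - S κ (x j)) := by
    funext κ; exact hℓ κ i t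
  rw [hfun, ← hprodeq]
  exact hmain
end

section
/- In the odd case, the mapped Lebesgue function converges pointwise to the piecewise classical Lebesgue functions of the two node groups: for every x ∈ Ω¹ one has lim_{κ→∞} λ^κ(x) = λ(X¹;x), and for every x ∈ Ω² one has lim_{κ→∞} λ^κ(x) = λ(X²;x). -/
open Filter Finset Real Topology

private lemma master_lin (a₁ b₁ a₂ b₂ : ℝ) (hb₂ : b₂ ≠ 0) :
    Tendsto (fun κ : ℝ => (a₁ + b₁ * κ) / (a₂ + b₂ * κ)) atTop (𝓝 (b₁ / b₂)) := by
  have h1 : Tendsto (fun κ : ℝ => a₁ / κ + b₁) atTop (𝓝 (0 + b₁)) :=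
    (tendsto_const_nhds.div_atTop tendsto_id).add tendsto_const_nhds
  have h2 : Tendsto (fun κ : ℝ => a₂ / κ + b₂) atTop (𝓝 (0 + b₂)) :=
    (tendsto_const_nhds.div_atTop tendsto_id).add tendsto_const_nhds
  have h := h1.div h2 (by simpa using hb₂)
  simp only [zero_add] at h
  refine h.congr' ?_
  filter_upwards [eventually_gt_atTop (0:ℝ)] with κ hκ
  have hκ' : κ ≠ 0 := ne_of_gt hκ
  have e1 : a₁ / κ + b₁ = (a₁ + b₁ * κ) / κ := by field_simp
  have e2 : a₂ / κ + b₂ = (a₂ + b₂ * κ) / κ := by field_simp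
  simp only [Pi.div_apply]
  rw [e1, e2, div_div_div_cancel_right₀ hκ']

private lemma key_zero {ι : Type*} [DecidableEq ι] (s u : Finset ι) (hu : u ⊆ s)
    (hcard : (s \ u).card + 1 = u.card)
    (a b c d : ι → ℝ)
    (hb : ∀ j ∈ u, b j = 0)
    (hd : ∀ j ∈ u, d j ≠ 0)
    (hd0 : ∀ j ∈ s \ u, d j = 0)
    (hc : ∀ j ∈ s \ u, c j ≠ 0) :
    Tendsto (fun κ : ℝ => ∏ j ∈ s, ((a j + b j * κ) / (c j + d j * κ))) atTop (𝓝 0) := by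
  set m := u.card with hm
  have hN : Tendsto (fun κ : ℝ => (∏ j ∈ s, (a j + b j * κ)) / κ ^ m) atTop (𝓝 0) := by
    have key : Tendsto (fun κ : ℝ =>
        ((∏ j ∈ s \ u, ((a j + b j * κ) / κ)) * (∏ j ∈ u, a j)) * κ⁻¹) atTop
        (𝓝 (((∏ j ∈ s \ u, b j) * (∏ j ∈ u, a j)) * 0)) := by
      refine Tendsto.mul (Tendsto.mul ?_ tendsto_const_nhds) tendsto_inv_atTop_zero
      refine tendsto_finset_prod _ fun j hj => ?_
      simpa using master_lin (a j) (b j) 0 1 one_ne_zero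
    rw [mul_zero] at key
    refine key.congr' ?_
    filter_upwards [eventually_gt_atTop (0:ℝ)] with κ hκ
    have hκ' : κ ≠ 0 := ne_of_gt hκ
    have split : (∏ j ∈ s, (a j + b j * κ)) = (∏ j ∈ s \ u, (a j + b j * κ)) * ∏ j ∈ u, a j := by
      rw [← Finset.prod_sdiff hu]
      congr 1
      exact Finset.prod_congr rfl fun j hj => by rw [hb j hj, zero_mul, add_zero]
    rw [split, Finset.prod_div_distrib, Finset.prod_const, ← hcard, pow_succ]
    field_simp
    exact (mul_comm _ _).trans (congrArg _ (Finset.prod_congr rfl fun j _ => by ring))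
  have hD : Tendsto (fun κ : ℝ => (∏ j ∈ s, (c j + d j * κ)) / κ ^ m) atTop
      (𝓝 ((∏ j ∈ u, d j) * ∏ j ∈ s \ u, c j)) := by
    have key : Tendsto (fun κ : ℝ =>
        (∏ j ∈ u, ((c j + d j * κ) / κ)) * (∏ j ∈ s \ u, c j)) atTop
        (𝓝 ((∏ j ∈ u, d j) * ∏ j ∈ s \ u, c j)) := by
      refine Tendsto.mul ?_ tendsto_const_nhds
      refine tendsto_finset_prod _ fun j hj => ?_
      simpa using master_lin (c j) (d j) 0 1 one_ne_zero
    refine key.congr' ?_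
    filter_upwards [eventually_gt_atTop (0:ℝ)] with κ hκ
    have hκ' : κ ≠ 0 := ne_of_gt hκ
    have split : (∏ j ∈ s, (c j + d j * κ)) = (∏ j ∈ s \ u, c j) * ∏ j ∈ u, (c j + d j * κ) := by
      rw [← Finset.prod_sdiff hu]
      congr 1
      exact Finset.prod_congr rfl fun j hj => by rw [hd0 j hj, zero_mul, add_zero]
    rw [split, Finset.prod_div_distrib, Finset.prod_const, hm]
    field_simp
    exact (mul_comm _ _).trans (congrArg _ (Finset.prod_congr rfl fun j _ => by ring))
  have hDne : (∏ j ∈ u, d j) * ∏ j ∈ s \ u, c j ≠ 0 :=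
    mul_ne_zero (Finset.prod_ne_zero_iff.2 hd) (Finset.prod_ne_zero_iff.2 hc)
  have h := hN.div hD hDne
  rw [zero_div] at h
  refine h.congr' ?_
  filter_upwards [eventually_gt_atTop (0:ℝ)] with κ hκ
  simp only [Pi.div_apply]
  rw [div_div_div_cancel_right₀ (pow_ne_zero _ (ne_of_gt hκ)), ← Finset.prod_div_distrib]

theorem stmt_4
    (a b ξ : ℝ) (hab : a < b) (hξ : ξ ∈ Set.Ioo a b)
    (n : ℕ) (hn : Odd n) (η : ℕ) (hη : η = (n - 1) / 2)
    (x : Fin (n + 1) → ℝ) (hmono : StrictMono x)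
    (hxΩ : ∀ i, x i ∈ Set.Icc a b)
    (hleft : ∀ i : Fin (n + 1), (i : ℕ) ≤ η → x i ≤ ξ)
    (hright : ∀ i : Fin (n + 1), η < (i : ℕ) → ξ < x i)
    (S : ℝ → ℝ → ℝ)
    (hS : ∀ κ t, S κ t = if t ≤ ξ then t else t + κ)
    (ℓ : ℝ → Fin (n + 1) → ℝ → ℝ)
    (hℓ : ∀ κ i t, ℓ κ i t =
      ∏ j ∈ Finset.univ.erase i, (S κ t - S κ (x j)) / (S κ (x i) - S κ (x j)))
    : (∀ t ∈ Set.Icc a ξ,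
        Tendsto (fun κ => ∑ i : Fin (n + 1), |ℓ κ i t|) atTop
          (𝓝 (∑ i ∈ Finset.univ.filter (fun j : Fin (n + 1) => (j : ℕ) ≤ η),
            ∏ j ∈ (Finset.univ.filter (fun j : Fin (n + 1) => (j : ℕ) ≤ η)).erase i,
              |t - x j| / |x i - x j|))) ∧
      (∀ t ∈ Set.Ioc ξ b,
        Tendsto (fun κ => ∑ i : Fin (n + 1), |ℓ κ i t|) atTop
          (𝓝 (∑ i ∈ Finset.univ.filter (fun j : Fin (n + 1) => η < (j : ℕ)),
            ∏ j ∈ (Finset.univ.filter (fun j : Fin (n + 1) => η < (j : ℕ))).erase i,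
              |t - x j| / |x i - x j|))) := by
  have hxinj : Function.Injective x := hmono.injective
  obtain ⟨k, hk⟩ := hn
  have hn2 : n = 2 * η + 1 := by omega
  have hηn : η < n + 1 := by omega
  set A : Finset (Fin (n+1)) := Finset.univ.filter (fun j => (j:ℕ) ≤ η) with hA
  set B : Finset (Fin (n+1)) := Finset.univ.filter (fun j => η < (j:ℕ)) with hB
  have hmemA : ∀ j : Fin (n+1), j ∈ A ↔ (j:ℕ) ≤ η := by
    intro j; simp [hA]
  have hmemB : ∀ j : Fin (n+1), j ∈ B ↔ η < (j:ℕ) := by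
    intro j; simp [hB]
  have hcardA : A.card = η + 1 := by
    have e : A = Finset.Iic (⟨η, hηn⟩ : Fin (n+1)) := by
      ext j; simp [hA, Fin.le_def]
    rw [e, Fin.card_Iic]
  have hcardB : B.card = η + 1 := by
    have h1 := Finset.card_filter_add_card_filter_not
      (s := (Finset.univ : Finset (Fin (n+1)))) (p := fun j => (j:ℕ) ≤ η)
    have e : Finset.univ.filter (fun j : Fin (n+1) => ¬ (j:ℕ) ≤ η) = B := by
      ext j; simp [hB, not_le]
    rw [e] at h1
    have h2 : (Finset.univ : Finset (Fin (n+1))).card = n + 1 := by simp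
    rw [h2, ← hA] at h1
    omega
  have hne : ∀ (i j : Fin (n+1)), j ≠ i → x i - x j ≠ 0 := by
    intro i j hji
    exact sub_ne_zero_of_ne fun h => hji (hxinj h).symm
  constructor
  · -- t ∈ Ω¹
    intro t ht
    have htξ : t ≤ ξ := ht.2
    set L : Fin (n+1) → ℝ := fun i =>
      if (i:ℕ) ≤ η then ∏ j ∈ A.erase i, (t - x j) / (x i - x j) else 0 with hL
    have hCi : ∀ i : Fin (n+1), Tendsto (fun κ => ℓ κ i t) atTop (𝓝 (L i)) := by
      intro i
      by_cases hi : (i:ℕ) ≤ η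
      · have hfun : ∀ κ, ℓ κ i t =
            ∏ j ∈ Finset.univ.erase i,
              (if (j:ℕ) ≤ η then (t - x j)/(x i - x j)
               else ((t - x j) + (-1) * κ) / ((x i - x j) + (-1) * κ)) := by
          intro κ
          rw [hℓ]
          refine Finset.prod_congr rfl fun j hj => ?_
          by_cases hjη : (j:ℕ) ≤ η
          · rw [if_pos hjη, hS, hS, hS, if_pos htξ, if_pos (hleft j hjη), if_pos (hleft i hi)]
          · rw [if_neg hjη, hS, hS, hS, if_pos htξ,
              if_neg (not_le.2 (hright j (not_le.1 hjη))), if_pos (hleft i hi)]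
            ring_nf
        have hlim : Tendsto (fun κ => ∏ j ∈ Finset.univ.erase i,
            (if (j:ℕ) ≤ η then (t - x j)/(x i - x j)
             else ((t - x j) + (-1)*κ)/((x i - x j) + (-1)*κ))) atTop
            (𝓝 (∏ j ∈ Finset.univ.erase i,
              (if (j:ℕ) ≤ η then (t - x j)/(x i - x j) else 1))) := by
          refine tendsto_finset_prod _ fun j hj => ?_
          by_cases hjη : (j:ℕ) ≤ η
          · simp only [hjη, if_true]; exact tendsto_const_nhds
          · simp only [hjη, if_false]
            have := master_lin (t - x j) (-1) (x i - x j) (-1) (by norm_num)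
            simpa using this
        have hval : (∏ j ∈ Finset.univ.erase i,
            (if (j:ℕ) ≤ η then (t - x j)/(x i - x j) else 1)) = L i := by
          simp only [hL, hi, if_true]
          rw [← Finset.prod_filter, Finset.filter_erase, ← hA]
        exact hval ▸ (hlim.congr fun κ => (hfun κ).symm)
      · have hiB : η < (i:ℕ) := not_le.1 hi
        have hxiξ : ¬ x i ≤ ξ := not_le.2 (hright i hiB)
        have hL0 : L i = 0 := by simp [hL, hi]
        rw [hL0]
        have hfun : ∀ κ, ℓ κ i t =
            ∏ j ∈ Finset.univ.erase i,
              (((t - x j) + (if (j:ℕ) ≤ η then (0:ℝ) else -1) * κ)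
                / ((x i - x j) + (if (j:ℕ) ≤ η then (1:ℝ) else 0) * κ)) := by
          intro κ; rw [hℓ]
          refine Finset.prod_congr rfl fun j hj => ?_
          by_cases hjη : (j:ℕ) ≤ η
          · rw [if_pos hjη, if_pos hjη, hS, hS, hS, if_pos htξ, if_pos (hleft j hjη),
              if_neg hxiξ]
            ring_nf
          · rw [if_neg hjη, if_neg hjη, hS, hS, hS, if_pos htξ,
              if_neg (not_le.2 (hright j (not_le.1 hjη))), if_neg hxiξ]
            ring_nf
        refine Tendsto.congr (fun κ => (hfun κ).symm) ?_
        have hsub : A ⊆ Finset.univ.erase i := by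
          intro j hj
          refine Finset.mem_erase.2 ⟨?_, Finset.mem_univ j⟩
          intro hji
          exact hi (hji ▸ (hmemA j).1 hj)
        have e : Finset.univ.erase i \ A = B.erase i := by
          ext j
          simp only [Finset.mem_sdiff, Finset.mem_erase, Finset.mem_univ, and_true, true_and,
            hmemA, hmemB, not_le]
          try tauto
        refine key_zero (Finset.univ.erase i) A hsub ?_
          (fun j => t - x j) (fun j => if (j:ℕ) ≤ η then (0:ℝ) else -1)
          (fun j => x i - x j) (fun j => if (j:ℕ) ≤ η then (1:ℝ) else 0) ?_ ?_ ?_ ?_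
        · rw [e, Finset.card_erase_of_mem ((hmemB i).2 hiB), hcardB, hcardA]; omega
        · intro j hj; simp [(hmemA j).1 hj]
        · intro j hj; simp [(hmemA j).1 hj]
        · intro j hj
          rw [e] at hj
          have : η < (j:ℕ) := (hmemB j).1 (Finset.mem_of_mem_erase hj)
          simp [not_le.2 this]
        · intro j hj
          rw [e] at hj
          exact hne i j (Finset.ne_of_mem_erase hj)
    have hsum : Tendsto (fun κ => ∑ i : Fin (n+1), |ℓ κ i t|) atTop
        (𝓝 (∑ i : Fin (n+1), |L i|)) :=
      tendsto_finset_sum _ fun i _ => (hCi i).abs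
    have hval : (∑ i ∈ A, ∏ j ∈ A.erase i, |t - x j| / |x i - x j|)
        = ∑ i : Fin (n+1), |L i| := by
      rw [hA, Finset.sum_filter]
      refine Finset.sum_congr rfl fun i _ => ?_
      by_cases hi : (i:ℕ) ≤ η
      · simp only [hL, hi, if_true, Finset.abs_prod, abs_div, ← hA]
      · simp [hL, hi]
    rw [hval]
    exact hsum
  · -- t ∈ Ω²
    intro t ht
    have htξ : ¬ t ≤ ξ := not_le.2 ht.1
    set L : Fin (n+1) → ℝ := fun i =>
      if η < (i:ℕ) then ∏ j ∈ B.erase i, (t - x j) / (x i - x j) else 0 with hL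
    have hCi : ∀ i : Fin (n+1), Tendsto (fun κ => ℓ κ i t) atTop (𝓝 (L i)) := by
      intro i
      by_cases hi : η < (i:ℕ)
      · have hxiξ : ¬ x i ≤ ξ := not_le.2 (hright i hi)
        have hfun : ∀ κ, ℓ κ i t =
            ∏ j ∈ Finset.univ.erase i,
              (if η < (j:ℕ) then (t - x j)/(x i - x j)
               else ((t - x j) + 1 * κ) / ((x i - x j) + 1 * κ)) := by
          intro κ
          rw [hℓ]
          refine Finset.prod_congr rfl fun j hj => ?_
          by_cases hjη : η < (j:ℕ)
          · rw [if_pos hjη, hS, hS, hS, if_neg htξ,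
              if_neg (not_le.2 (hright j hjη)), if_neg hxiξ]
            ring_nf
          · rw [if_neg hjη, hS, hS, hS, if_neg htξ,
              if_pos (hleft j (not_lt.1 hjη)), if_neg hxiξ]
            ring_nf
        have hlim : Tendsto (fun κ => ∏ j ∈ Finset.univ.erase i,
            (if η < (j:ℕ) then (t - x j)/(x i - x j)
             else ((t - x j) + 1*κ)/((x i - x j) + 1*κ))) atTop
            (𝓝 (∏ j ∈ Finset.univ.erase i,
              (if η < (j:ℕ) then (t - x j)/(x i - x j) else 1))) := by
          refine tendsto_finset_prod _ fun j hj => ?_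
          by_cases hjη : η < (j:ℕ)
          · simp only [hjη, if_true]; exact tendsto_const_nhds
          · simp only [hjη, if_false]
            have := master_lin (t - x j) 1 (x i - x j) 1 one_ne_zero
            simpa using this
        have hval : (∏ j ∈ Finset.univ.erase i,
            (if η < (j:ℕ) then (t - x j)/(x i - x j) else 1)) = L i := by
          simp only [hL, hi, if_true]
          rw [← Finset.prod_filter, Finset.filter_erase, ← hB]
        exact hval ▸ (hlim.congr fun κ => (hfun κ).symm)
      · have hiA : (i:ℕ) ≤ η := not_lt.1 hi
        have hxiξ : x i ≤ ξ := hleft i hiA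
        have hL0 : L i = 0 := by simp [hL, hi]
        rw [hL0]
        have hfun : ∀ κ, ℓ κ i t =
            ∏ j ∈ Finset.univ.erase i,
              (((t - x j) + (if η < (j:ℕ) then (0:ℝ) else 1) * κ)
                / ((x i - x j) + (if η < (j:ℕ) then (-1:ℝ) else 0) * κ)) := by
          intro κ; rw [hℓ]
          refine Finset.prod_congr rfl fun j hj => ?_
          by_cases hjη : η < (j:ℕ)
          · rw [if_pos hjη, if_pos hjη, hS, hS, hS, if_neg htξ,
              if_neg (not_le.2 (hright j hjη)), if_pos hxiξ]
            ring_nf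
          · rw [if_neg hjη, if_neg hjη, hS, hS, hS, if_neg htξ,
              if_pos (hleft j (not_lt.1 hjη)), if_pos hxiξ]
            ring_nf
        refine Tendsto.congr (fun κ => (hfun κ).symm) ?_
        have hsub : B ⊆ Finset.univ.erase i := by
          intro j hj
          refine Finset.mem_erase.2 ⟨?_, Finset.mem_univ j⟩
          intro hji
          exact hi (hji ▸ (hmemB j).1 hj)
        have e : Finset.univ.erase i \ B = A.erase i := by
          ext j
          simp only [Finset.mem_sdiff, Finset.mem_erase, Finset.mem_univ, and_true, true_and,
            hmemA, hmemB, not_lt]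
          try tauto
        refine key_zero (Finset.univ.erase i) B hsub ?_
          (fun j => t - x j) (fun j => if η < (j:ℕ) then (0:ℝ) else 1)
          (fun j => x i - x j) (fun j => if η < (j:ℕ) then (-1:ℝ) else 0) ?_ ?_ ?_ ?_
        · rw [e, Finset.card_erase_of_mem ((hmemA i).2 hiA), hcardA, hcardB]; omega
        · intro j hj; simp [(hmemB j).1 hj]
        · intro j hj; simp [(hmemB j).1 hj]
        · intro j hj
          rw [e] at hj
          have : (j:ℕ) ≤ η := (hmemA j).1 (Finset.mem_of_mem_erase hj)
          simp [not_lt.2 this]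
        · intro j hj
          rw [e] at hj
          exact hne i j (Finset.ne_of_mem_erase hj)
    have hsum : Tendsto (fun κ => ∑ i : Fin (n+1), |ℓ κ i t|) atTop
        (𝓝 (∑ i : Fin (n+1), |L i|)) :=
      tendsto_finset_sum _ fun i _ => (hCi i).abs
    have hval : (∑ i ∈ B, ∏ j ∈ B.erase i, |t - x j| / |x i - x j|)
        = ∑ i : Fin (n+1), |L i| := by
      rw [hB, Finset.sum_filter]
      refine Finset.sum_congr rfl fun i _ => ?_
      by_cases hi : η < (i:ℕ)
      · simp only [hL, hi, if_true, Finset.abs_prod, abs_div, ← hB]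
      · simp [hL, hi]
    rw [hval]
    exact hsum
end

section
/- (Theorem 1, odd case) In the odd case, the mapped Lebesgue constant converges to the maximum of the classical Lebesgue constants of the two node groups on their respective subintervals: lim_{κ→∞} Λ^κ = max{ Λ(X¹,Ω¹), Λ(X²,Ω²) }. -/
open Filter Finset Real Topology

lemma sup_image_diff_le {s : Set ℝ} (hs : s.Nonempty) {f g : ℝ → ℝ} {ε : ℝ}
    (hf : BddAbove (f '' s)) (hg : BddAbove (g '' s))
    (h : ∀ t ∈ s, |f t - g t| ≤ ε) :
    |sSup (f '' s) - sSup (g '' s)| ≤ ε := by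
  have key : ∀ (f g : ℝ → ℝ), BddAbove (g '' s) → (∀ t ∈ s, |f t - g t| ≤ ε) →
      sSup (f '' s) - sSup (g '' s) ≤ ε := by
    intro f g hg h
    rw [sub_le_iff_le_add]
    refine csSup_le (hs.image f) ?_
    rintro _ ⟨t, ht, rfl⟩
    have h1 : g t ≤ sSup (g '' s) := le_csSup hg (Set.mem_image_of_mem g ht)
    have h2 := abs_le.1 (h t ht)
    linarith [h2.1, h2.2]
  have h' : ∀ t ∈ s, |g t - f t| ≤ ε := fun t ht => by rw [abs_sub_comm]; exact h t ht
  have k1 := key f g hg h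
  have k2 := key g f hf h'
  rw [abs_le]; constructor <;> linarith

lemma biSup_eq_sSup_image {s : Set ℝ} (hs : s.Nonempty) {f : ℝ → ℝ}
    (h0 : ∀ t ∈ s, 0 ≤ f t) (hb : BddAbove (f '' s)) :
    ⨆ t ∈ s, f t = sSup (f '' s) := by
  obtain ⟨t₀, ht₀⟩ := hs
  have hS0 : 0 ≤ sSup (f '' s) := le_trans (h0 t₀ ht₀) (le_csSup hb ⟨t₀, ht₀, rfl⟩)
  have hbR : BddAbove (Set.range fun t => ⨆ _ : t ∈ s, f t) := by
    refine ⟨sSup (f '' s), ?_⟩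
    rintro _ ⟨t, rfl⟩
    exact Real.iSup_le (fun h => le_csSup hb ⟨t, h, rfl⟩) hS0
  apply le_antisymm
  · refine Real.iSup_le (fun t => ?_) hS0
    by_cases ht : t ∈ s
    · rw [ciSup_pos ht]; exact le_csSup hb ⟨t, ht, rfl⟩
    · haveI : IsEmpty (t ∈ s) := ⟨ht⟩
      rw [Real.iSup_of_isEmpty]; exact hS0
  · refine csSup_le (Set.Nonempty.image f ⟨t₀, ht₀⟩) ?_
    rintro _ ⟨t, ht, rfl⟩
    calc f t = ⨆ _ : t ∈ s, f t := (ciSup_pos (f := fun _ => f t) ht).symm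
    _ ≤ _ := le_ciSup hbR t


noncomputable def Afun {N : ℕ} (L R : Finset (Fin N)) (x : Fin N → ℝ) (u t : ℝ) : ℝ :=
  (∑ i ∈ L, (∏ j ∈ L.erase i, |t - x j| / |x i - x j|) *
      (∏ j ∈ R, |u * (t - x j) - 1| / |u * (x i - x j) - 1|))
  + u * ∑ i ∈ R, (∏ j ∈ L, |t - x j| / |u * (x i - x j) + 1|) *
      (∏ j ∈ R.erase i, |u * (t - x j) - 1| / |x i - x j|)

noncomputable def Bfun {N : ℕ} (L R : Finset (Fin N)) (x : Fin N → ℝ) (u t : ℝ) : ℝ :=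
  (∑ i ∈ R, (∏ j ∈ R.erase i, |t - x j| / |x i - x j|) *
      (∏ j ∈ L, |u * (t - x j) + 1| / |u * (x i - x j) + 1|))
  + u * ∑ i ∈ L, (∏ j ∈ R, |t - x j| / |u * (x i - x j) - 1|) *
      (∏ j ∈ L.erase i, |u * (t - x j) + 1| / |x i - x j|)

lemma card_L (n η : ℕ) (hnη : n = 2 * η + 1) :
    (Finset.univ.filter fun j : Fin (n+1) => (j:ℕ) ≤ η).card = η + 1 := by
  have h : (Finset.univ.filter fun j : Fin (n+1) => (j:ℕ) ≤ η)
      = Finset.map ⟨Fin.castLE (by omega), Fin.castLE_injective _⟩ (Finset.univ : Finset (Fin (η+1))) := by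
    ext j
    simp only [mem_filter, mem_univ, true_and, Finset.mem_map, Function.Embedding.coeFn_mk]
    constructor
    · intro hj; exact ⟨⟨(j:ℕ), by omega⟩, by ext; simp⟩
    · rintro ⟨k, rfl⟩
      simp only [Fin.coe_castLE]
      exact Nat.lt_succ_iff.mp k.isLt
  rw [h, Finset.card_map, Finset.card_univ, Fintype.card_fin]

lemma card_R (n η : ℕ) (hnη : n = 2 * η + 1) :
    (Finset.univ.filter fun j : Fin (n+1) => η < (j:ℕ)).card = η + 1 := by
  have h : (Finset.univ.filter fun j : Fin (n+1) => η < (j:ℕ))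
      = Finset.univ \ (Finset.univ.filter fun j : Fin (n+1) => (j:ℕ) ≤ η) := by
    ext j; simp only [mem_filter, mem_univ, true_and, Finset.mem_sdiff]; omega
  rw [h, Finset.card_sdiff_of_subset (Finset.filter_subset _ _), card_L n η hnη, Finset.card_univ,
    Fintype.card_fin]
  omega

lemma identity_left (n η : ℕ) (hnη : n = 2 * η + 1)
    (x : Fin (n+1) → ℝ) (ξ κ t : ℝ) (hκ : 0 < κ)
    (hleft : ∀ i : Fin (n + 1), (i : ℕ) ≤ η → x i ≤ ξ)
    (hright : ∀ i : Fin (n + 1), η < (i : ℕ) → ξ < x i)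
    (S : ℝ → ℝ → ℝ) (hS : ∀ κ t, S κ t = if t ≤ ξ then t else t + κ)
    (ht : t ≤ ξ) :
    ∑ i : Fin (n+1), ∏ j ∈ Finset.univ.erase i,
        |S κ t - S κ (x j)| / |S κ (x i) - S κ (x j)|
      = Afun (Finset.univ.filter fun j : Fin (n+1) => (j:ℕ) ≤ η)
             (Finset.univ.filter fun j : Fin (n+1) => η < (j:ℕ)) x (1/κ) t := by
  set u := 1/κ with hu
  have hu0 : 0 < u := by positivity
  have huκ : u * κ = 1 := by rw [hu]; field_simp
  set L := Finset.univ.filter fun j : Fin (n+1) => (j:ℕ) ≤ η with hL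
  set R := Finset.univ.filter fun j : Fin (n+1) => η < (j:ℕ) with hR
  have hmemL : ∀ j, j ∈ L ↔ (j:ℕ) ≤ η := fun j => by simp [hL]
  have hmemR : ∀ j, j ∈ R ↔ η < (j:ℕ) := fun j => by simp [hR]
  have hSt : S κ t = t := by rw [hS]; exact if_pos ht
  have hSx_L : ∀ j ∈ L, S κ (x j) = x j := fun j hj => by
    rw [hS]; exact if_pos (hleft j ((hmemL j).1 hj))
  have hSx_R : ∀ j ∈ R, S κ (x j) = x j + κ := fun j hj => by
    rw [hS]; exact if_neg (not_le.2 (hright j ((hmemR j).1 hj)))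
  have hdisj : Disjoint L R := by
    rw [Finset.disjoint_left]; intro i hiL hiR
    rw [hmemL] at hiL; rw [hmemR] at hiR; omega
  have hunion : L ∪ R = Finset.univ := by
    ext j; simp only [Finset.mem_union, hmemL j, hmemR j, Finset.mem_univ, iff_true]; omega
  rw [show (Finset.univ : Finset (Fin (n+1))) = L ∪ R from hunion.symm, Finset.sum_union hdisj]
  rw [Afun]
  congr 1
  · -- left sum
    refine Finset.sum_congr rfl fun i hi => ?_
    have hiR : i ∉ R := fun h => by
      have h1 := (hmemL i).1 hi; have h2 := (hmemR i).1 h; omega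
    have hsplit : (L ∪ R).erase i = (L.erase i) ∪ R := by
      rw [Finset.erase_union_distrib, Finset.erase_eq_of_notMem hiR]
    rw [hsplit, Finset.prod_union (hdisj.mono (Finset.erase_subset _ _) le_rfl)]
    congr 1
    · refine Finset.prod_congr rfl fun j hj => ?_
      rw [hSt, hSx_L j (Finset.mem_of_mem_erase hj), hSx_L i hi]
    · refine Finset.prod_congr rfl fun j hj => ?_
      rw [hSt, hSx_R j hj, hSx_L i hi]
      have e1 : u * (t - x j) - 1 = u * (t - (x j + κ)) := by linear_combination huκ
      have e2 : u * (x i - x j) - 1 = u * (x i - (x j + κ)) := by linear_combination huκ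
      rw [e1, e2, abs_mul, abs_mul, mul_div_mul_left _ _ (abs_ne_zero.2 (ne_of_gt hu0))]
  · -- right sum
    rw [Finset.mul_sum]
    refine Finset.sum_congr rfl fun i hi => ?_
    have hiL : i ∉ L := fun h => by
      have h1 := (hmemL i).1 h; have h2 := (hmemR i).1 hi; omega
    have hsplit : (L ∪ R).erase i = L ∪ (R.erase i) := by
      rw [Finset.erase_union_distrib, Finset.erase_eq_of_notMem hiL]
    rw [hsplit, Finset.prod_union (hdisj.mono le_rfl (Finset.erase_subset _ _))]
    have p1 : (∏ j ∈ L, |S κ t - S κ (x j)| / |S κ (x i) - S κ (x j)|)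
        = ∏ j ∈ L, (u * (|t - x j| / |u * (x i - x j) + 1|)) := by
      refine Finset.prod_congr rfl fun j hj => ?_
      rw [hSt, hSx_L j hj, hSx_R i hi]
      have e : u * (x i - x j) + 1 = u * (x i + κ - x j) := by linear_combination -huκ
      rw [e, abs_mul, abs_of_pos hu0]
      rcases eq_or_ne (x i + κ - x j) 0 with h0 | h0
      · simp [h0]
      · field_simp
    have p2 : (∏ j ∈ R.erase i, |S κ t - S κ (x j)| / |S κ (x i) - S κ (x j)|)
        = ∏ j ∈ R.erase i, (κ * (|u * (t - x j) - 1| / |x i - x j|)) := by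
      refine Finset.prod_congr rfl fun j hj => ?_
      rw [hSt, hSx_R j (Finset.mem_of_mem_erase hj), hSx_R i hi]
      have e : u * (t - x j) - 1 = u * (t - (x j + κ)) := by linear_combination huκ
      have e2 : x i + κ - (x j + κ) = x i - x j := by ring
      rw [e2, e, abs_mul, abs_of_pos hu0]
      rw [show κ * (u * |t - (x j + κ)| / |x i - x j|)
          = (u * κ) * (|t - (x j + κ)| / |x i - x j|) from by ring, huκ, one_mul]
    rw [p1, p2, Finset.prod_mul_distrib, Finset.prod_mul_distrib,
      Finset.prod_const, Finset.prod_const,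
      Finset.card_erase_of_mem hi, card_L n η hnη, card_R n η hnη]
    have hpow : u ^ (η + 1) * κ ^ (η + 1 - 1) = u := by
      simp only [Nat.add_sub_cancel]
      rw [pow_succ, mul_right_comm, ← mul_pow, huκ, one_pow, one_mul]
    calc (u ^ (η+1) * ∏ j ∈ L, |t - x j| / |u * (x i - x j) + 1|) *
          (κ ^ (η + 1 - 1) * ∏ j ∈ R.erase i, |u * (t - x j) - 1| / |x i - x j|)
        = (u ^ (η+1) * κ ^ (η + 1 - 1)) * ((∏ j ∈ L, |t - x j| / |u * (x i - x j) + 1|) *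
          (∏ j ∈ R.erase i, |u * (t - x j) - 1| / |x i - x j|)) := by ring
      _ = _ := by rw [hpow]

lemma identity_right (n η : ℕ) (hnη : n = 2 * η + 1)
    (x : Fin (n+1) → ℝ) (ξ κ t : ℝ) (hκ : 0 < κ)
    (hleft : ∀ i : Fin (n + 1), (i : ℕ) ≤ η → x i ≤ ξ)
    (hright : ∀ i : Fin (n + 1), η < (i : ℕ) → ξ < x i)
    (S : ℝ → ℝ → ℝ) (hS : ∀ κ t, S κ t = if t ≤ ξ then t else t + κ)
    (ht : ξ < t) :
    ∑ i : Fin (n+1), ∏ j ∈ Finset.univ.erase i,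
        |S κ t - S κ (x j)| / |S κ (x i) - S κ (x j)|
      = Bfun (Finset.univ.filter fun j : Fin (n+1) => (j:ℕ) ≤ η)
             (Finset.univ.filter fun j : Fin (n+1) => η < (j:ℕ)) x (1/κ) t := by
  set u := 1/κ with hu
  have hu0 : 0 < u := by positivity
  have huκ : u * κ = 1 := by rw [hu]; field_simp
  set L := Finset.univ.filter fun j : Fin (n+1) => (j:ℕ) ≤ η with hL
  set R := Finset.univ.filter fun j : Fin (n+1) => η < (j:ℕ) with hR
  have hmemL : ∀ j, j ∈ L ↔ (j:ℕ) ≤ η := fun j => by simp [hL]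
  have hmemR : ∀ j, j ∈ R ↔ η < (j:ℕ) := fun j => by simp [hR]
  have hSt : S κ t = t + κ := by rw [hS]; exact if_neg (not_le.2 ht)
  have hSx_L : ∀ j ∈ L, S κ (x j) = x j := fun j hj => by
    rw [hS]; exact if_pos (hleft j ((hmemL j).1 hj))
  have hSx_R : ∀ j ∈ R, S κ (x j) = x j + κ := fun j hj => by
    rw [hS]; exact if_neg (not_le.2 (hright j ((hmemR j).1 hj)))
  have hdisj : Disjoint L R := by
    rw [Finset.disjoint_left]; intro i hiL hiR
    rw [hmemL] at hiL; rw [hmemR] at hiR; omega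
  have hunion : L ∪ R = Finset.univ := by
    ext j; simp only [Finset.mem_union, hmemL j, hmemR j, Finset.mem_univ, iff_true]; omega
  rw [show (Finset.univ : Finset (Fin (n+1))) = L ∪ R from hunion.symm, Finset.sum_union hdisj]
  rw [Bfun]
  rw [add_comm (∑ i ∈ R, _ * _) (_ * ∑ i ∈ L, _)]
  congr 1
  · -- sum over L : small terms
    rw [Finset.mul_sum]
    refine Finset.sum_congr rfl fun i hi => ?_
    have hiR : i ∉ R := fun h => by
      have h1 := (hmemL i).1 hi; have h2 := (hmemR i).1 h; omega
    have hsplit : (L ∪ R).erase i = (L.erase i) ∪ R := by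
      rw [Finset.erase_union_distrib, Finset.erase_eq_of_notMem hiR]
    rw [hsplit, Finset.prod_union (hdisj.mono (Finset.erase_subset _ _) le_rfl)]
    have p1 : (∏ j ∈ L.erase i, |S κ t - S κ (x j)| / |S κ (x i) - S κ (x j)|)
        = ∏ j ∈ L.erase i, (κ * (|u * (t - x j) + 1| / |x i - x j|)) := by
      refine Finset.prod_congr rfl fun j hj => ?_
      rw [hSt, hSx_L j (Finset.mem_of_mem_erase hj), hSx_L i hi]
      have e : u * (t - x j) + 1 = u * (t + κ - x j) := by linear_combination -huκ
      rw [e, abs_mul, abs_of_pos hu0]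
      rw [show κ * (u * |t + κ - x j| / |x i - x j|)
          = (u * κ) * (|t + κ - x j| / |x i - x j|) from by ring, huκ, one_mul]
    have p2 : (∏ j ∈ R, |S κ t - S κ (x j)| / |S κ (x i) - S κ (x j)|)
        = ∏ j ∈ R, (u * (|t - x j| / |u * (x i - x j) - 1|)) := by
      refine Finset.prod_congr rfl fun j hj => ?_
      rw [hSt, hSx_R j hj, hSx_L i hi]
      have e : u * (x i - x j) - 1 = u * (x i - (x j + κ)) := by linear_combination huκ
      have e2 : t + κ - (x j + κ) = t - x j := by ring
      rw [e2, e, abs_mul, abs_of_pos hu0]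
      rcases eq_or_ne (x i - (x j + κ)) 0 with h0 | h0
      · simp [h0]
      · field_simp
    rw [p1, p2, Finset.prod_mul_distrib, Finset.prod_mul_distrib,
      Finset.prod_const, Finset.prod_const,
      Finset.card_erase_of_mem hi, card_L n η hnη, card_R n η hnη]
    have hpow : u ^ (η + 1) * κ ^ (η + 1 - 1) = u := by
      simp only [Nat.add_sub_cancel]
      rw [pow_succ, mul_right_comm, ← mul_pow, huκ, one_pow, one_mul]
    calc (κ ^ (η + 1 - 1) * ∏ j ∈ L.erase i, |u * (t - x j) + 1| / |x i - x j|) *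
          (u ^ (η+1) * ∏ j ∈ R, |t - x j| / |u * (x i - x j) - 1|)
        = (u ^ (η+1) * κ ^ (η + 1 - 1)) * ((∏ j ∈ R, |t - x j| / |u * (x i - x j) - 1|) *
          (∏ j ∈ L.erase i, |u * (t - x j) + 1| / |x i - x j|)) := by ring
      _ = _ := by rw [hpow]
  · -- sum over R : main terms
    refine Finset.sum_congr rfl fun i hi => ?_
    have hiL : i ∉ L := fun h => by
      have h1 := (hmemL i).1 h; have h2 := (hmemR i).1 hi; omega
    have hsplit : (L ∪ R).erase i = L ∪ (R.erase i) := by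
      rw [Finset.erase_union_distrib, Finset.erase_eq_of_notMem hiL]
    rw [hsplit, Finset.prod_union (hdisj.mono le_rfl (Finset.erase_subset _ _)), mul_comm]
    congr 1
    · refine Finset.prod_congr rfl fun j hj => ?_
      rw [hSt, hSx_R j (Finset.mem_of_mem_erase hj), hSx_R i hi]
      rw [show t + κ - (x j + κ) = t - x j from by ring,
        show x i + κ - (x j + κ) = x i - x j from by ring]
    · refine Finset.prod_congr rfl fun j hj => ?_
      rw [hSt, hSx_L j hj, hSx_R i hi]
      have e1 : u * (t - x j) + 1 = u * (t + κ - x j) := by linear_combination -huκ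
      have e2 : u * (x i - x j) + 1 = u * (x i + κ - x j) := by linear_combination -huκ
      rw [e1, e2, abs_mul, abs_mul, mul_div_mul_left _ _ (abs_ne_zero.2 (ne_of_gt hu0))]

lemma Afun_zero {N : ℕ} (L R : Finset (Fin N)) (x : Fin N → ℝ) (t : ℝ) :
    Afun L R x 0 t = ∑ i ∈ L, ∏ j ∈ L.erase i, |t - x j| / |x i - x j| := by
  simp [Afun]

lemma Bfun_zero {N : ℕ} (L R : Finset (Fin N)) (x : Fin N → ℝ) (t : ℝ) :
    Bfun L R x 0 t = ∑ i ∈ R, ∏ j ∈ R.erase i, |t - x j| / |x i - x j| := by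
  simp [Bfun]


lemma contOn_div_abs {K : Set (ℝ×ℝ)} (f g : ℝ × ℝ → ℝ) (hf : Continuous f) (hg : Continuous g)
    (h : ∀ p ∈ K, g p ≠ 0) : ContinuousOn (fun p => |f p| / |g p|) K :=
  ContinuousOn.div hf.abs.continuousOn hg.abs.continuousOn (fun p hp => abs_ne_zero.2 (h p hp))

lemma contA {N : ℕ} (L R : Finset (Fin N)) (x : Fin N → ℝ) (a b : ℝ)
    (hinj : ∀ i j : Fin N, i ≠ j → x i - x j ≠ 0)
    (hLR : ∀ i ∈ L, ∀ j ∈ R, x i < x j) :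
    ContinuousOn (fun p : ℝ × ℝ => Afun L R x p.1 p.2) (Set.Icc 0 1 ×ˢ Set.Icc a b) := by
  unfold Afun
  apply ContinuousOn.add
  · apply continuousOn_finset_sum; intro i hi
    apply ContinuousOn.mul
    · apply continuousOn_finset_prod; intro j hj
      exact contOn_div_abs (fun p => p.2 - x j) (fun _ => x i - x j) (by fun_prop) (by fun_prop)
        (fun p _ => hinj i j (Finset.mem_erase.1 hj).1.symm)
    · apply continuousOn_finset_prod; intro j hj
      refine contOn_div_abs (fun p => p.1 * (p.2 - x j) - 1) (fun p => p.1 * (x i - x j) - 1)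
        (by fun_prop) (by fun_prop) (fun p hp => ?_)
      have h1 : (0:ℝ) ≤ p.1 := hp.1.1
      have h2 : x i < x j := hLR i hi j hj
      have h3 : p.1 * (x i - x j) ≤ 0 := mul_nonpos_of_nonneg_of_nonpos h1 (by linarith)
      have h4 : p.1 * (x i - x j) - 1 < 0 := by linarith
      exact ne_of_lt h4
  · apply ContinuousOn.mul continuous_fst.continuousOn
    apply continuousOn_finset_sum; intro i hi
    apply ContinuousOn.mul
    · apply continuousOn_finset_prod; intro j hj
      refine contOn_div_abs (fun p => p.2 - x j) (fun p => p.1 * (x i - x j) + 1)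
        (by fun_prop) (by fun_prop) (fun p hp => ?_)
      have h1 : (0:ℝ) ≤ p.1 := hp.1.1
      have h2 : x j < x i := hLR j hj i hi
      have h3 : 0 ≤ p.1 * (x i - x j) := mul_nonneg h1 (by linarith)
      have h4 : 0 < p.1 * (x i - x j) + 1 := by linarith
      exact ne_of_gt h4
    · apply continuousOn_finset_prod; intro j hj
      exact contOn_div_abs (fun p => p.1 * (p.2 - x j) - 1) (fun _ => x i - x j)
        (by fun_prop) (by fun_prop)
        (fun p _ => hinj i j (Finset.mem_erase.1 hj).1.symm)

lemma contB {N : ℕ} (L R : Finset (Fin N)) (x : Fin N → ℝ) (a b : ℝ)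
    (hinj : ∀ i j : Fin N, i ≠ j → x i - x j ≠ 0)
    (hLR : ∀ i ∈ L, ∀ j ∈ R, x i < x j) :
    ContinuousOn (fun p : ℝ × ℝ => Bfun L R x p.1 p.2) (Set.Icc 0 1 ×ˢ Set.Icc a b) := by
  unfold Bfun
  apply ContinuousOn.add
  · apply continuousOn_finset_sum; intro i hi
    apply ContinuousOn.mul
    · apply continuousOn_finset_prod; intro j hj
      exact contOn_div_abs (fun p => p.2 - x j) (fun _ => x i - x j) (by fun_prop) (by fun_prop)
        (fun p _ => hinj i j (Finset.mem_erase.1 hj).1.symm)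
    · apply continuousOn_finset_prod; intro j hj
      refine contOn_div_abs (fun p => p.1 * (p.2 - x j) + 1) (fun p => p.1 * (x i - x j) + 1)
        (by fun_prop) (by fun_prop) (fun p hp => ?_)
      have h1 : (0:ℝ) ≤ p.1 := hp.1.1
      have h2 : x j < x i := hLR j hj i hi
      have h3 : 0 ≤ p.1 * (x i - x j) := mul_nonneg h1 (by linarith)
      have h4 : 0 < p.1 * (x i - x j) + 1 := by linarith
      exact ne_of_gt h4
  · apply ContinuousOn.mul continuous_fst.continuousOn
    apply continuousOn_finset_sum; intro i hi
    apply ContinuousOn.mul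
    · apply continuousOn_finset_prod; intro j hj
      refine contOn_div_abs (fun p => p.2 - x j) (fun p => p.1 * (x i - x j) - 1)
        (by fun_prop) (by fun_prop) (fun p hp => ?_)
      have h1 : (0:ℝ) ≤ p.1 := hp.1.1
      have h2 : x i < x j := hLR i hi j hj
      have h3 : p.1 * (x i - x j) ≤ 0 := mul_nonpos_of_nonneg_of_nonpos h1 (by linarith)
      have h4 : p.1 * (x i - x j) - 1 < 0 := by linarith
      exact ne_of_lt h4
    · apply continuousOn_finset_prod; intro j hj
      exact contOn_div_abs (fun p => p.1 * (p.2 - x j) + 1) (fun _ => x i - x j)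
        (by fun_prop) (by fun_prop)
        (fun p _ => hinj i j (Finset.mem_erase.1 hj).1.symm)
set_option maxHeartbeats 2000000 in
theorem stmt_5
    (a b ξ : ℝ) (hab : a < b) (hξ : ξ ∈ Set.Ioo a b)
    (n : ℕ) (hn : Odd n) (η : ℕ) (hη : η = (n - 1) / 2)
    (x : Fin (n + 1) → ℝ) (hmono : StrictMono x)
    (hxΩ : ∀ i, x i ∈ Set.Icc a b)
    (hleft : ∀ i : Fin (n + 1), (i : ℕ) ≤ η → x i ≤ ξ)
    (hright : ∀ i : Fin (n + 1), η < (i : ℕ) → ξ < x i)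
    (S : ℝ → ℝ → ℝ)
    (hS : ∀ κ t, S κ t = if t ≤ ξ then t else t + κ)
    (ℓ : ℝ → Fin (n + 1) → ℝ → ℝ)
    (hℓ : ∀ κ i t, ℓ κ i t =
      ∏ j ∈ Finset.univ.erase i, (S κ t - S κ (x j)) / (S κ (x i) - S κ (x j)))
    : Tendsto (fun κ => ⨆ t ∈ Set.Icc a b, ∑ i : Fin (n + 1), |ℓ κ i t|) atTop
      (𝓝 (max
        (⨆ t ∈ Set.Icc a ξ,
          ∑ i ∈ Finset.univ.filter (fun j : Fin (n + 1) => (j : ℕ) ≤ η),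
            ∏ j ∈ (Finset.univ.filter (fun j : Fin (n + 1) => (j : ℕ) ≤ η)).erase i,
              |t - x j| / |x i - x j|)
        (⨆ t ∈ Set.Ioc ξ b,
          ∑ i ∈ Finset.univ.filter (fun j : Fin (n + 1) => η < (j : ℕ)),
            ∏ j ∈ (Finset.univ.filter (fun j : Fin (n + 1) => η < (j : ℕ))).erase i,
              |t - x j| / |x i - x j|))) := by
  obtain ⟨haξ, hξb⟩ := hξ
  obtain ⟨m, hm⟩ := hn
  have hnη : n = 2 * η + 1 := by omega
  set L := Finset.univ.filter fun j : Fin (n+1) => (j:ℕ) ≤ η with hLdef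
  set R := Finset.univ.filter fun j : Fin (n+1) => η < (j:ℕ) with hRdef
  have hinj : ∀ i j : Fin (n+1), i ≠ j → x i - x j ≠ 0 := fun i j hij =>
    sub_ne_zero.2 fun h => hij (hmono.injective h)
  have hLRlt : ∀ i ∈ L, ∀ j ∈ R, x i < x j := by
    intro i hi j hj
    have h1 : (i:ℕ) ≤ η := by rw [hLdef] at hi; simpa using hi
    have h2 : η < (j:ℕ) := by rw [hRdef] at hj; simpa using hj
    exact hmono (show i < j from by rw [Fin.lt_def]; omega)
  have hA := contA L R x a b hinj hLRlt
  have hB := contB L R x a b hinj hLRlt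
  have hK : IsCompact (Set.Icc (0:ℝ) 1 ×ˢ Set.Icc a b) := isCompact_Icc.prod isCompact_Icc
  have hUA := hK.uniformContinuousOn_of_continuous hA
  have hUB := hK.uniformContinuousOn_of_continuous hB
  have hAu : ∀ u ∈ Set.Icc (0:ℝ) 1, ContinuousOn (fun t => Afun L R x u t) (Set.Icc a ξ) := by
    intro u hu
    have hc : Continuous fun t : ℝ => ((u, t) : ℝ × ℝ) := continuous_const.prodMk continuous_id
    have hmaps : Set.MapsTo (fun t : ℝ => ((u, t) : ℝ × ℝ)) (Set.Icc a ξ)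
        (Set.Icc (0:ℝ) 1 ×ˢ Set.Icc a b) :=
      fun t ht => Set.mk_mem_prod hu ⟨ht.1, le_trans ht.2 hξb.le⟩
    exact ContinuousOn.comp (g := fun p : ℝ × ℝ => Afun L R x p.1 p.2)
      (f := fun t : ℝ => ((u, t) : ℝ × ℝ)) hA hc.continuousOn hmaps
  have hBu : ∀ u ∈ Set.Icc (0:ℝ) 1, ContinuousOn (fun t => Bfun L R x u t) (Set.Icc ξ b) := by
    intro u hu
    have hc : Continuous fun t : ℝ => ((u, t) : ℝ × ℝ) := continuous_const.prodMk continuous_id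
    have hmaps : Set.MapsTo (fun t : ℝ => ((u, t) : ℝ × ℝ)) (Set.Icc ξ b)
        (Set.Icc (0:ℝ) 1 ×ˢ Set.Icc a b) :=
      fun t ht => Set.mk_mem_prod hu ⟨le_trans haξ.le ht.1, ht.2⟩
    exact ContinuousOn.comp (g := fun p : ℝ × ℝ => Bfun L R x p.1 p.2)
      (f := fun t : ℝ => ((u, t) : ℝ × ℝ)) hB hc.continuousOn hmaps
  have bddA : ∀ u ∈ Set.Icc (0:ℝ) 1, BddAbove ((fun t => Afun L R x u t) '' Set.Icc a ξ) :=
    fun u hu => (isCompact_Icc.image_of_continuousOn (hAu u hu)).bddAbove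
  have bddB : ∀ u ∈ Set.Icc (0:ℝ) 1, BddAbove ((fun t => Bfun L R x u t) '' Set.Ioc ξ b) :=
    fun u hu => ((isCompact_Icc.image_of_continuousOn (hBu u hu)).bddAbove).mono
      (Set.image_mono Set.Ioc_subset_Icc_self)
  have h01 : (0:ℝ) ∈ Set.Icc (0:ℝ) 1 := ⟨le_refl 0, zero_le_one⟩
  have hneA : (Set.Icc a ξ).Nonempty := Set.nonempty_Icc.2 haξ.le
  have hneB : (Set.Ioc ξ b).Nonempty := Set.nonempty_Ioc.2 hξb
  have himg0A : (fun t => ∑ i ∈ L, ∏ j ∈ L.erase i, |t - x j| / |x i - x j|) '' Set.Icc a ξ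
      = (fun t => Afun L R x 0 t) '' Set.Icc a ξ :=
    Set.image_congr fun t _ => (Afun_zero L R x t).symm
  have himg0B : (fun t => ∑ i ∈ R, ∏ j ∈ R.erase i, |t - x j| / |x i - x j|) '' Set.Ioc ξ b
      = (fun t => Bfun L R x 0 t) '' Set.Ioc ξ b :=
    Set.image_congr fun t _ => (Bfun_zero L R x t).symm
  have hM1 : (⨆ t ∈ Set.Icc a ξ, ∑ i ∈ L, ∏ j ∈ L.erase i, |t - x j| / |x i - x j|)
      = sSup ((fun t => Afun L R x 0 t) '' Set.Icc a ξ) := by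
    rw [← himg0A]
    exact biSup_eq_sSup_image hneA (fun t _ => by positivity)
      (by rw [himg0A]; exact bddA 0 h01)
  have hM2 : (⨆ t ∈ Set.Ioc ξ b, ∑ i ∈ R, ∏ j ∈ R.erase i, |t - x j| / |x i - x j|)
      = sSup ((fun t => Bfun L R x 0 t) '' Set.Ioc ξ b) := by
    rw [← himg0B]
    exact biSup_eq_sSup_image hneB (fun t _ => by positivity)
      (by rw [himg0B]; exact bddB 0 h01)
  rw [hM1, hM2, Metric.tendsto_atTop]
  intro ε hε
  obtain ⟨δA, hδA, HA⟩ := Metric.uniformContinuousOn_iff.1 hUA (ε/2) (by positivity)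
  obtain ⟨δB, hδB, HB⟩ := Metric.uniformContinuousOn_iff.1 hUB (ε/2) (by positivity)
  set δ := min δA δB with hδdef
  have hδ0 : 0 < δ := lt_min hδA hδB
  refine ⟨max 1 (2/δ), fun κ hκ => ?_⟩
  have hκ1 : (1:ℝ) ≤ κ := le_trans (le_max_left _ _) hκ
  have hκ0 : (0:ℝ) < κ := lt_of_lt_of_le one_pos hκ1
  set u := 1/κ with hudef
  have hu0 : 0 < u := by rw [hudef]; positivity
  have hu1 : u ≤ 1 := by rw [hudef, div_le_one hκ0]; exact hκ1
  have huI : u ∈ Set.Icc (0:ℝ) 1 := ⟨hu0.le, hu1⟩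
  have huδ : u < δ := by
    have h2δ : 2/δ ≤ κ := le_trans (le_max_right _ _) hκ
    have h1 : 1/κ ≤ 1/(2/δ) := one_div_le_one_div_of_le (by positivity) h2δ
    have h2 : 1/(2/δ) = δ/2 := by rw [one_div_div]
    rw [hudef]
    calc 1/κ ≤ δ/2 := h2 ▸ h1
      _ < δ := by linarith
  have hsum : ∀ t : ℝ, (∑ i : Fin (n+1), |ℓ κ i t|)
      = ∑ i : Fin (n+1), ∏ j ∈ Finset.univ.erase i,
          |S κ t - S κ (x j)| / |S κ (x i) - S κ (x j)| := by
    intro t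
    refine Finset.sum_congr rfl fun i _ => ?_
    rw [hℓ, Finset.abs_prod]
    exact Finset.prod_congr rfl fun j _ => abs_div _ _
  have himg : (fun t => ∑ i : Fin (n+1), |ℓ κ i t|) '' Set.Icc a b
      = (fun t => Afun L R x u t) '' Set.Icc a ξ ∪ (fun t => Bfun L R x u t) '' Set.Ioc ξ b := by
    rw [show Set.Icc a b = Set.Icc a ξ ∪ Set.Ioc ξ b from
      (Set.Icc_union_Ioc_eq_Icc haξ.le hξb.le).symm, Set.image_union]
    congr 1
    · refine Set.image_congr fun t ht => ?_
      rw [hsum t]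
      exact identity_left n η hnη x ξ κ t hκ0 hleft hright S hS ht.2
    · refine Set.image_congr fun t ht => ?_
      rw [hsum t]
      exact identity_right n η hnη x ξ κ t hκ0 hleft hright S hS ht.1
  have hbddF : BddAbove ((fun t => ∑ i : Fin (n+1), |ℓ κ i t|) '' Set.Icc a b) := by
    rw [himg]; exact (bddA u huI).union (bddB u huI)
  have hFκ : (⨆ t ∈ Set.Icc a b, ∑ i : Fin (n+1), |ℓ κ i t|)
      = max (sSup ((fun t => Afun L R x u t) '' Set.Icc a ξ))
            (sSup ((fun t => Bfun L R x u t) '' Set.Ioc ξ b)) := by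
    rw [biSup_eq_sSup_image (Set.nonempty_Icc.2 hab.le)
        (fun t _ => Finset.sum_nonneg fun i _ => abs_nonneg _) hbddF,
      himg, csSup_union (bddA u huI) (hneA.image _) (bddB u huI) (hneB.image _)]
  simp only [Real.dist_eq]
  rw [hFκ]
  have hdA : |sSup ((fun t => Afun L R x u t) '' Set.Icc a ξ)
      - sSup ((fun t => Afun L R x 0 t) '' Set.Icc a ξ)| ≤ ε/2 := by
    refine sup_image_diff_le hneA (bddA u huI) (bddA 0 h01) fun t ht => ?_
    have hmem1 : ((u, t) : ℝ × ℝ) ∈ Set.Icc (0:ℝ) 1 ×ˢ Set.Icc a b :=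
      Set.mk_mem_prod huI ⟨ht.1, le_trans ht.2 hξb.le⟩
    have hmem2 : ((0, t) : ℝ × ℝ) ∈ Set.Icc (0:ℝ) 1 ×ˢ Set.Icc a b :=
      Set.mk_mem_prod h01 ⟨ht.1, le_trans ht.2 hξb.le⟩
    have hdist : dist ((u, t) : ℝ × ℝ) ((0, t) : ℝ × ℝ) < δA := by
      rw [Prod.dist_eq]
      apply max_lt
      · rw [Real.dist_eq, sub_zero, abs_of_pos hu0]
        exact lt_of_lt_of_le huδ (min_le_left _ _)
      · rw [dist_self]; exact hδA
    have h := HA (u, t) hmem1 (0, t) hmem2 hdist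
    rw [Real.dist_eq] at h
    exact le_of_lt h
  have hdB : |sSup ((fun t => Bfun L R x u t) '' Set.Ioc ξ b)
      - sSup ((fun t => Bfun L R x 0 t) '' Set.Ioc ξ b)| ≤ ε/2 := by
    refine sup_image_diff_le hneB (bddB u huI) (bddB 0 h01) fun t ht => ?_
    have hmem1 : ((u, t) : ℝ × ℝ) ∈ Set.Icc (0:ℝ) 1 ×ˢ Set.Icc a b :=
      Set.mk_mem_prod huI ⟨le_trans haξ.le ht.1.le, ht.2⟩
    have hmem2 : ((0, t) : ℝ × ℝ) ∈ Set.Icc (0:ℝ) 1 ×ˢ Set.Icc a b :=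
      Set.mk_mem_prod h01 ⟨le_trans haξ.le ht.1.le, ht.2⟩
    have hdist : dist ((u, t) : ℝ × ℝ) ((0, t) : ℝ × ℝ) < δB := by
      rw [Prod.dist_eq]
      apply max_lt
      · rw [Real.dist_eq, sub_zero, abs_of_pos hu0]
        exact lt_of_lt_of_le huδ (min_le_right _ _)
      · rw [dist_self]; exact hδB
    have h := HB (u, t) hmem1 (0, t) hmem2 hdist
    rw [Real.dist_eq] at h
    exact le_of_lt h
  calc |max (sSup ((fun t => Afun L R x u t) '' Set.Icc a ξ))
          (sSup ((fun t => Bfun L R x u t) '' Set.Ioc ξ b))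
        - max (sSup ((fun t => Afun L R x 0 t) '' Set.Icc a ξ))
          (sSup ((fun t => Bfun L R x 0 t) '' Set.Ioc ξ b))|
      ≤ max (|sSup ((fun t => Afun L R x u t) '' Set.Icc a ξ)
          - sSup ((fun t => Afun L R x 0 t) '' Set.Icc a ξ)|)
          (|sSup ((fun t => Bfun L R x u t) '' Set.Ioc ξ b)
          - sSup ((fun t => Bfun L R x 0 t) '' Set.Ioc ξ b)|) :=
        abs_max_sub_max_le_max _ _ _ _
    _ ≤ ε/2 := max_le hdA hdB
    _ < ε := by linarith
end

section
/- In the even case, for every index i ≤ η and every point x ∈ Ω² = (ξ,b], the mapped Lagrange basis function converges pointwise to a nonzero residual: lim_{κ→∞} ℓ_i^κ(x) = (−1)^{n/2} r_i(x), where r_i(x) = ∏_{j=η+1}^{n} (x − x_j) · ∏_{j=0, j≠i}^{η} (x_i − x_j)^{−1}. -/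
open Filter Finset Real Topology

private lemma aux_prod_tendsto {ι : Type*} (s : Finset ι) (c : ι → ℝ) :
    Tendsto (fun κ : ℝ => (∏ j ∈ s, (κ + c j)) / κ ^ s.card) atTop (𝓝 1) := by
  have h1 : ∀ d : ℝ, Tendsto (fun κ : ℝ => (κ + d) / κ) atTop (𝓝 1) := by
    intro d
    have h : Tendsto (fun κ : ℝ => 1 + d / κ) atTop (𝓝 (1 + 0)) :=
      tendsto_const_nhds.add (tendsto_const_nhds.div_atTop tendsto_id)
    rw [add_zero] at h
    refine h.congr' ?_
    filter_upwards [eventually_gt_atTop (0 : ℝ)] with κ hκ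
    field_simp
  have h2 : Tendsto (fun κ : ℝ => ∏ j ∈ s, ((κ + c j) / κ)) atTop (𝓝 (∏ _j ∈ s, (1 : ℝ))) :=
    tendsto_finset_prod s (fun j _ => h1 (c j))
  rw [Finset.prod_const_one] at h2
  refine h2.congr' ?_
  filter_upwards [eventually_gt_atTop (0 : ℝ)] with κ hκ
  rw [Finset.prod_div_distrib, Finset.prod_const]

theorem stmt_7
    (a b ξ : ℝ) (hab : a < b) (hξ : ξ ∈ Set.Ioo a b)
    (n : ℕ) (hn : Even n) (η : ℕ) (hη : η = n / 2)
    (x : Fin (n + 1) → ℝ) (hmono : StrictMono x)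
    (hxΩ : ∀ i, x i ∈ Set.Icc a b)
    (hleft : ∀ i : Fin (n + 1), (i : ℕ) ≤ η → x i ≤ ξ)
    (hright : ∀ i : Fin (n + 1), η < (i : ℕ) → ξ < x i)
    (S : ℝ → ℝ → ℝ)
    (hS : ∀ κ t, S κ t = if t ≤ ξ then t else t + κ)
    (ℓ : ℝ → Fin (n + 1) → ℝ → ℝ)
    (hℓ : ∀ κ i t, ℓ κ i t =
      ∏ j ∈ Finset.univ.erase i, (S κ t - S κ (x j)) / (S κ (x i) - S κ (x j)))
    (i : Fin (n + 1)) (hi : (i : ℕ) ≤ η)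
    (t : ℝ) (ht : t ∈ Set.Ioc ξ b) :
    Tendsto (fun κ => ℓ κ i t) atTop
      (𝓝 ((-1 : ℝ) ^ (n / 2) *
        ((∏ j ∈ Finset.univ.filter (fun j : Fin (n + 1) => η < (j : ℕ)), (t - x j)) *
          ∏ j ∈ (Finset.univ.filter (fun j : Fin (n + 1) => (j : ℕ) ≤ η)).erase i,
            (x i - x j)⁻¹))) := by
  obtain ⟨m, hm⟩ := hn
  have hηm : η = m := by omega
  set L : Finset (Fin (n + 1)) :=
    (Finset.univ.filter (fun j : Fin (n + 1) => (j : ℕ) ≤ η)).erase i with hLdef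
  set R : Finset (Fin (n + 1)) :=
    Finset.univ.filter (fun j : Fin (n + 1) => η < (j : ℕ)) with hRdef
  have hηn : η < n + 1 := by omega
  have hfiltercard :
      (Finset.univ.filter (fun j : Fin (n + 1) => (j : ℕ) ≤ η)).card = η + 1 := by
    have heq : Finset.univ.filter (fun j : Fin (n + 1) => (j : ℕ) ≤ η)
        = Finset.Iic (⟨η, hηn⟩ : Fin (n + 1)) := by
      ext j; simp [Fin.le_def]
    rw [heq, Fin.card_Iic]
  have hiL : i ∈ Finset.univ.filter (fun j : Fin (n + 1) => (j : ℕ) ≤ η) := by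
    simp [hi]
  have hLcard : L.card = η := by
    rw [hLdef, Finset.card_erase_of_mem hiL, hfiltercard]
    omega
  have hRcard : R.card = η := by
    have hnot : R = Finset.univ.filter (fun j : Fin (n + 1) => ¬ ((j : ℕ) ≤ η)) := by
      simp [hRdef, not_le]
    have := Finset.card_filter_add_card_filter_not
      (s := (Finset.univ : Finset (Fin (n + 1)))) (p := fun j : Fin (n + 1) => (j : ℕ) ≤ η)
    simp only [Finset.card_univ, Fintype.card_fin] at this
    rw [hnot]
    omega
  -- node inequalities
  have hxiξ : x i ≤ ξ := hleft i hi
  have hRgt : ∀ j ∈ R, ξ < x j := fun j hj => hright j (by simpa [hRdef] using hj)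
  have hLle : ∀ j ∈ L, x j ≤ ξ := by
    intro j hj
    exact hleft j (by simpa [hLdef] using (Finset.mem_erase.mp hj).2)
  have hLne : ∀ j ∈ L, x i - x j ≠ 0 := by
    intro j hj
    have hji : j ≠ i := (Finset.mem_erase.mp hj).1
    refine sub_ne_zero_of_ne ?_
    intro h
    exact hji (hmono.injective h.symm)
  have hD : (∏ j ∈ L, (x i - x j)) ≠ 0 := Finset.prod_ne_zero_iff.mpr hLne
  set C : ℝ := (-1 : ℝ) ^ η *
      ((∏ j ∈ R, (t - x j)) * (∏ j ∈ L, (x i - x j))⁻¹) with hCdef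
  -- main ratio tendsto 1
  have hP := aux_prod_tendsto L (fun j => t - x j)
  have hQ := aux_prod_tendsto R (fun j => x j - x i)
  rw [hLcard] at hP
  rw [hRcard] at hQ
  have hPQ : Tendsto (fun κ : ℝ =>
      (∏ j ∈ L, (κ + (t - x j))) / (∏ j ∈ R, (κ + (x j - x i)))) atTop (𝓝 1) := by
    have h := hP.div hQ one_ne_zero
    rw [div_one] at h
    refine h.congr' ?_
    filter_upwards [eventually_gt_atTop (0 : ℝ)] with κ hκ
    have hc : (κ : ℝ) ^ η ≠ 0 := pow_ne_zero _ (ne_of_gt hκ)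
    simp only [Pi.div_apply]
    rw [div_div_eq_mul_div, div_mul_cancel₀ _ hc]
  have hmain : Tendsto (fun κ : ℝ =>
      ((∏ j ∈ L, (κ + (t - x j))) / (∏ j ∈ R, (κ + (x j - x i)))) * C) atTop (𝓝 C) := by
    have := hPQ.mul (tendsto_const_nhds (x := C))
    rwa [one_mul] at this
  have hfinal : Tendsto (fun κ => ℓ κ i t) atTop (𝓝 C) := by
    refine hmain.congr' ?_
    filter_upwards [eventually_gt_atTop (0 : ℝ)] with κ hκ
    have hQpos : ∀ j ∈ R, (0 : ℝ) < κ + (x j - x i) := by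
      intro j hj
      have := hRgt j hj
      nlinarith
    have hQne : (∏ j ∈ R, (κ + (x j - x i))) ≠ 0 :=
      ne_of_gt (Finset.prod_pos hQpos)
    -- compute ℓ κ i t
    have hsplit : ℓ κ i t =
        (∏ j ∈ L, (κ + (t - x j)) / (x i - x j)) *
        (∏ j ∈ R, (t - x j) / (-(κ + (x j - x i)))) := by
      rw [hℓ]
      rw [← Finset.prod_filter_mul_prod_filter_not (Finset.univ.erase i)
        (fun j : Fin (n + 1) => (j : ℕ) ≤ η)]
      have hL' : (Finset.univ.erase i).filter (fun j : Fin (n + 1) => (j : ℕ) ≤ η) = L := by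
        rw [hLdef, Finset.filter_erase]
      have hR' : (Finset.univ.erase i).filter (fun j : Fin (n + 1) => ¬ (j : ℕ) ≤ η) = R := by
        rw [Finset.filter_erase, Finset.erase_eq_of_notMem]
        · simp [hRdef, not_le]
        · simp [hi]
      rw [hL', hR']
      congr 1
      · refine Finset.prod_congr rfl (fun j hj => ?_)
        rw [hS, hS, hS, if_pos (hLle j hj), if_pos hxiξ, if_neg (not_le.mpr ht.1)]
        ring_nf
      · refine Finset.prod_congr rfl (fun j hj => ?_)
        rw [hS, hS, hS, if_neg (not_le.mpr (hRgt j hj)), if_pos hxiξ,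
          if_neg (not_le.mpr ht.1)]
        ring_nf
    rw [hsplit, Finset.prod_div_distrib, Finset.prod_div_distrib]
    have hnegprod : (∏ j ∈ R, (-(κ + (x j - x i)))) =
        (-1 : ℝ) ^ η * ∏ j ∈ R, (κ + (x j - x i)) := by
      rw [show (fun j => -(κ + (x j - x i))) = fun j => (-1 : ℝ) * (κ + (x j - x i)) by
        funext j; ring]
      rw [Finset.prod_mul_distrib, Finset.prod_const, hRcard]
    rw [hnegprod, hCdef]
    have hsgn : ((-1 : ℝ) ^ η) ≠ 0 := by
      simp
    field_simp
    have hsq : ((-1 : ℝ)) ^ η * (-1) ^ η = 1 := by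
      rw [← pow_add, ← two_mul, pow_mul]; norm_num
    linear_combination ((∏ j ∈ L, (κ + (t - x j))) * (∏ j ∈ R, (t - x j))) * hsq
  have hCC : C = (-1 : ℝ) ^ (n / 2) *
      ((∏ j ∈ Finset.univ.filter (fun j : Fin (n + 1) => η < (j : ℕ)), (t - x j)) *
        ∏ j ∈ (Finset.univ.filter (fun j : Fin (n + 1) => (j : ℕ) ≤ η)).erase i,
          (x i - x j)⁻¹) := by
    rw [hCdef, ← hη, ← Finset.prod_inv_distrib]
  rwa [hCC] at hfinal
end

section
/- In the even case, for every index i > η and every point x ∈ Ω¹ = [a,ξ], the mapped Lagrange basis function vanishes in the limit with decay rate κ^{−2}: lim_{κ→∞} ℓ_i^κ(x) = 0, and moreover κ² · ℓ_i^κ(x) converges to a finite real limit as κ → ∞. -/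
open Filter Finset Real Topology

private lemma ratio_tendsto_one (c d : ℝ) :
    Tendsto (fun κ : ℝ => (κ + d) / (κ + c)) atTop (𝓝 1) := by
  have hden : Tendsto (fun κ : ℝ => κ + c) atTop atTop :=
    tendsto_atTop_add_const_right atTop c tendsto_id
  have h : Tendsto (fun κ : ℝ => 1 + (d - c) / (κ + c)) atTop (𝓝 1) := by
    have := Tendsto.div_atTop (tendsto_const_nhds (x := d - c)) hden
    simpa using (tendsto_const_nhds (x := (1:ℝ))).add this
  refine h.congr' ?_
  filter_upwards [eventually_gt_atTop (-c)] with κ hκ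
  have hne : κ + c ≠ 0 := by linarith
  field_simp
  ring

theorem stmt_8
    (a b ξ : ℝ) (hab : a < b) (hξ : ξ ∈ Set.Ioo a b)
    (n : ℕ) (hn : Even n) (η : ℕ) (hη : η = n / 2)
    (x : Fin (n + 1) → ℝ) (hmono : StrictMono x)
    (hxΩ : ∀ i, x i ∈ Set.Icc a b)
    (hleft : ∀ i : Fin (n + 1), (i : ℕ) ≤ η → x i ≤ ξ)
    (hright : ∀ i : Fin (n + 1), η < (i : ℕ) → ξ < x i)
    (S : ℝ → ℝ → ℝ)
    (hS : ∀ κ t, S κ t = if t ≤ ξ then t else t + κ)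
    (ℓ : ℝ → Fin (n + 1) → ℝ → ℝ)
    (hℓ : ∀ κ i t, ℓ κ i t =
      ∏ j ∈ Finset.univ.erase i, (S κ t - S κ (x j)) / (S κ (x i) - S κ (x j)))
    (i : Fin (n + 1)) (hi : η < (i : ℕ))
    (t : ℝ) (ht : t ∈ Set.Icc a ξ) :
    Tendsto (fun κ => ℓ κ i t) atTop (𝓝 0) ∧
      ∃ L : ℝ, Tendsto (fun κ => κ ^ 2 * ℓ κ i t) atTop (𝓝 L) := by
  have hin : (i : ℕ) ≤ n := Nat.lt_succ_iff.mp i.isLt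
  have hn2 : n = 2 * η := by
    rcases hn with ⟨k, hk⟩; omega
  have hη1 : 1 ≤ η := by omega
  -- the two groups of indices
  set p : Fin (n + 1) → Prop := fun j => (j : ℕ) ≤ η with hp
  have hdp : DecidablePred p := fun j => Nat.decLe _ _
  set A := (Finset.univ.erase i).filter p with hA
  set B := (Finset.univ.erase i).filter (fun j => ¬ p j) with hB
  -- cardinalities
  have hAeq : A = Finset.Iic (⟨η, by omega⟩ : Fin (n + 1)) := by
    ext j
    simp [hA, Finset.mem_Iic, hp, Fin.le_def]
    intro hj
    omega
  have hcardA : A.card = η + 1 := by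
    rw [hAeq, Fin.card_Iic]
  have hcardAB : A.card + B.card = n := by
    rw [hA, hB, Finset.card_filter_add_card_filter_not,
      Finset.card_erase_of_mem (Finset.mem_univ i), Finset.card_univ]
    simp
  have hcardB : B.card = η - 1 := by omega
  -- simplifications of S
  have hSt : ∀ κ, S κ t = t := fun κ => by rw [hS]; simp [ht.2]
  have hSi : ∀ κ, S κ (x i) = x i + κ := fun κ => by
    rw [hS]; simp [not_le.mpr (hright i hi)]
  have hSA : ∀ j ∈ A, ∀ κ, S κ (x j) = x j := by
    intro j hj κ
    rw [hS]
    simp [hleft j (by simpa [hA, hp] using (Finset.mem_filter.mp hj).2)]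
  have hSB : ∀ j ∈ B, ∀ κ, S κ (x j) = x j + κ := by
    intro j hj κ
    have : η < (j : ℕ) := by
      have := (Finset.mem_filter.mp hj).2
      simpa [hp] using this
    rw [hS]
    simp [not_le.mpr (hright j this)]
  have hxne : ∀ j ∈ B, x i - x j ≠ 0 := by
    intro j hj
    have hji : j ≠ i := Finset.ne_of_mem_erase (Finset.mem_of_mem_filter j hj)
    exact sub_ne_zero_of_ne (fun h => hji (hmono.injective h.symm))
  -- the limit functions
  set FA : Fin (n + 1) → ℝ → ℝ :=
    fun j κ => (t - x j) * ((κ + 0) / (κ + (x i - x j))) with hFA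
  set FB : Fin (n + 1) → ℝ → ℝ :=
    fun j κ => (1 / (x i - x j)) * ((t - x j) / κ - 1) with hFB
  set L : ℝ := (∏ j ∈ A, (t - x j)) * ∏ j ∈ B, (-(1 / (x i - x j))) with hL
  have hGA : ∀ j ∈ A, Tendsto (FA j) atTop (𝓝 (t - x j)) := by
    intro j _
    have := (ratio_tendsto_one (x i - x j) 0).const_mul (t - x j)
    simpa [hFA] using this
  have hGB : ∀ j ∈ B, Tendsto (FB j) atTop (𝓝 (-(1 / (x i - x j)))) := by
    intro j _
    have h1 : Tendsto (fun κ : ℝ => (t - x j) / κ - 1) atTop (𝓝 (0 - 1)) :=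
      (Tendsto.div_atTop tendsto_const_nhds tendsto_id).sub tendsto_const_nhds
    have := h1.const_mul (1 / (x i - x j))
    simp only [zero_sub, mul_neg_one] at this
    simpa [hFB] using this
  have hG : Tendsto (fun κ => (∏ j ∈ A, FA j κ) * ∏ j ∈ B, FB j κ) atTop (𝓝 L) := by
    rw [hL]
    exact (tendsto_finset_prod A hGA).mul (tendsto_finset_prod B hGB)
  -- eventual equality
  have heq : ∀ᶠ κ : ℝ in atTop, κ ^ 2 * ℓ κ i t = (∏ j ∈ A, FA j κ) * ∏ j ∈ B, FB j κ := by
    filter_upwards [eventually_gt_atTop (0 : ℝ)] with κ hκ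
    have hκ0 : κ ≠ 0 := ne_of_gt hκ
    have hsplit : ℓ κ i t =
        (∏ j ∈ A, (S κ t - S κ (x j)) / (S κ (x i) - S κ (x j))) *
        ∏ j ∈ B, (S κ t - S κ (x j)) / (S κ (x i) - S κ (x j)) := by
      rw [hℓ, hA, hB, Finset.prod_filter_mul_prod_filter_not]
    have hprodA : ∏ j ∈ A, FA j κ =
        κ ^ (η + 1) * ∏ j ∈ A, (S κ t - S κ (x j)) / (S κ (x i) - S κ (x j)) := by
      rw [← hcardA, ← Finset.prod_const, ← Finset.prod_mul_distrib]
      refine Finset.prod_congr rfl fun j hj => ?_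
      rw [hSt, hSi, hSA j hj, hFA]
      ring
    have hprodB : ∏ j ∈ B, FB j κ =
        (∏ j ∈ B, (S κ t - S κ (x j)) / (S κ (x i) - S κ (x j))) / κ ^ (η - 1) := by
      rw [← hcardB, ← Finset.prod_const, ← Finset.prod_div_distrib]
      refine Finset.prod_congr rfl fun j hj => ?_
      rw [hSt, hSi, hSB j hj, hFB]
      have hc := hxne j hj
      beta_reduce
      rw [show x i + κ - (x j + κ) = x i - x j by ring, div_sub_one hκ0]
      ring
    rw [hprodA, hprodB, hsplit]
    have hpow : κ ^ (η + 1) = κ ^ 2 * κ ^ (η - 1) := by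
      rw [← pow_add]; congr 1; omega
    have key : ∀ (d u v : ℝ), d ≠ 0 → (κ ^ 2 * d * u) * (v / d) = κ ^ 2 * (u * v) := by
      intro d u v hd
      field_simp
    rw [hpow, key _ _ _ (pow_ne_zero _ hκ0)]
  have hmain : Tendsto (fun κ => κ ^ 2 * ℓ κ i t) atTop (𝓝 L) :=
    hG.congr' (heq.mono fun κ h => h.symm)
  constructor
  · have h0 : Tendsto (fun κ : ℝ => (κ ^ 2 * ℓ κ i t) / κ ^ 2) atTop (𝓝 0) :=
      Tendsto.div_atTop hmain (tendsto_pow_atTop (by norm_num) |>.comp tendsto_id)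
    refine h0.congr' ?_
    filter_upwards [eventually_gt_atTop (0 : ℝ)] with κ hκ
    have : κ ^ 2 ≠ 0 := by positivity
    field_simp
  · exact ⟨L, hmain⟩
end

section
/- In the even case, for every index i > η and every point x ∈ Ω² = (ξ,b], the mapped Lagrange basis function converges pointwise to the classical Lagrange basis polynomial of the right node group: lim_{κ→∞} ℓ_i^κ(x) = ∏_{j=η+1, j≠i}^{n} (x − x_j)/(x_i − x_j). -/
open Filter Finset Real Topology

lemma aux_ratio (A B : ℝ) :
    Tendsto (fun κ : ℝ => (κ + A) / (κ + B)) atTop (𝓝 1) := by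
  have h1 : Tendsto (fun κ : ℝ => 1 + (A - B) * (κ + B)⁻¹) atTop (𝓝 (1 + (A - B) * 0)) :=
    tendsto_const_nhds.add (tendsto_const_nhds.mul
      (tendsto_atTop_add_const_right _ B tendsto_id).inv_tendsto_atTop)
  rw [mul_zero, add_zero] at h1
  apply h1.congr'
  filter_upwards [eventually_gt_atTop (-B)] with κ hκ
  have hne : κ + B ≠ 0 := by linarith
  field_simp
  ring

theorem stmt_9
    (a b ξ : ℝ) (hab : a < b) (hξ : ξ ∈ Set.Ioo a b)
    (n : ℕ) (hn : Even n) (η : ℕ) (hη : η = n / 2)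
    (x : Fin (n + 1) → ℝ) (hmono : StrictMono x)
    (hxΩ : ∀ i, x i ∈ Set.Icc a b)
    (hleft : ∀ i : Fin (n + 1), (i : ℕ) ≤ η → x i ≤ ξ)
    (hright : ∀ i : Fin (n + 1), η < (i : ℕ) → ξ < x i)
    (S : ℝ → ℝ → ℝ)
    (hS : ∀ κ t, S κ t = if t ≤ ξ then t else t + κ)
    (ℓ : ℝ → Fin (n + 1) → ℝ → ℝ)
    (hℓ : ∀ κ i t, ℓ κ i t =
      ∏ j ∈ Finset.univ.erase i, (S κ t - S κ (x j)) / (S κ (x i) - S κ (x j)))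
    (i : Fin (n + 1)) (hi : η < (i : ℕ))
    (t : ℝ) (ht : t ∈ Set.Ioc ξ b) :
    Tendsto (fun κ => ℓ κ i t) atTop
      (𝓝 (∏ j ∈ (Finset.univ.filter (fun j : Fin (n + 1) => η < (j : ℕ))).erase i,
        (t - x j) / (x i - x j))) := by
  set C := ∏ j ∈ (Finset.univ.filter (fun j : Fin (n + 1) => η < (j : ℕ))).erase i,
        (t - x j) / (x i - x j) with hC
  have hxt : ¬ t ≤ ξ := not_le.mpr ht.1
  have hxi : ¬ x i ≤ ξ := not_le.mpr (hright i hi)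
  -- pointwise rewriting of ℓ
  have key : ∀ κ : ℝ, ℓ κ i t =
      C * ∏ j ∈ Finset.univ.filter (fun j : Fin (n + 1) => ¬ η < (j : ℕ)),
        (κ + (t - x j)) / (κ + (x i - x j)) := by
    intro κ
    rw [hℓ]
    rw [← Finset.prod_filter_mul_prod_filter_not (Finset.univ.erase i)
      (fun j : Fin (n + 1) => η < (j : ℕ))]
    congr 1
    · rw [Finset.filter_erase]
      apply Finset.prod_congr rfl
      intro j hj
      have hjη : η < (j : ℕ) := (Finset.mem_filter.mp (Finset.mem_of_mem_erase hj)).2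
      have hxj : ¬ x j ≤ ξ := not_le.mpr (hright j hjη)
      rw [hS, hS, hS, if_neg hxt, if_neg hxi, if_neg hxj]
      ring_nf
    · have hset : (Finset.univ.erase i).filter (fun j : Fin (n + 1) => ¬ η < (j : ℕ)) =
          Finset.univ.filter (fun j : Fin (n + 1) => ¬ η < (j : ℕ)) := by
        ext j
        simp only [Finset.mem_filter, Finset.mem_erase, Finset.mem_univ, true_and, and_true]
        constructor
        · rintro ⟨_, h⟩; exact h
        · intro h
          exact ⟨fun hji => h (hji ▸ hi), h⟩
      rw [hset]
      apply Finset.prod_congr rfl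
      intro j hj
      have hjη : (j : ℕ) ≤ η := not_lt.mp (Finset.mem_filter.mp hj).2
      have hxj : x j ≤ ξ := hleft j hjη
      rw [hS, hS, hS, if_neg hxt, if_neg hxi, if_pos hxj]
      ring_nf
  have hprod : Tendsto (fun κ : ℝ =>
      ∏ j ∈ Finset.univ.filter (fun j : Fin (n + 1) => ¬ η < (j : ℕ)),
        (κ + (t - x j)) / (κ + (x i - x j))) atTop (𝓝 1) := by
    have := tendsto_finset_prod
      (Finset.univ.filter (fun j : Fin (n + 1) => ¬ η < (j : ℕ)))
      (fun j (_ : j ∈ _) => aux_ratio (t - x j) (x i - x j))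
    simpa using this
  have : Tendsto (fun κ : ℝ => C *
      ∏ j ∈ Finset.univ.filter (fun j : Fin (n + 1) => ¬ η < (j : ℕ)),
        (κ + (t - x j)) / (κ + (x i - x j))) atTop (𝓝 (C * 1)) :=
    tendsto_const_nhds.mul hprod
  rw [mul_one] at this
  exact this.congr fun κ => (key κ).symm
end

section
/- In the even case, the mapped Lebesgue function converges pointwise as follows: for every x ∈ Ω¹ one has lim_{κ→∞} λ^κ(x) = λ(X¹;x), and for every x ∈ Ω² one has lim_{κ→∞} λ^κ(x) = Σ_{i=0}^{η} |r_i(x)| + λ(X²;x), where r_i(x) = ∏_{j=η+1}^{n} (x − x_j) · ∏_{j=0, j≠i}^{η} (x_i − x_j)^{−1}. -/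
open Filter Finset Real Topology

private lemma stmt10_lin_div (c d p q : ℝ) (hq : q ≠ 0) :
    Tendsto (fun κ : ℝ => (c + p*κ)/(d + q*κ)) atTop (𝓝 (p/q)) := by
  have h1 : Tendsto (fun κ:ℝ => c * κ⁻¹ + p) atTop (𝓝 p) := by
    simpa using (tendsto_inv_atTop_zero.const_mul c).add (tendsto_const_nhds (x := p))
  have h2 : Tendsto (fun κ:ℝ => d * κ⁻¹ + q) atTop (𝓝 q) := by
    simpa using (tendsto_inv_atTop_zero.const_mul d).add (tendsto_const_nhds (x := q))
  refine (h1.div h2 hq).congr' ?_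
  filter_upwards [eventually_ne_atTop (0:ℝ)] with κ hκ
  simp only [Pi.div_apply]
  rw [show c * κ⁻¹ + p = (c + p*κ) * κ⁻¹ by field_simp,
      show d * κ⁻¹ + q = (d + q*κ) * κ⁻¹ by field_simp,
      mul_div_mul_right _ _ (inv_ne_zero hκ)]

private lemma stmt10_repA (A D κ : ℝ) (hκ : κ ≠ 0) : A / D = A * (κ / D) * κ⁻¹ := by
  have h : A * (κ / D) * κ⁻¹ = A * (κ * κ⁻¹) / D := by ring
  rw [h, mul_inv_cancel₀ hκ, mul_one]

private lemma stmt10_repB (B E κ : ℝ) (hκ : κ ≠ 0) : (B + κ) / E = (B * κ⁻¹ + 1) * E⁻¹ * κ := by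
  have h : (B * κ⁻¹ + 1) * E⁻¹ * κ = (B * (κ⁻¹ * κ) + κ) * E⁻¹ := by ring
  rw [h, inv_mul_cancel₀ hκ, mul_one, div_eq_mul_inv]

private lemma stmt10_repC (B E κ : ℝ) (hκ : κ ≠ 0) : (B - κ) / E = (B * κ⁻¹ - 1) * E⁻¹ * κ := by
  have h : (B * κ⁻¹ - 1) * E⁻¹ * κ = (B * (κ⁻¹ * κ) - κ) * E⁻¹ := by ring
  rw [h, inv_mul_cancel₀ hκ, mul_one, div_eq_mul_inv]

private lemma stmt10_invsq : Tendsto (fun κ : ℝ => (κ^2)⁻¹) atTop (𝓝 0) := by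
  have h : Tendsto (fun κ : ℝ => κ^2) atTop atTop := tendsto_pow_atTop (by norm_num)
  exact h.inv_tendsto_atTop

theorem stmt_10
    (a b ξ : ℝ) (hab : a < b) (hξ : ξ ∈ Set.Ioo a b)
    (n : ℕ) (hn : Even n) (η : ℕ) (hη : η = n / 2)
    (x : Fin (n + 1) → ℝ) (hmono : StrictMono x)
    (hxΩ : ∀ i, x i ∈ Set.Icc a b)
    (hleft : ∀ i : Fin (n + 1), (i : ℕ) ≤ η → x i ≤ ξ)
    (hright : ∀ i : Fin (n + 1), η < (i : ℕ) → ξ < x i)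
    (S : ℝ → ℝ → ℝ)
    (hS : ∀ κ t, S κ t = if t ≤ ξ then t else t + κ)
    (ℓ : ℝ → Fin (n + 1) → ℝ → ℝ)
    (hℓ : ∀ κ i t, ℓ κ i t =
      ∏ j ∈ Finset.univ.erase i, (S κ t - S κ (x j)) / (S κ (x i) - S κ (x j)))
    : (∀ t ∈ Set.Icc a ξ,
        Tendsto (fun κ => ∑ i : Fin (n + 1), |ℓ κ i t|) atTop
          (𝓝 (∑ i ∈ Finset.univ.filter (fun j : Fin (n + 1) => (j : ℕ) ≤ η),
            ∏ j ∈ (Finset.univ.filter (fun j : Fin (n + 1) => (j : ℕ) ≤ η)).erase i,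
              |t - x j| / |x i - x j|))) ∧
      (∀ t ∈ Set.Ioc ξ b,
        Tendsto (fun κ => ∑ i : Fin (n + 1), |ℓ κ i t|) atTop
          (𝓝 ((∑ i ∈ Finset.univ.filter (fun j : Fin (n + 1) => (j : ℕ) ≤ η),
              |(∏ j ∈ Finset.univ.filter (fun j : Fin (n + 1) => η < (j : ℕ)), (t - x j)) *
                ∏ j ∈ (Finset.univ.filter (fun j : Fin (n + 1) => (j : ℕ) ≤ η)).erase i,
                  (x i - x j)⁻¹|) +
            ∑ i ∈ Finset.univ.filter (fun j : Fin (n + 1) => η < (j : ℕ)),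
              ∏ j ∈ (Finset.univ.filter (fun j : Fin (n + 1) => η < (j : ℕ))).erase i,
                |t - x j| / |x i - x j|))) := by
  classical
  obtain ⟨m, hm⟩ := hn
  have hn2 : n = 2 * η := by omega
  set L : Finset (Fin (n+1)) := Finset.univ.filter (fun j : Fin (n + 1) => (j : ℕ) ≤ η) with hL
  set R : Finset (Fin (n+1)) := Finset.univ.filter (fun j : Fin (n + 1) => η < (j : ℕ)) with hR
  have hmemL : ∀ j : Fin (n+1), j ∈ L ↔ (j:ℕ) ≤ η := by intro j; simp [hL]
  have hmemR : ∀ j : Fin (n+1), j ∈ R ↔ η < (j:ℕ) := by intro j; simp [hR]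
  have hRnot : R = Finset.univ.filter (fun j : Fin (n+1) => ¬ (j:ℕ) ≤ η) := by
    rw [hR]; apply Finset.filter_congr; intro j _; simp [not_le]
  have hcardL : L.card = η + 1 := by
    have h : L = Finset.Iic (⟨η, by omega⟩ : Fin (n+1)) := by
      ext j; simp [hL, Fin.le_def]
    rw [h, Fin.card_Iic]
  have hcardR : R.card = η := by
    have h := Finset.card_filter_add_card_filter_not
      (s := (Finset.univ : Finset (Fin (n+1)))) (p := fun j : Fin (n+1) => (j:ℕ) ≤ η)
    rw [← hL, ← hRnot] at h
    simp only [Finset.card_univ, Fintype.card_fin] at h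
    omega
  have hSL : ∀ (κ : ℝ) (j : Fin (n+1)), (j:ℕ) ≤ η → S κ (x j) = x j := by
    intro κ j hj; rw [hS]; exact if_pos (hleft j hj)
  have hSR : ∀ (κ : ℝ) (j : Fin (n+1)), η < (j:ℕ) → S κ (x j) = x j + κ := by
    intro κ j hj; rw [hS]; exact if_neg (not_le.mpr (hright j hj))
  have hsplit : ∀ (i : Fin (n+1)) (f : Fin (n+1) → ℝ),
      ∏ j ∈ Finset.univ.erase i, f j =
        (∏ j ∈ L.erase i, f j) * (∏ j ∈ R.erase i, f j) := by
    intro i f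
    rw [← Finset.prod_filter_mul_prod_filter_not (Finset.univ.erase i)
      (fun j : Fin (n+1) => (j:ℕ) ≤ η)]
    congr 1
    · rw [Finset.filter_erase, ← hL]
    · rw [Finset.filter_erase, ← hRnot]
  have hsumsplit : ∀ (f : Fin (n+1) → ℝ),
      ∑ i : Fin (n+1), f i = (∑ i ∈ L, f i) + ∑ i ∈ R, f i := by
    intro f
    rw [← Finset.sum_filter_add_sum_filter_not Finset.univ
      (fun j : Fin (n+1) => (j:ℕ) ≤ η), ← hL, ← hRnot]
  constructor
  · -- Case 1 : t ∈ [a, ξ]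
    intro t ht
    have hSt : ∀ κ, S κ t = t := fun κ => by rw [hS]; exact if_pos ht.2
    have keyL : ∀ i ∈ L, Tendsto (fun κ => |ℓ κ i t|) atTop
        (𝓝 (∏ j ∈ L.erase i, |t - x j| / |x i - x j|)) := by
      intro i hi
      have hiη : (i:ℕ) ≤ η := (hmemL i).1 hi
      have hiR : R.erase i = R := Finset.erase_eq_of_notMem (by
        simp only [hmemR]; omega)
      have hrep : ∀ κ : ℝ, ℓ κ i t =
          (∏ j ∈ L.erase i, (t - x j)/(x i - x j)) *
          (∏ j ∈ R, ((t - x j) + (-1)*κ)/((x i - x j) + (-1)*κ)) := by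
        intro κ
        rw [hℓ, hsplit i, hiR]
        congr 1
        · refine Finset.prod_congr rfl fun j hj => ?_
          have hj' : (j:ℕ) ≤ η := (hmemL j).1 (Finset.mem_of_mem_erase hj)
          rw [hSt, hSL κ j hj', hSL κ i hiη]
        · refine Finset.prod_congr rfl fun j hj => ?_
          have hj' : η < (j:ℕ) := (hmemR j).1 hj
          rw [hSt, hSR κ j hj', hSL κ i hiη]
          ring
      have hlim : Tendsto (fun κ => ℓ κ i t) atTop
          (𝓝 ((∏ j ∈ L.erase i, (t - x j)/(x i - x j)) * ∏ j ∈ R, (1:ℝ))) := by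
        refine Tendsto.congr (fun κ => (hrep κ).symm) ?_
        refine tendsto_const_nhds.mul (tendsto_finset_prod R fun j _ => ?_)
        have h := stmt10_lin_div (t - x j) (x i - x j) (-1) (-1) (by norm_num)
        norm_num at h
        exact h.congr fun κ => by ring
      have heq : |(∏ j ∈ L.erase i, (t - x j)/(x i - x j)) * ∏ j ∈ R, (1:ℝ)| =
          ∏ j ∈ L.erase i, |t - x j| / |x i - x j| := by
        rw [Finset.prod_const_one, mul_one, Finset.abs_prod]
        exact Finset.prod_congr rfl fun j _ => abs_div _ _
      rw [← heq]
      exact hlim.abs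
    have keyR : ∀ i ∈ R, Tendsto (fun κ => |ℓ κ i t|) atTop (𝓝 0) := by
      intro i hi
      have hiη : η < (i:ℕ) := (hmemR i).1 hi
      have hη1 : 1 ≤ η := by have := i.isLt; omega
      have hiL : L.erase i = L := Finset.erase_eq_of_notMem (by
        simp only [hmemL]; omega)
      have hcardRe : (R.erase i).card = η - 1 := by
        rw [Finset.card_erase_of_mem hi, hcardR]
      have hrep : ∀ κ : ℝ, 0 < κ → ℓ κ i t =
          ((∏ j ∈ L, (t - x j) * (κ / (x i + κ - x j))) *
           (∏ j ∈ R.erase i, ((t - x j) * κ⁻¹ - 1) * (x i - x j)⁻¹)) * (κ ^ 2)⁻¹ := by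
        intro κ hκ
        rw [hℓ, hsplit i, hiL]
        have p1 : ∏ j ∈ L, (S κ t - S κ (x j)) / (S κ (x i) - S κ (x j)) =
            (∏ j ∈ L, (t - x j) * (κ / (x i + κ - x j))) * (κ⁻¹) ^ L.card := by
          rw [← Finset.prod_const (κ⁻¹ : ℝ), ← Finset.prod_mul_distrib]
          refine Finset.prod_congr rfl fun j hj => ?_
          rw [hSt, hSL κ j ((hmemL j).1 hj), hSR κ i hiη]
          exact stmt10_repA _ _ _ hκ.ne'
        have p2 : ∏ j ∈ R.erase i, (S κ t - S κ (x j)) / (S κ (x i) - S κ (x j)) =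
            (∏ j ∈ R.erase i, ((t - x j) * κ⁻¹ - 1) * (x i - x j)⁻¹) * κ ^ (R.erase i).card := by
          rw [← Finset.prod_const (κ : ℝ), ← Finset.prod_mul_distrib]
          refine Finset.prod_congr rfl fun j hj => ?_
          have hj' : η < (j:ℕ) := (hmemR j).1 (Finset.mem_of_mem_erase hj)
          rw [hSt, hSR κ j hj', hSR κ i hiη,
            show t - (x j + κ) = (t - x j) - κ by ring,
            show x i + κ - (x j + κ) = x i - x j by ring]
          exact stmt10_repC _ _ _ hκ.ne'
        rw [p1, p2, hcardL, hcardRe]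
        have hpow : (κ⁻¹ : ℝ) ^ (η + 1) * κ ^ (η - 1) = (κ ^ 2)⁻¹ := by
          rw [show η + 1 = 2 + (η - 1) by omega, pow_add, mul_assoc, ← mul_pow,
            inv_mul_cancel₀ hκ.ne', one_pow, mul_one, inv_pow]
        calc (∏ j ∈ L, (t - x j) * (κ / (x i + κ - x j))) * (κ⁻¹) ^ (η + 1) *
              ((∏ j ∈ R.erase i, ((t - x j) * κ⁻¹ - 1) * (x i - x j)⁻¹) * κ ^ (η - 1))
            = ((∏ j ∈ L, (t - x j) * (κ / (x i + κ - x j))) *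
               (∏ j ∈ R.erase i, ((t - x j) * κ⁻¹ - 1) * (x i - x j)⁻¹)) *
              ((κ⁻¹) ^ (η + 1) * κ ^ (η - 1)) := by ring
          _ = _ := by rw [hpow]
      have hF : Tendsto (fun κ : ℝ => ((∏ j ∈ L, (t - x j) * (κ / (x i + κ - x j))) *
          (∏ j ∈ R.erase i, ((t - x j) * κ⁻¹ - 1) * (x i - x j)⁻¹)) * (κ ^ 2)⁻¹)
          atTop (𝓝 0) := by
        have h1 : Tendsto (fun κ : ℝ => ∏ j ∈ L, (t - x j) * (κ / (x i + κ - x j))) atTop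
            (𝓝 (∏ j ∈ L, (t - x j) * 1)) := by
          refine tendsto_finset_prod _ fun j _ => tendsto_const_nhds.mul ?_
          have h := stmt10_lin_div 0 (x i - x j) 1 1 one_ne_zero
          norm_num at h
          exact h.congr fun κ => by ring
        have h2 : Tendsto (fun κ : ℝ => ∏ j ∈ R.erase i,
            ((t - x j) * κ⁻¹ - 1) * (x i - x j)⁻¹) atTop
            (𝓝 (∏ j ∈ R.erase i, ((t - x j) * 0 - 1) * (x i - x j)⁻¹)) := by
          refine tendsto_finset_prod _ fun j _ => Tendsto.mul ?_ tendsto_const_nhds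
          exact ((tendsto_inv_atTop_zero.const_mul (t - x j)).sub tendsto_const_nhds)
        simpa using (h1.mul h2).mul stmt10_invsq
      have hlim : Tendsto (fun κ => ℓ κ i t) atTop (𝓝 0) := by
        refine hF.congr' ?_
        filter_upwards [eventually_gt_atTop (0:ℝ)] with κ hκ
        exact (hrep κ hκ).symm
      simpa using hlim.abs
    have hsum : Tendsto (fun κ => (∑ i ∈ L, |ℓ κ i t|) + ∑ i ∈ R, |ℓ κ i t|) atTop
        (𝓝 ((∑ i ∈ L, ∏ j ∈ L.erase i, |t - x j| / |x i - x j|) + 0)) := by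
      refine Tendsto.add (tendsto_finset_sum L fun i hi => keyL i hi) ?_
      have h := tendsto_finset_sum R fun i hi => keyR i hi
      simpa using h
    rw [add_zero] at hsum
    exact hsum.congr fun κ => (hsumsplit (fun i => |ℓ κ i t|)).symm
  · -- Case 2 : t ∈ (ξ, b]
    intro t ht
    have hSt : ∀ κ, S κ t = t + κ := fun κ => by
      rw [hS]; exact if_neg (not_le.mpr ht.1)
    have keyL : ∀ i ∈ L, Tendsto (fun κ => |ℓ κ i t|) atTop
        (𝓝 (|(∏ j ∈ R, (t - x j)) * ∏ j ∈ L.erase i, (x i - x j)⁻¹|)) := by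
      intro i hi
      have hiη : (i:ℕ) ≤ η := (hmemL i).1 hi
      have hiR : R.erase i = R := Finset.erase_eq_of_notMem (by
        simp only [hmemR]; omega)
      have hcardLe : (L.erase i).card = η := by
        rw [Finset.card_erase_of_mem hi, hcardL]
        omega
      have hrep : ∀ κ : ℝ, 0 < κ → ℓ κ i t =
          (∏ j ∈ L.erase i, ((t - x j) * κ⁻¹ + 1) * (x i - x j)⁻¹) *
          (∏ j ∈ R, (t - x j) * (κ / (x i - x j - κ))) := by
        intro κ hκ
        rw [hℓ, hsplit i, hiR]
        have p1 : ∏ j ∈ L.erase i, (S κ t - S κ (x j)) / (S κ (x i) - S κ (x j)) =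
            (∏ j ∈ L.erase i, ((t - x j) * κ⁻¹ + 1) * (x i - x j)⁻¹) * κ ^ (L.erase i).card := by
          rw [← Finset.prod_const (κ : ℝ), ← Finset.prod_mul_distrib]
          refine Finset.prod_congr rfl fun j hj => ?_
          have hj' : (j:ℕ) ≤ η := (hmemL j).1 (Finset.mem_of_mem_erase hj)
          rw [hSt, hSL κ j hj', hSL κ i hiη,
            show t + κ - x j = (t - x j) + κ by ring]
          exact stmt10_repB _ _ _ hκ.ne'
        have p2 : ∏ j ∈ R, (S κ t - S κ (x j)) / (S κ (x i) - S κ (x j)) =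
            (∏ j ∈ R, (t - x j) * (κ / (x i - x j - κ))) * (κ⁻¹) ^ R.card := by
          rw [← Finset.prod_const (κ⁻¹ : ℝ), ← Finset.prod_mul_distrib]
          refine Finset.prod_congr rfl fun j hj => ?_
          have hj' : η < (j:ℕ) := (hmemR j).1 hj
          rw [hSt, hSR κ j hj', hSL κ i hiη,
            show t + κ - (x j + κ) = t - x j by ring,
            show x i - (x j + κ) = x i - x j - κ by ring]
          exact stmt10_repA _ _ _ hκ.ne'
        rw [p1, p2, hcardLe, hcardR]
        have hpow : (κ : ℝ) ^ η * (κ⁻¹) ^ η = 1 := by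
          rw [← mul_pow, mul_inv_cancel₀ hκ.ne', one_pow]
        calc (∏ j ∈ L.erase i, ((t - x j) * κ⁻¹ + 1) * (x i - x j)⁻¹) * κ ^ η *
              ((∏ j ∈ R, (t - x j) * (κ / (x i - x j - κ))) * (κ⁻¹) ^ η)
            = (∏ j ∈ L.erase i, ((t - x j) * κ⁻¹ + 1) * (x i - x j)⁻¹) *
              (∏ j ∈ R, (t - x j) * (κ / (x i - x j - κ))) * (κ ^ η * (κ⁻¹) ^ η) := by ring
          _ = _ := by rw [hpow, mul_one]
      have hlim : Tendsto (fun κ => ℓ κ i t) atTop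
          (𝓝 ((∏ j ∈ L.erase i, ((t - x j) * 0 + 1) * (x i - x j)⁻¹) *
              (∏ j ∈ R, (t - x j) * (-1)))) := by
        have h1 : Tendsto (fun κ : ℝ => ∏ j ∈ L.erase i, ((t - x j) * κ⁻¹ + 1) * (x i - x j)⁻¹)
            atTop (𝓝 (∏ j ∈ L.erase i, ((t - x j) * 0 + 1) * (x i - x j)⁻¹)) := by
          refine tendsto_finset_prod _ fun j _ => Tendsto.mul ?_ tendsto_const_nhds
          exact (tendsto_inv_atTop_zero.const_mul (t - x j)).add tendsto_const_nhds
        have h2 : Tendsto (fun κ : ℝ => ∏ j ∈ R, (t - x j) * (κ / (x i - x j - κ)))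
            atTop (𝓝 (∏ j ∈ R, (t - x j) * (-1))) := by
          refine tendsto_finset_prod _ fun j _ => tendsto_const_nhds.mul ?_
          have h := stmt10_lin_div 0 (x i - x j) 1 (-1) (by norm_num)
          norm_num at h
          exact h.congr fun κ => by ring
        refine (h1.mul h2).congr' ?_
        filter_upwards [eventually_gt_atTop (0:ℝ)] with κ hκ
        exact (hrep κ hκ).symm
      have heq : |(∏ j ∈ L.erase i, ((t - x j) * 0 + 1) * (x i - x j)⁻¹) *
          (∏ j ∈ R, (t - x j) * (-1))| =
          |(∏ j ∈ R, (t - x j)) * ∏ j ∈ L.erase i, (x i - x j)⁻¹| := by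
        rw [abs_mul, abs_mul, Finset.abs_prod, Finset.abs_prod, Finset.abs_prod,
          Finset.abs_prod]
        simp only [mul_zero, zero_add, one_mul, abs_mul, abs_neg, abs_one, mul_one]
        ring
      rw [← heq]
      exact hlim.abs
    have keyR : ∀ i ∈ R, Tendsto (fun κ => |ℓ κ i t|) atTop
        (𝓝 (∏ j ∈ R.erase i, |t - x j| / |x i - x j|)) := by
      intro i hi
      have hiη : η < (i:ℕ) := (hmemR i).1 hi
      have hiL : L.erase i = L := Finset.erase_eq_of_notMem (by
        simp only [hmemL]; omega)
      have hrep : ∀ κ : ℝ, ℓ κ i t =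
          (∏ j ∈ L, ((t - x j) + 1*κ)/((x i - x j) + 1*κ)) *
          (∏ j ∈ R.erase i, (t - x j)/(x i - x j)) := by
        intro κ
        rw [hℓ, hsplit i, hiL]
        congr 1
        · refine Finset.prod_congr rfl fun j hj => ?_
          have hj' : (j:ℕ) ≤ η := (hmemL j).1 hj
          rw [hSt, hSL κ j hj', hSR κ i hiη]
          ring
        · refine Finset.prod_congr rfl fun j hj => ?_
          have hj' : η < (j:ℕ) := (hmemR j).1 (Finset.mem_of_mem_erase hj)
          rw [hSt, hSR κ j hj', hSR κ i hiη]
          ring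
      have hlim : Tendsto (fun κ => ℓ κ i t) atTop
          (𝓝 ((∏ j ∈ L, (1:ℝ)) * ∏ j ∈ R.erase i, (t - x j)/(x i - x j))) := by
        refine Tendsto.congr (fun κ => (hrep κ).symm) ?_
        refine Tendsto.mul (tendsto_finset_prod L fun j _ => ?_) tendsto_const_nhds
        have h := stmt10_lin_div (t - x j) (x i - x j) 1 1 one_ne_zero
        norm_num at h
        exact h.congr fun κ => by ring
      have heq : |(∏ j ∈ L, (1:ℝ)) * ∏ j ∈ R.erase i, (t - x j)/(x i - x j)| =
          ∏ j ∈ R.erase i, |t - x j| / |x i - x j| := by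
        rw [Finset.prod_const_one, one_mul, Finset.abs_prod]
        exact Finset.prod_congr rfl fun j _ => abs_div _ _
      rw [← heq]
      exact hlim.abs
    have hsum : Tendsto (fun κ => (∑ i ∈ L, |ℓ κ i t|) + ∑ i ∈ R, |ℓ κ i t|) atTop
        (𝓝 ((∑ i ∈ L, |(∏ j ∈ R, (t - x j)) * ∏ j ∈ L.erase i, (x i - x j)⁻¹|) +
            ∑ i ∈ R, ∏ j ∈ R.erase i, |t - x j| / |x i - x j|)) :=
      Tendsto.add (tendsto_finset_sum L fun i hi => keyL i hi)
        (tendsto_finset_sum R fun i hi => keyR i hi)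
    exact hsum.congr fun κ => (hsumsplit (fun i => |ℓ κ i t|)).symm
end

section
/- (Theorem 2, decay cases) In the multiple-discontinuity setting, let μ ≠ τ in {1,…,d+1}, let x_i ∈ X^μ and x ∈ Ω^τ. If |X^τ| ≥ |X^μ| then lim_{κ→∞} ℓ_i^κ(x) = 0; more precisely, κ · ℓ_i^κ(x) converges to a finite real limit when |X^τ| = |X^μ|, and κ² · ℓ_i^κ(x) converges to a finite real limit when |X^τ| = |X^μ| + 1. -/
open Filter Finset Real Topology

private lemma prod_zpow_eq {ι : Type*} (s : Finset ι) (a : ℝ) (ha : a ≠ 0) (g : ι → ℤ) :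
    ∏ j ∈ s, a ^ (g j) = a ^ (∑ j ∈ s, g j) := by
  classical
  induction s using Finset.induction_on with
  | empty => simp
  | insert _ _ h ih =>
      rw [Finset.prod_insert h, Finset.sum_insert h, ih, zpow_add₀ ha]

private lemma tendsto_ratlin (A B c dd : ℝ) (hdd : dd ≠ 0) :
    Tendsto (fun κ : ℝ => (A + c * κ) / (B + dd * κ)) atTop (𝓝 (c / dd)) := by
  have h1 : Tendsto (fun κ : ℝ => (A / κ + c) / (B / κ + dd)) atTop (𝓝 ((0 + c) / (0 + dd))) := by
    apply Tendsto.div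
    · exact (tendsto_const_nhds.div_atTop tendsto_id).add tendsto_const_nhds
    · exact (tendsto_const_nhds.div_atTop tendsto_id).add tendsto_const_nhds
    · simpa using hdd
  have h2 : (0 + c) / (0 + dd) = c / dd := by ring_nf
  rw [h2] at h1
  refine h1.congr' ?_
  filter_upwards [eventually_gt_atTop 0] with κ hκ
  have hκ0 : κ ≠ 0 := ne_of_gt hκ
  have e1 : A / κ + c = (A + c * κ) / κ := by field_simp
  have e2 : B / κ + dd = (B + dd * κ) / κ := by field_simp
  rw [e1, e2, div_div_div_cancel_right₀ hκ0]

theorem stmt_13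
    (a b : ℝ) (hab : a < b)
    (d : ℕ) (hd : 2 ≤ d)
    (ξ : ℕ → ℝ) (hξ0 : ξ 0 = a) (hξlast : ξ (d + 1) = b)
    (hξmono : ∀ k ≤ d, ξ k < ξ (k + 1))
    (Reg : ℕ → Set ℝ)
    (hReg : ∀ τ, Reg τ = if τ = 0 then Set.Icc (ξ 0) (ξ 1) else Set.Ioc (ξ τ) (ξ (τ + 1)))
    (n : ℕ) (x : Fin (n + 1) → ℝ) (hmono : StrictMono x)
    (hxΩ : ∀ i, x i ∈ Set.Icc a b)
    (ρ : Fin (n + 1) → ℕ) (hρd : ∀ j, ρ j ≤ d) (hρ : ∀ j, x j ∈ Reg (ρ j))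
    (hne : ∀ τ ≤ d, ∃ j, ρ j = τ)
    (S : ℝ → ℝ → ℝ)
    (hS : ∀ κ t τ, τ ≤ d → t ∈ Reg τ → S κ t = t + (τ : ℝ) * κ)
    (ℓ : ℝ → Fin (n + 1) → ℝ → ℝ)
    (hℓ : ∀ κ i t, ℓ κ i t =
      ∏ j ∈ Finset.univ.erase i, (S κ t - S κ (x j)) / (S κ (x i) - S κ (x j)))
    (μ τ : ℕ) (hμ : μ ≤ d) (hτ : τ ≤ d) (hμτ : μ ≠ τ)
    (i : Fin (n + 1)) (hiμ : ρ i = μ)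
    (t : ℝ) (ht : t ∈ Reg τ) :
    ((Finset.univ.filter (fun j : Fin (n + 1) => ρ j = μ)).card ≤
        (Finset.univ.filter (fun j : Fin (n + 1) => ρ j = τ)).card →
      Tendsto (fun κ => ℓ κ i t) atTop (𝓝 0)) ∧
    ((Finset.univ.filter (fun j : Fin (n + 1) => ρ j = τ)).card =
        (Finset.univ.filter (fun j : Fin (n + 1) => ρ j = μ)).card →
      ∃ L : ℝ, Tendsto (fun κ => κ * ℓ κ i t) atTop (𝓝 L)) ∧
    ((Finset.univ.filter (fun j : Fin (n + 1) => ρ j = τ)).card =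
        (Finset.univ.filter (fun j : Fin (n + 1) => ρ j = μ)).card + 1 →
      ∃ L : ℝ, Tendsto (fun κ => κ ^ 2 * ℓ κ i t) atTop (𝓝 L)) := by
  classical
  set A : Fin (n + 1) → ℝ := fun j => t - x j with hA
  set c : Fin (n + 1) → ℝ := fun j => (τ : ℝ) - (ρ j : ℝ) with hc
  set B : Fin (n + 1) → ℝ := fun j => x i - x j with hB
  set dd : Fin (n + 1) → ℝ := fun j => (μ : ℝ) - (ρ j : ℝ) with hdd
  set f : Fin (n + 1) → ℝ → ℝ := fun j κ => (A j + c j * κ) / (B j + dd j * κ) with hf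
  have hℓeq : ∀ κ, ℓ κ i t = ∏ j ∈ Finset.univ.erase i, f j κ := by
    intro κ
    rw [hℓ]
    refine Finset.prod_congr rfl fun j hj => ?_
    have hxi : x i ∈ Reg μ := by rw [← hiμ]; exact hρ i
    rw [hS κ t τ hτ ht, hS κ (x i) μ hμ hxi, hS κ (x j) (ρ j) (hρd j) (hρ j)]
    simp only [hf, hA, hc, hB, hdd]
    ring_nf
  set e : Fin (n + 1) → ℤ := fun j => if ρ j = μ then 1 else if ρ j = τ then -1 else 0 with he
  set L : Fin (n + 1) → ℝ := fun j =>
    if ρ j = μ then c j / B j else if ρ j = τ then A j / dd j else c j / dd j with hL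
  have hfac : ∀ j ∈ Finset.univ.erase i,
      Tendsto (fun κ : ℝ => κ ^ (-(e j)) * f j κ) atTop (𝓝 (L j)) := by
    intro j hj
    have hji : j ≠ i := Finset.ne_of_mem_erase hj
    have hBj : B j ≠ 0 := sub_ne_zero.mpr fun h => hji (hmono.injective h.symm)
    by_cases h1 : ρ j = μ
    · have hLj : L j = c j / B j := by simp [hL, h1]
      have hdd0 : dd j = 0 := by simp [hdd, h1]
      rw [hLj]
      refine (tendsto_ratlin (A j) 0 (c j) (B j) hBj).congr fun κ => ?_
      have he1 : -(e j) = -1 := by simp [he, h1]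
      rw [he1, hf]
      simp only [hdd0, zero_mul, add_zero]
      rw [zpow_neg, zpow_one, inv_mul_eq_div, div_div, zero_add, mul_comm]
    · have hddj : dd j ≠ 0 := by
        simp only [hdd, sub_ne_zero]
        exact_mod_cast fun h => h1 (Nat.cast_injective h).symm
      by_cases h2 : ρ j = τ
      · have hLj : L j = A j / dd j := by simp [hL, h1, h2, Ne.symm hμτ]
        have hc0 : c j = 0 := by simp [hc, h2]
        rw [hLj]
        refine (tendsto_ratlin 0 (B j) (A j) (dd j) hddj).congr fun κ => ?_
        have he1 : -(e j) = 1 := by simp [he, h1, h2, Ne.symm hμτ]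
        rw [he1, zpow_one, hf]
        simp only [hc0, zero_mul, add_zero, zero_add]
        rw [mul_div_assoc', mul_comm]
      · have hLj : L j = c j / dd j := by simp [hL, h1, h2]
        rw [hLj]
        refine (tendsto_ratlin (A j) (B j) (c j) (dd j) hddj).congr fun κ => ?_
        have he1 : -(e j) = 0 := by simp [he, h1, h2]
        rw [he1, zpow_zero, one_mul, hf]
  set E : ℤ := ∑ j ∈ Finset.univ.erase i, e j with hE
  set P : ℝ := ∏ j ∈ Finset.univ.erase i, L j with hP
  have hg : Tendsto (fun κ : ℝ => κ ^ (-E) * ℓ κ i t) atTop (𝓝 P) := by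
    have hprod : Tendsto (fun κ : ℝ => ∏ j ∈ Finset.univ.erase i, (κ ^ (-(e j)) * f j κ))
        atTop (𝓝 P) := tendsto_finset_prod _ hfac
    refine hprod.congr' ?_
    filter_upwards [eventually_gt_atTop 0] with κ hκ
    have hκ0 : κ ≠ 0 := ne_of_gt hκ
    rw [Finset.prod_mul_distrib, prod_zpow_eq _ _ hκ0, hℓeq κ, Finset.sum_neg_distrib, hE]
  have hEval : E = ((Finset.univ.filter (fun j : Fin (n + 1) => ρ j = μ)).card : ℤ) - 1 -
      ((Finset.univ.filter (fun j : Fin (n + 1) => ρ j = τ)).card : ℤ) := by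
    have hsum_univ : ∑ j : Fin (n + 1), e j =
        ((Finset.univ.filter (fun j : Fin (n + 1) => ρ j = μ)).card : ℤ) -
          ((Finset.univ.filter (fun j : Fin (n + 1) => ρ j = τ)).card : ℤ) := by
      have hee : ∀ j, e j = (if ρ j = μ then (1 : ℤ) else 0) -
          (if ρ j = τ then (1 : ℤ) else 0) := by
        intro j
        by_cases h1 : ρ j = μ
        · have h2 : ¬ ρ j = τ := by rw [h1]; exact hμτ
          simp [he, h1, h2, hμτ]
        · by_cases h2 : ρ j = τ <;> simp [he, h1, h2, hμτ, Ne.symm hμτ]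
      rw [Finset.sum_congr rfl fun j _ => hee j, Finset.sum_sub_distrib]
      simp [Finset.sum_boole]
    have hei : e i = 1 := by simp [he, hiμ]
    have h := Finset.sum_erase_add Finset.univ e (Finset.mem_univ i)
    rw [hsum_univ, hei] at h
    rw [hE]
    linarith
  refine ⟨?_, ?_, ?_⟩
  · intro hle
    have hE1 : E < 0 := by
      rw [hEval]
      have : ((Finset.univ.filter (fun j : Fin (n + 1) => ρ j = μ)).card : ℤ) ≤
          ((Finset.univ.filter (fun j : Fin (n + 1) => ρ j = τ)).card : ℤ) := by
        exact_mod_cast hle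
      linarith
    have h0 : Tendsto (fun κ : ℝ => κ ^ E) atTop (𝓝 0) := tendsto_zpow_atTop_zero hE1
    have hmul := h0.mul hg
    rw [zero_mul] at hmul
    refine hmul.congr' ?_
    filter_upwards [eventually_gt_atTop 0] with κ hκ
    have hκ0 : κ ≠ 0 := ne_of_gt hκ
    rw [← mul_assoc, ← zpow_add₀ hκ0, add_neg_cancel, zpow_zero, one_mul]
  · intro hpm
    have hE2 : -E = 1 := by
      rw [hEval]
      have : ((Finset.univ.filter (fun j : Fin (n + 1) => ρ j = τ)).card : ℤ) =
          ((Finset.univ.filter (fun j : Fin (n + 1) => ρ j = μ)).card : ℤ) := by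
        exact_mod_cast hpm
      linarith
    refine ⟨P, hg.congr fun κ => ?_⟩
    rw [hE2, zpow_one]
  · intro hpm
    have hE3 : -E = 2 := by
      rw [hEval]
      have : ((Finset.univ.filter (fun j : Fin (n + 1) => ρ j = τ)).card : ℤ) =
          ((Finset.univ.filter (fun j : Fin (n + 1) => ρ j = μ)).card : ℤ) + 1 := by
        exact_mod_cast hpm
      linarith
    refine ⟨P, hg.congr fun κ => ?_⟩
    rw [hE3, zpow_two, ← pow_two]
end

section
/- (Theorem 2, residual case) In the multiple-discontinuity setting, let μ ≠ τ in {1,…,d+1}, let x_i ∈ X^μ and x ∈ Ω^τ, and assume |X^τ| = |X^μ| − 1. Then lim_{κ→∞} |ℓ_i^κ(x)| = |r_{i,μ,τ}(x)| · C_{μ,τ}, where r_{i,μ,τ}(x) = ∏_{x_j ∈ X^τ} (x − x_j) · ∏_{x_j ∈ X^μ, j≠i} (x_i − x_j)^{−1} and C_{μ,τ} = ∏_{ν=1, ν≠μ,τ}^{d+1} |(τ−ν)/(μ−ν)|^{|X^ν|}. -/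
open Filter Finset Real Topology

private lemma key_lim (A B C D : ℝ) (hD : D ≠ 0) :
    Tendsto (fun κ : ℝ => (A + B * κ) / (C + D * κ)) atTop (𝓝 (B / D)) := by
  have h0 : Tendsto (fun κ : ℝ => (A / κ + B) / (C / κ + D)) atTop (𝓝 (B / D)) := by
    have hA : Tendsto (fun κ : ℝ => A / κ) atTop (𝓝 0) :=
      tendsto_const_nhds.div_atTop tendsto_id
    have hC : Tendsto (fun κ : ℝ => C / κ) atTop (𝓝 0) :=
      tendsto_const_nhds.div_atTop tendsto_id
    have h1 : Tendsto (fun κ : ℝ => A / κ + B) atTop (𝓝 (0 + B)) :=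
      hA.add tendsto_const_nhds
    have h2 : Tendsto (fun κ : ℝ => C / κ + D) atTop (𝓝 (0 + D)) :=
      hC.add tendsto_const_nhds
    have := h1.div h2 (by simpa using hD)
    rw [zero_add, zero_add] at this
    exact this
  refine h0.congr' ?_
  filter_upwards [eventually_gt_atTop (0:ℝ)] with κ hκ
  have hκ' : κ ≠ 0 := ne_of_gt hκ
  rw [div_add' _ _ _ hκ', div_add' _ _ _ hκ', div_div_div_cancel_right₀ hκ']

theorem stmt_14
    (a b : ℝ) (hab : a < b)
    (d : ℕ) (hd : 2 ≤ d)
    (ξ : ℕ → ℝ) (hξ0 : ξ 0 = a) (hξlast : ξ (d + 1) = b)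
    (hξmono : ∀ k ≤ d, ξ k < ξ (k + 1))
    (Reg : ℕ → Set ℝ)
    (hReg : ∀ τ, Reg τ = if τ = 0 then Set.Icc (ξ 0) (ξ 1) else Set.Ioc (ξ τ) (ξ (τ + 1)))
    (n : ℕ) (x : Fin (n + 1) → ℝ) (hmono : StrictMono x)
    (hxΩ : ∀ i, x i ∈ Set.Icc a b)
    (ρ : Fin (n + 1) → ℕ) (hρd : ∀ j, ρ j ≤ d) (hρ : ∀ j, x j ∈ Reg (ρ j))
    (hne : ∀ τ ≤ d, ∃ j, ρ j = τ)
    (S : ℝ → ℝ → ℝ)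
    (hS : ∀ κ t τ, τ ≤ d → t ∈ Reg τ → S κ t = t + (τ : ℝ) * κ)
    (ℓ : ℝ → Fin (n + 1) → ℝ → ℝ)
    (hℓ : ∀ κ i t, ℓ κ i t =
      ∏ j ∈ Finset.univ.erase i, (S κ t - S κ (x j)) / (S κ (x i) - S κ (x j)))
    (μ τ : ℕ) (hμ : μ ≤ d) (hτ : τ ≤ d) (hμτ : μ ≠ τ)
    (i : Fin (n + 1)) (hiμ : ρ i = μ)
    (t : ℝ) (ht : t ∈ Reg τ)
    (hcard : (Finset.univ.filter (fun j : Fin (n + 1) => ρ j = μ)).card =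
      (Finset.univ.filter (fun j : Fin (n + 1) => ρ j = τ)).card + 1) :
    Tendsto (fun κ => |ℓ κ i t|) atTop
      (𝓝 (|(∏ j ∈ Finset.univ.filter (fun j : Fin (n + 1) => ρ j = τ), (t - x j)) *
            ∏ j ∈ (Finset.univ.filter (fun j : Fin (n + 1) => ρ j = μ)).erase i,
              (x i - x j)⁻¹| *
        ∏ ν ∈ ((Finset.range (d + 1)).erase μ).erase τ,
          |((τ : ℝ) - (ν : ℝ)) / ((μ : ℝ) - (ν : ℝ))| ^
            (Finset.univ.filter (fun j : Fin (n + 1) => ρ j = ν)).card)) := by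
  classical
  have hμτR : (μ : ℝ) ≠ (τ : ℝ) := by exact_mod_cast hμτ
  set T : Finset (Fin (n + 1)) := Finset.univ.filter (fun j => ρ j = τ) with hTdef
  set Mf : Finset (Fin (n + 1)) := (Finset.univ.filter (fun j => ρ j = μ)).erase i with hMdef
  set O : Finset (Fin (n + 1)) := Finset.univ.filter (fun j => ρ j ≠ μ ∧ ρ j ≠ τ) with hOdef
  set F : ℝ → Fin (n + 1) → ℝ := fun κ j =>
    (t + (τ : ℝ) * κ - (x j + (ρ j : ℝ) * κ)) /
      (x i + (μ : ℝ) * κ - (x j + (ρ j : ℝ) * κ)) with hFdef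
  have hSx : ∀ κ (j : Fin (n + 1)), S κ (x j) = x j + (ρ j : ℝ) * κ :=
    fun κ j => hS κ (x j) (ρ j) (hρd j) (hρ j)
  have hSi : ∀ κ, S κ (x i) = x i + (μ : ℝ) * κ := by
    intro κ; rw [hSx κ i, hiμ]
  have hℓF : ∀ κ, ℓ κ i t = ∏ j ∈ Finset.univ.erase i, F κ j := by
    intro κ
    rw [hℓ]
    refine Finset.prod_congr rfl fun j _ => ?_
    rw [hS κ t τ hτ ht, hSx, hSi]
  -- cardinalities
  have hiM : i ∈ Finset.univ.filter (fun j : Fin (n + 1) => ρ j = μ) := by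
    simp [hiμ]
  have hTM : T.card = Mf.card := by
    rw [hMdef, Finset.card_erase_of_mem hiM, hcard]
    rfl
  -- partition of univ.erase i
  have hd1 : Disjoint T Mf := by
    rw [Finset.disjoint_left]
    intro j hj hj'
    rw [hTdef, Finset.mem_filter] at hj
    rw [hMdef, Finset.mem_erase, Finset.mem_filter] at hj'
    exact hμτ (hj'.2.2 ▸ hj.2 ▸ rfl)
  have hd2 : Disjoint (T ∪ Mf) O := by
    rw [Finset.disjoint_left]
    intro j hj hj'
    rw [hOdef, Finset.mem_filter] at hj'
    rcases Finset.mem_union.mp hj with h | h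
    · rw [hTdef, Finset.mem_filter] at h
      exact hj'.2.2 h.2
    · rw [hMdef, Finset.mem_erase, Finset.mem_filter] at h
      exact hj'.2.1 h.2.2
  have hpart : Finset.univ.erase i = (T ∪ Mf) ∪ O := by
    ext j
    rw [hTdef, hMdef, hOdef]
    simp only [Finset.mem_erase, Finset.mem_union, Finset.mem_filter, Finset.mem_univ,
      true_and, and_true]
    constructor
    · intro hj
      by_cases h1 : ρ j = τ
      · exact Or.inl (Or.inl h1)
      · by_cases h2 : ρ j = μ
        · exact Or.inl (Or.inr ⟨hj, h2⟩)
        · exact Or.inr ⟨h2, h1⟩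
    · rintro ((h | h) | h)
      · intro hji; rw [hji, hiμ] at h; exact hμτ h
      · exact h.1
      · intro hji; rw [hji, hiμ] at h; exact h.1 rfl
  have hsplit : ∀ f : Fin (n + 1) → ℝ, ∏ j ∈ Finset.univ.erase i, f j =
      ((∏ j ∈ T, f j) * ∏ j ∈ Mf, f j) * ∏ j ∈ O, f j := by
    intro f
    rw [hpart, Finset.prod_union hd2, Finset.prod_union hd1]
  -- the bijection between T and Mf
  let e : {j // j ∈ T} ≃ {j // j ∈ Mf} := Finset.equivOfCardEq hTM
  have hMprod : ∀ f : Fin (n + 1) → ℝ,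
      ∏ j ∈ Mf, f j = ∏ j : {j // j ∈ T}, f ((e j : Fin (n + 1))) := by
    intro f
    rw [← Finset.prod_coe_sort Mf f]
    exact (Equiv.prod_comp e (fun k : {j // j ∈ Mf} => f k)).symm
  -- basic facts about members
  have hjτ : ∀ j : {j // j ∈ T}, ρ (j : Fin (n + 1)) = τ :=
    fun j => (Finset.mem_filter.mp j.2).2
  have hkμ : ∀ k : {j // j ∈ Mf}, ρ (k : Fin (n + 1)) = μ :=
    fun k => (Finset.mem_filter.mp (Finset.mem_erase.mp k.2).2).2
  have hki : ∀ k : {j // j ∈ Mf}, (k : Fin (n + 1)) ≠ i :=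
    fun k => (Finset.mem_erase.mp k.2).1
  have hxik : ∀ k : {j // j ∈ Mf}, x i - x (k : Fin (n + 1)) ≠ 0 := by
    intro k
    refine sub_ne_zero.mpr fun h => hki k (hmono.injective h).symm
  -- limits of the paired factors
  have hpair : ∀ j : {j // j ∈ T},
      Tendsto (fun κ => F κ (j : Fin (n + 1)) * F κ ((e j : Fin (n + 1)))) atTop
        (𝓝 (-(t - x (j : Fin (n + 1))) / (x i - x ((e j : Fin (n + 1)))))) := by
    intro j
    have hμτ0 : (μ : ℝ) - (τ : ℝ) ≠ 0 := sub_ne_zero.mpr hμτR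
    have hD : ((μ : ℝ) - (τ : ℝ)) * (x i - x ((e j : Fin (n + 1)))) ≠ 0 :=
      mul_ne_zero hμτ0 (hxik (e j))
    have hk := key_lim
      ((t - x (j : Fin (n + 1))) * (t - x ((e j : Fin (n + 1)))))
      ((t - x (j : Fin (n + 1))) * ((τ : ℝ) - (μ : ℝ)))
      ((x i - x (j : Fin (n + 1))) * (x i - x ((e j : Fin (n + 1)))))
      (((μ : ℝ) - (τ : ℝ)) * (x i - x ((e j : Fin (n + 1))))) hD
    have heq : (fun κ : ℝ =>
        ((t - x (j : Fin (n + 1))) * (t - x ((e j : Fin (n + 1)))) +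
          (t - x (j : Fin (n + 1))) * ((τ : ℝ) - (μ : ℝ)) * κ) /
        ((x i - x (j : Fin (n + 1))) * (x i - x ((e j : Fin (n + 1)))) +
          ((μ : ℝ) - (τ : ℝ)) * (x i - x ((e j : Fin (n + 1)))) * κ))
        = fun κ => F κ (j : Fin (n + 1)) * F κ ((e j : Fin (n + 1))) := by
      funext κ
      rw [hFdef]
      simp only []
      rw [div_mul_div_comm]
      congr 1 <;> rw [hjτ j, hkμ (e j)] <;> ring
    rw [heq] at hk
    have hval : (t - x (j : Fin (n + 1))) * ((τ : ℝ) - (μ : ℝ)) /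
        (((μ : ℝ) - (τ : ℝ)) * (x i - x ((e j : Fin (n + 1))))) =
        -(t - x (j : Fin (n + 1))) / (x i - x ((e j : Fin (n + 1)))) := by
      rw [show (t - x (j : Fin (n + 1))) * ((τ : ℝ) - (μ : ℝ)) =
        -(t - x (j : Fin (n + 1))) * ((μ : ℝ) - (τ : ℝ)) by ring,
        mul_comm ((μ : ℝ) - (τ : ℝ)) (x i - x ((e j : Fin (n + 1)))),
        mul_div_mul_right _ _ hμτ0]
    rwa [hval] at hk
  -- limits of the residual factors
  have hOlim : ∀ j ∈ O, Tendsto (fun κ => F κ j) atTop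
      (𝓝 (((τ : ℝ) - (ρ j : ℝ)) / ((μ : ℝ) - (ρ j : ℝ)))) := by
    intro j hj
    rw [hOdef, Finset.mem_filter] at hj
    have hD : (μ : ℝ) - (ρ j : ℝ) ≠ 0 := by
      refine sub_ne_zero.mpr ?_
      have : μ ≠ ρ j := fun h => hj.2.1 h.symm
      exact_mod_cast this
    have hk := key_lim (t - x j) ((τ : ℝ) - (ρ j : ℝ)) (x i - x j) ((μ : ℝ) - (ρ j : ℝ)) hD
    refine hk.congr fun κ => ?_
    rw [hFdef]
    simp only []
    congr 1 <;> ring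
  -- combined limit
  have h1 : Tendsto (fun κ => ∏ j : {j // j ∈ T},
      |F κ (j : Fin (n + 1)) * F κ ((e j : Fin (n + 1)))|) atTop
      (𝓝 (∏ j : {j // j ∈ T},
        |(-(t - x (j : Fin (n + 1)))) / (x i - x ((e j : Fin (n + 1))))|)) :=
    tendsto_finset_prod _ fun j _ => (hpair j).abs
  have h2 : Tendsto (fun κ => ∏ j ∈ O, |F κ j|) atTop
      (𝓝 (∏ j ∈ O, |((τ : ℝ) - (ρ j : ℝ)) / ((μ : ℝ) - (ρ j : ℝ))|)) :=
    tendsto_finset_prod _ fun j hj => (hOlim j hj).abs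
  have hmain := h1.mul h2
  have habs : ∀ κ, |ℓ κ i t| =
      (∏ j : {j // j ∈ T}, |F κ (j : Fin (n + 1)) * F κ ((e j : Fin (n + 1)))|) *
        ∏ j ∈ O, |F κ j| := by
    intro κ
    rw [hℓF, hsplit (F κ), abs_mul, abs_mul, Finset.abs_prod, Finset.abs_prod,
      Finset.abs_prod, hMprod (fun j => |F κ j|),
      ← Finset.prod_coe_sort T (fun j => |F κ j|), ← Finset.prod_mul_distrib]
    congr 1
    exact Finset.prod_congr rfl fun j _ => (abs_mul _ _).symm
  have hlim : Tendsto (fun κ => |ℓ κ i t|) atTop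
      (𝓝 ((∏ j : {j // j ∈ T},
        |(-(t - x (j : Fin (n + 1)))) / (x i - x ((e j : Fin (n + 1))))|) *
        ∏ j ∈ O, |((τ : ℝ) - (ρ j : ℝ)) / ((μ : ℝ) - (ρ j : ℝ))|)) :=
    hmain.congr fun κ => (habs κ).symm
  -- identify the limit value
  have hv1 : (∏ j : {j // j ∈ T},
      |(-(t - x (j : Fin (n + 1)))) / (x i - x ((e j : Fin (n + 1))))|) =
      |(∏ j ∈ T, (t - x j)) * ∏ j ∈ Mf, (x i - x j)⁻¹| := by
    rw [abs_mul, Finset.abs_prod, Finset.abs_prod, hMprod (fun j => |(x i - x j)⁻¹|),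
      ← Finset.prod_coe_sort T (fun j => |t - x j|), ← Finset.prod_mul_distrib]
    refine Finset.prod_congr rfl fun j _ => ?_
    rw [abs_div, abs_neg, abs_inv, div_eq_mul_inv]
  have hv2 : (∏ j ∈ O, |((τ : ℝ) - (ρ j : ℝ)) / ((μ : ℝ) - (ρ j : ℝ))|) =
      ∏ ν ∈ ((Finset.range (d + 1)).erase μ).erase τ,
        |((τ : ℝ) - (ν : ℝ)) / ((μ : ℝ) - (ν : ℝ))| ^
          (Finset.univ.filter (fun j : Fin (n + 1) => ρ j = ν)).card := by
    have hmaps : ∀ j ∈ O, ρ j ∈ ((Finset.range (d + 1)).erase μ).erase τ := by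
      intro j hj
      rw [hOdef, Finset.mem_filter] at hj
      rw [Finset.mem_erase, Finset.mem_erase, Finset.mem_range]
      exact ⟨hj.2.2, hj.2.1, Nat.lt_succ_of_le (hρd j)⟩
    rw [← Finset.prod_fiberwise_of_maps_to hmaps
      (fun j => |((τ : ℝ) - (ρ j : ℝ)) / ((μ : ℝ) - (ρ j : ℝ))|)]
    refine Finset.prod_congr rfl fun ν hν => ?_
    rw [Finset.mem_erase, Finset.mem_erase] at hν
    have hfil : O.filter (fun j => ρ j = ν) =
        Finset.univ.filter (fun j : Fin (n + 1) => ρ j = ν) := by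
      rw [hOdef, Finset.filter_filter]
      refine Finset.filter_congr fun j _ => ?_
      constructor
      · exact fun h => h.2
      · intro h
        exact ⟨⟨fun h' => hν.2.1 (h' ▸ h.symm), fun h' => hν.1 (h' ▸ h.symm)⟩, h⟩
    calc ∏ j ∈ O.filter (fun j => ρ j = ν),
          |((τ : ℝ) - (ρ j : ℝ)) / ((μ : ℝ) - (ρ j : ℝ))|
        = ∏ _j ∈ O.filter (fun j => ρ j = ν),
          |((τ : ℝ) - (ν : ℝ)) / ((μ : ℝ) - (ν : ℝ))| := by
          refine Finset.prod_congr rfl fun j hj => ?_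
          rw [Finset.mem_filter] at hj
          rw [hj.2]
      _ = _ := by rw [Finset.prod_const, hfil]
  rw [hv1, hv2] at hlim
  exact hlim
end

section
/- (Corollary, equal sizes) In the multiple-discontinuity setting, if |X^ν| = |X^τ| for all ν, τ ∈ {1,…,d+1}, then the mapped Lebesgue constant converges to the maximum of the local classical Lebesgue constants: lim_{κ→∞} Λ^κ = max{ Λ(X¹,Ω¹), …, Λ(X^{d+1},Ω^{d+1}) }. -/
open Filter Finset Real Topology

lemma real_sup2_le {ι : Sort*} {p : ι → Prop} {f : ι → ℝ} {a : ℝ}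
    (h : ∀ i, p i → f i ≤ a) (ha : 0 ≤ a) : ⨆ i, ⨆ (_ : p i), f i ≤ a :=
  Real.iSup_le (fun i => Real.iSup_le (fun hi => h i hi) ha) ha

lemma real_le_sup2 {ι : Sort*} {p : ι → Prop} {f : ι → ℝ} {a : ℝ}
    (h : ∀ i, p i → f i ≤ a) (i : ι) (hi : p i) : f i ≤ ⨆ j, ⨆ (_ : p j), f j := by
  have hb : BddAbove (Set.range fun j => ⨆ (_ : p j), f j) := by
    refine ⟨max a 0, ?_⟩
    rintro y ⟨j, rfl⟩
    exact Real.iSup_le (fun hj => le_max_of_le_left (h j hj)) (le_max_right _ _)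
  have : (⨆ (_ : p i), f i) = f i := ciSup_pos (f := fun _ => f i) hi
  rw [← this]
  exact le_ciSup hb i

lemma real_sup2_nonneg {ι : Sort*} {p : ι → Prop} {f : ι → ℝ}
    (h : ∀ i, p i → 0 ≤ f i) : 0 ≤ ⨆ i, ⨆ (_ : p i), f i :=
  Real.iSup_nonneg fun i => Real.iSup_nonneg fun hi => h i hi

lemma prod_le_pow_of_le {ι : Type*} {s : Finset ι} {f : ι → ℝ} {R : ℝ} (hR : 0 ≤ R)
    (h0 : ∀ j ∈ s, 0 ≤ f j) (h1 : ∀ j ∈ s, f j ≤ R) : ∏ j ∈ s, f j ≤ R ^ s.card := by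
  induction s using Finset.cons_induction with
  | empty => simp
  | cons a s ha ih =>
    rw [Finset.prod_cons, Finset.card_cons, pow_succ']
    refine mul_le_mul (h1 a (Finset.mem_cons_self a s)) ?_ ?_ hR
    · exact ih (fun j hj => h0 j (Finset.mem_cons_of_mem hj))
        (fun j hj => h1 j (Finset.mem_cons_of_mem hj))
    · exact Finset.prod_nonneg (fun j hj => h0 j (Finset.mem_cons_of_mem hj))

lemma prod_sub_one_le {ι : Type*} {s : Finset ι} {f : ι → ℝ} {δ : ℝ} (hδ : 0 ≤ δ)
    (h : ∀ j ∈ s, |f j - 1| ≤ δ) : |∏ j ∈ s, f j - 1| ≤ (1 + δ) ^ s.card - 1 := by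
  induction s using Finset.cons_induction with
  | empty => simp
  | cons a s ha ih =>
    have hha := h a (Finset.mem_cons_self a s)
    have hfa : |f a| ≤ 1 + δ := by
      have := abs_abs_sub_abs_le_abs_sub (f a) 1
      simp only [abs_one] at this
      have h2 : |f a| - 1 ≤ δ := le_trans (le_trans (le_abs_self _) this) hha
      linarith
    have hih := ih (fun j hj => h j (Finset.mem_cons_of_mem hj))
    rw [Finset.prod_cons, Finset.card_cons]
    calc |f a * ∏ j ∈ s, f j - 1|
        = |f a * ((∏ j ∈ s, f j) - 1) + (f a - 1)| := by congr 1; ring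
      _ ≤ |f a * ((∏ j ∈ s, f j) - 1)| + |f a - 1| := abs_add_le _ _
      _ = |f a| * |(∏ j ∈ s, f j) - 1| + |f a - 1| := by rw [abs_mul]
      _ ≤ (1 + δ) * ((1 + δ) ^ s.card - 1) + δ := by
          refine add_le_add (mul_le_mul hfa hih (abs_nonneg _) (by linarith)) hha
      _ = (1 + δ) ^ (s.card + 1) - 1 := by rw [pow_succ]; ring

theorem stmt_15
    (a b : ℝ) (hab : a < b)
    (d : ℕ) (hd : 2 ≤ d)
    (ξ : ℕ → ℝ) (hξ0 : ξ 0 = a) (hξlast : ξ (d + 1) = b)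
    (hξmono : ∀ k ≤ d, ξ k < ξ (k + 1))
    (Reg : ℕ → Set ℝ)
    (hReg : ∀ τ, Reg τ = if τ = 0 then Set.Icc (ξ 0) (ξ 1) else Set.Ioc (ξ τ) (ξ (τ + 1)))
    (n : ℕ) (x : Fin (n + 1) → ℝ) (hmono : StrictMono x)
    (hxΩ : ∀ i, x i ∈ Set.Icc a b)
    (ρ : Fin (n + 1) → ℕ) (hρd : ∀ j, ρ j ≤ d) (hρ : ∀ j, x j ∈ Reg (ρ j))
    (hne : ∀ τ ≤ d, ∃ j, ρ j = τ)
    (S : ℝ → ℝ → ℝ)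
    (hS : ∀ κ t τ, τ ≤ d → t ∈ Reg τ → S κ t = t + (τ : ℝ) * κ)
    (ℓ : ℝ → Fin (n + 1) → ℝ → ℝ)
    (hℓ : ∀ κ i t, ℓ κ i t =
      ∏ j ∈ Finset.univ.erase i, (S κ t - S κ (x j)) / (S κ (x i) - S κ (x j)))
    (hsize : ∀ ν ≤ d, ∀ τ ≤ d,
      (Finset.univ.filter (fun j : Fin (n + 1) => ρ j = ν)).card =
        (Finset.univ.filter (fun j : Fin (n + 1) => ρ j = τ)).card) :
    Tendsto (fun κ => ⨆ t ∈ Set.Icc a b, ∑ i : Fin (n + 1), |ℓ κ i t|) atTop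
      (𝓝 (⨆ τ ∈ Finset.range (d + 1), ⨆ t ∈ Reg τ,
        ∑ i ∈ Finset.univ.filter (fun j : Fin (n + 1) => ρ j = τ),
          ∏ j ∈ (Finset.univ.filter (fun j : Fin (n + 1) => ρ j = τ)).erase i,
            |t - x j| / |x i - x j|)) := by
  classical
  set M : ℝ := b - a with hMdef
  have hM : 0 < M := sub_pos.mpr hab
  -- minimum node gap
  obtain ⟨j0, hj0⟩ := hne 0 (by omega)
  obtain ⟨j1, hj1⟩ := hne 1 (by omega)
  have hj01 : j0 ≠ j1 := by intro h; rw [h, hj1] at hj0; omega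
  set Pr : Finset (Fin (n + 1) × Fin (n + 1)) :=
    Finset.univ.filter (fun p => p.1 ≠ p.2) with hPrdef
  have hPr : Pr.Nonempty := ⟨(j0, j1), by rw [hPrdef]; exact Finset.mem_filter.mpr ⟨Finset.mem_univ _, hj01⟩⟩
  set δ : ℝ := Pr.inf' hPr (fun p => |x p.1 - x p.2|) with hδdef
  have hδpos : 0 < δ := by
    rw [hδdef, Finset.lt_inf'_iff]
    intro p hp
    have hp' : p.1 ≠ p.2 := (Finset.mem_filter.mp hp).2
    exact abs_pos.mpr (sub_ne_zero.mpr (fun h => hp' (hmono.injective h)))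
  have hδle : ∀ i j : Fin (n + 1), i ≠ j → δ ≤ |x i - x j| := by
    intro i j hij
    exact Finset.inf'_le _ (show (i, j) ∈ Pr by rw [hPrdef]; exact Finset.mem_filter.mpr ⟨Finset.mem_univ _, hij⟩)
  -- distance bound
  have hsub : ∀ t ∈ Set.Icc a b, ∀ s ∈ Set.Icc a b, |t - s| ≤ M := by
    intro t ht s hs
    rw [abs_le]
    constructor <;> [skip; skip] <;>
      · simp only [hMdef]; obtain ⟨h1, h2⟩ := ht; obtain ⟨h3, h4⟩ := hs; linarith
  -- monotone ξ
  have hmono2 : ∀ l, l ≤ d + 1 → ∀ k, k ≤ l → ξ k ≤ ξ l := by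
    intro l
    induction l with
    | zero => intro _ k hk; interval_cases k; exact le_rfl
    | succ m ih =>
      intro hl k hk
      rcases Nat.lt_or_ge k (m + 1) with h | h
      · exact le_trans (ih (by omega) k (by omega)) (le_of_lt (hξmono m (by omega)))
      · have : k = m + 1 := by omega
        rw [this]
  have hRegSub : ∀ τ, τ ≤ d → Reg τ ⊆ Set.Icc a b := by
    intro τ hτ t ht
    rw [hReg] at ht
    by_cases h0 : τ = 0
    · rw [if_pos h0] at ht
      refine ⟨hξ0 ▸ ht.1, le_trans ht.2 ?_⟩
      rw [← hξlast]; exact hmono2 (d + 1) le_rfl 1 (by omega)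
    · rw [if_neg h0] at ht
      constructor
      · have h1 : ξ 0 ≤ ξ τ := hmono2 τ (by omega) 0 (by omega)
        rw [← hξ0]; exact le_trans h1 (le_of_lt ht.1)
      · rw [← hξlast]; exact le_trans ht.2 (hmono2 (d + 1) le_rfl (τ + 1) (by omega))
  have hcover : ∀ t ∈ Set.Icc a b, ∃ τ, τ ≤ d ∧ t ∈ Reg τ := by
    intro t ht
    have key : ∀ m, m ≤ d → t ≤ ξ (m + 1) → ∃ τ, τ ≤ m ∧ t ∈ Reg τ := by
      intro m
      induction m with
      | zero =>
        intro _ h1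
        exact ⟨0, le_rfl, by rw [hReg]; simp only [if_pos rfl]; exact ⟨hξ0 ▸ ht.1, h1⟩⟩
      | succ m ih =>
        intro hm h1
        by_cases h2 : t ≤ ξ (m + 1)
        · obtain ⟨τ, hτ, hmem⟩ := ih (by omega) h2
          exact ⟨τ, by omega, hmem⟩
        · refine ⟨m + 1, le_rfl, ?_⟩
          rw [hReg, if_neg (by omega)]
          exact ⟨lt_of_not_ge h2, h1⟩
    exact key d le_rfl (hξlast ▸ ht.2)
  -- integer-cast facts
  have hz1 : ∀ ν μ : ℕ, ν ≠ μ → (1 : ℝ) ≤ |(ν : ℝ) - μ| := by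
    intro ν μ hnm
    have h1 : ((ν : ℝ) - μ) = (((ν : ℤ) - μ : ℤ) : ℝ) := by push_cast; ring
    rw [h1, ← Int.cast_abs]
    have h2 : (1 : ℤ) ≤ |(ν : ℤ) - μ| := by
      refine Int.one_le_abs (sub_ne_zero.mpr ?_)
      exact_mod_cast hnm
    exact_mod_cast h2
  have hzd : ∀ ν μ : ℕ, ν ≤ d → μ ≤ d → |(ν : ℝ) - μ| ≤ d := by
    intro ν μ h1 h2
    have c1 : (ν : ℝ) ≤ d := Nat.cast_le.mpr h1
    have c2 : (μ : ℝ) ≤ d := Nat.cast_le.mpr h2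
    have c3 : (0 : ℝ) ≤ ν := Nat.cast_nonneg _
    have c4 : (0 : ℝ) ≤ μ := Nat.cast_nonneg _
    rw [abs_le]; constructor <;> linarith
  -- abbreviations
  let F : ℝ → ℝ → ℝ := fun κ t => ∑ i : Fin (n + 1), |ℓ κ i t|
  let L : ℕ → ℝ → ℝ := fun τ t =>
    ∑ i ∈ Finset.univ.filter (fun j : Fin (n + 1) => ρ j = τ),
      ∏ j ∈ (Finset.univ.filter (fun j : Fin (n + 1) => ρ j = τ)).erase i,
        |t - x j| / |x i - x j|
  show Tendsto (fun κ => ⨆ t ∈ Set.Icc a b, F κ t) atTop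
    (𝓝 (⨆ τ ∈ Finset.range (d + 1), ⨆ t ∈ Reg τ, L τ t))
  have hF0 : ∀ κ t, 0 ≤ F κ t := fun κ t => Finset.sum_nonneg fun i _ => abs_nonneg _
  have hL0 : ∀ τ t, 0 ≤ L τ t := fun τ t =>
    Finset.sum_nonneg fun i _ => Finset.prod_nonneg fun j _ =>
      div_nonneg (abs_nonneg _) (abs_nonneg _)
  -- constants
  set R : ℝ := max 1 (M / δ) with hRdef
  have hR1 : (1 : ℝ) ≤ R := le_max_left _ _
  have hR0 : (0 : ℝ) ≤ R := le_trans zero_le_one hR1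
  have hRb : ∀ t ∈ Set.Icc a b, ∀ i j : Fin (n + 1), i ≠ j → |t - x j| / |x i - x j| ≤ R := by
    intro t ht i j hij
    refine le_trans ?_ (le_max_right 1 (M / δ))
    exact div_le_div₀ hM.le (hsub t ht (x j) (hxΩ j)) hδpos (hδle i j hij)
  set K : ℝ := (n + 1 : ℝ) * R ^ n with hKdef
  have hK0 : 0 ≤ K := mul_nonneg (by positivity) (pow_nonneg hR0 n)
  have hcard_erase_le : ∀ (i : Fin (n + 1)) (s : Finset (Fin (n + 1))),
      (s.erase i).card ≤ n := by
    intro i s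
    have h1 : (s.erase i).card ≤ (Finset.univ.erase i).card :=
      Finset.card_le_card (Finset.erase_subset_erase i (Finset.subset_univ s))
    have h2 : (Finset.univ.erase i).card = n := by
      rw [Finset.card_erase_of_mem (Finset.mem_univ i)]
      simp
    omega
  have hLK : ∀ τ, τ ≤ d → ∀ t ∈ Set.Icc a b, L τ t ≤ K := by
    intro τ hτ t ht
    have hterm : ∀ i ∈ Finset.univ.filter (fun j : Fin (n + 1) => ρ j = τ),
        (∏ j ∈ (Finset.univ.filter (fun j : Fin (n + 1) => ρ j = τ)).erase i,
          |t - x j| / |x i - x j|) ≤ R ^ n := by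
      intro i hi
      refine le_trans (prod_le_pow_of_le hR0
        (fun j hj => div_nonneg (abs_nonneg _) (abs_nonneg _))
        (fun j hj => hRb t ht i j (Ne.symm (Finset.mem_erase.mp hj).1))) ?_
      exact pow_le_pow_right₀ hR1 (hcard_erase_le i _)
    calc L τ t ≤ ∑ _i ∈ Finset.univ.filter (fun j : Fin (n + 1) => ρ j = τ), R ^ n :=
          Finset.sum_le_sum hterm
      _ = ((Finset.univ.filter (fun j : Fin (n + 1) => ρ j = τ)).card : ℝ) * R ^ n := by
          rw [Finset.sum_const, nsmul_eq_mul]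
      _ ≤ K := by
          rw [hKdef]
          refine mul_le_mul_of_nonneg_right ?_ (pow_nonneg hR0 n)
          have := Finset.card_filter_le Finset.univ (fun j : Fin (n + 1) => ρ j = τ)
          simp only [Finset.card_univ, Fintype.card_fin] at this
          exact_mod_cast this
  -- error functions
  let B1 : ℝ → ℝ := fun κ => M / (κ - M)
  let B3 : ℝ → ℝ := fun κ => (M + d * κ) / (κ - M)
  let g : ℝ → ℝ := fun κ =>
    B1 κ * max 1 (B1 κ * ((M + d * κ) / δ)) ^ (n + 1) * max 1 (B3 κ) ^ (n + 1)
  let h : ℝ → ℝ := fun κ => R ^ n * ((1 + B1 κ) ^ (n + 1) - 1)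
  let e : ℝ → ℝ := fun κ => (n + 1 : ℝ) * (g κ + h κ)
  have hκsub : Tendsto (fun κ : ℝ => κ - M) atTop atTop := by
    simpa [sub_eq_add_neg] using tendsto_atTop_add_const_right atTop (-M) tendsto_id
  have hB1t : Tendsto B1 atTop (𝓝 0) := Tendsto.div_atTop tendsto_const_nhds hκsub
  have hB3t : Tendsto B3 atTop (𝓝 (d : ℝ)) := by
    have h1 : Tendsto (fun κ : ℝ => (d : ℝ) + (M * (1 + d)) / (κ - M)) atTop (𝓝 ((d : ℝ) + 0)) :=
      tendsto_const_nhds.add (Tendsto.div_atTop tendsto_const_nhds hκsub)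
    rw [add_zero] at h1
    refine h1.congr' ?_
    filter_upwards [eventually_gt_atTop M] with κ hκ
    have hne' : κ - M ≠ 0 := ne_of_gt (sub_pos.mpr hκ)
    show (d : ℝ) + M * (1 + d) / (κ - M) = (M + d * κ) / (κ - M)
    field_simp
    ring
  have hpairt : Tendsto (fun κ => B1 κ * ((M + d * κ) / δ)) atTop (𝓝 ((M / δ) * d)) := by
    have h1 := hB3t.const_mul (M / δ)
    refine h1.congr (fun κ => ?_)
    show M / δ * ((M + d * κ) / (κ - M)) = M / (κ - M) * ((M + d * κ) / δ)
    ring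
  have hgt : Tendsto g atTop (𝓝 0) := by
    have hm1 : Tendsto (fun κ => max 1 (B1 κ * ((M + d * κ) / δ))) atTop
        (𝓝 (max 1 (M / δ * d))) := (tendsto_const_nhds (x := (1:ℝ))).max hpairt
    have hm2 : Tendsto (fun κ => max 1 (B3 κ)) atTop (𝓝 (max 1 (d : ℝ))) :=
      (tendsto_const_nhds (x := (1:ℝ))).max hB3t
    have h1 := (hB1t.mul (hm1.pow (n + 1))).mul (hm2.pow (n + 1))
    simpa using h1
  have hht : Tendsto h atTop (𝓝 0) := by
    have h1 := ((((tendsto_const_nhds (x := (1:ℝ))).add hB1t).pow (n + 1)).sub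
      (tendsto_const_nhds (x := (1 : ℝ)))).const_mul (R ^ n)
    simpa using h1
  have het : Tendsto e atTop (𝓝 0) := by
    have h1 := (hgt.add hht).const_mul ((n + 1 : ℝ))
    simpa using h1
  have hg0 : ∀ κ, 2 * M + 1 ≤ κ → 0 ≤ g κ := by
    intro κ hκ
    have hκM : 0 < κ - M := by linarith
    have : 0 ≤ B1 κ := div_nonneg hM.le hκM.le
    have h2 : (0:ℝ) ≤ max 1 (B1 κ * ((M + d * κ) / δ)) := le_trans zero_le_one (le_max_left _ _)
    have h3 : (0:ℝ) ≤ max 1 (B3 κ) := le_trans zero_le_one (le_max_left _ _)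
    exact mul_nonneg (mul_nonneg this (pow_nonneg h2 _)) (pow_nonneg h3 _)
  have hh0 : ∀ κ, 2 * M + 1 ≤ κ → 0 ≤ h κ := by
    intro κ hκ
    have hκM : 0 < κ - M := by linarith
    have hb1 : 0 ≤ B1 κ := div_nonneg hM.le hκM.le
    have h1 : (1:ℝ) ≤ (1 + B1 κ) ^ (n + 1) := one_le_pow₀ (by linarith)
    exact mul_nonneg (pow_nonneg hR0 n) (by linarith)
  have he0 : ∀ κ, 2 * M + 1 ≤ κ → 0 ≤ e κ := by
    intro κ hκ
    exact mul_nonneg (by positivity) (add_nonneg (hg0 κ hκ) (hh0 κ hκ))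
  have hcard_le : ∀ s : Finset (Fin (n + 1)), s.card ≤ n + 1 := fun s => by
    have := Finset.card_le_univ s
    simpa using this
  -- master estimate
  have hmaster : ∀ κ, 2 * M + 1 ≤ κ → ∀ τ, τ ≤ d → ∀ t, t ∈ Reg τ → |F κ t - L τ t| ≤ e κ := by
    intro κ hκ τ hτ t ht
    have hκM : 0 < κ - M := by linarith
    have hκ0 : 0 < κ := by linarith
    have hB1nn : 0 ≤ B1 κ := div_nonneg hM.le hκM.le
    have htI : t ∈ Set.Icc a b := hRegSub τ hτ ht
    have hSt : S κ t = t + τ * κ := hS κ t τ hτ ht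
    have hSx : ∀ j, S κ (x j) = x j + ρ j * κ := fun j => hS κ (x j) (ρ j) (hρd j) (hρ j)
    have hnum : ∀ j, S κ t - S κ (x j) = (t - x j) + ((τ : ℝ) - ρ j) * κ := by
      intro j; rw [hSt, hSx]; ring
    have hub : ∀ u m : ℝ, |u| ≤ M → |m| ≤ d → |u + m * κ| ≤ M + d * κ := by
      intro u m h1 h2
      calc |u + m * κ| ≤ |u| + |m * κ| := abs_add_le _ _
        _ = |u| + |m| * κ := by rw [abs_mul, abs_of_pos hκ0]
        _ ≤ M + d * κ := add_le_add h1 (mul_le_mul_of_nonneg_right h2 hκ0.le)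
    have hlb : ∀ u m : ℝ, |u| ≤ M → 1 ≤ |m| → κ - M ≤ |u + m * κ| := by
      intro u m h1 h2
      have h3 : |m * κ| = |m| * κ := by rw [abs_mul, abs_of_pos hκ0]
      have h4 : |m * κ| ≤ |u + m * κ| + |u| := by
        calc |m * κ| = |(u + m * κ) - u| := by congr 1; ring
          _ ≤ |u + m * κ| + |u| := abs_sub _ _
      have h5 : κ ≤ |m| * κ := le_mul_of_one_le_left hκ0.le h2
      linarith
    -- (E1) nodes in the same region
    have hE1 : ∀ i : Fin (n + 1), ρ i = τ →
        |ℓ κ i t - ∏ j ∈ (Finset.univ.filter (fun j : Fin (n + 1) => ρ j = τ)).erase i,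
          ((t - x j) / (x i - x j))| ≤ h κ := by
      intro i hiτ
      have hdenv : ∀ j, S κ (x i) - S κ (x j) = (x i - x j) + ((τ : ℝ) - ρ j) * κ := by
        intro j; rw [hSx, hSx, hiτ]; ring
      have h1 := Finset.prod_filter_mul_prod_filter_not (Finset.univ.erase i)
        (fun j => ρ j = τ) (fun j => (S κ t - S κ (x j)) / (S κ (x i) - S κ (x j)))
      have hfe : (Finset.univ.erase i).filter (fun j => ρ j = τ)
          = (Finset.univ.filter (fun j : Fin (n + 1) => ρ j = τ)).erase i := by
        ext j
        constructor
        · intro hj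
          have hm := Finset.mem_filter.mp hj
          exact Finset.mem_erase.mpr ⟨(Finset.mem_erase.mp hm.1).1,
            Finset.mem_filter.mpr ⟨Finset.mem_univ _, hm.2⟩⟩
        · intro hj
          have hji := (Finset.mem_erase.mp hj).1
          have hjτ := (Finset.mem_filter.mp (Finset.mem_erase.mp hj).2).2
          exact Finset.mem_filter.mpr ⟨Finset.mem_erase.mpr ⟨hji, Finset.mem_univ _⟩, hjτ⟩
      have hPval : (∏ j ∈ (Finset.univ.filter (fun j : Fin (n + 1) => ρ j = τ)).erase i,
            (S κ t - S κ (x j)) / (S κ (x i) - S κ (x j)))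
          = ∏ j ∈ (Finset.univ.filter (fun j : Fin (n + 1) => ρ j = τ)).erase i,
            ((t - x j) / (x i - x j)) := by
        refine Finset.prod_congr rfl (fun j hj => ?_)
        obtain ⟨hji, hjf⟩ := Finset.mem_erase.mp hj
        have hjτ : ρ j = τ := (Finset.mem_filter.mp hjf).2
        rw [hnum j, hdenv j, hjτ]
        ring
      have hℓPQ : ℓ κ i t =
          (∏ j ∈ (Finset.univ.filter (fun j : Fin (n + 1) => ρ j = τ)).erase i,
            ((t - x j) / (x i - x j))) *
          (∏ j ∈ (Finset.univ.erase i).filter (fun j => ¬ρ j = τ),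
            (S κ t - S κ (x j)) / (S κ (x i) - S κ (x j))) := by
        rw [hℓ, ← h1, hfe, hPval]
      have hQ1 : |(∏ j ∈ (Finset.univ.erase i).filter (fun j => ¬ρ j = τ),
            (S κ t - S κ (x j)) / (S κ (x i) - S κ (x j))) - 1|
          ≤ (1 + B1 κ) ^ (n + 1) - 1 := by
        refine le_trans (prod_sub_one_le hB1nn ?_) ?_
        · intro j hj
          obtain ⟨hj1, hjτ⟩ := Finset.mem_filter.mp hj
          have hτρ : (τ : ℕ) ≠ ρ j := fun hh => hjτ hh.symm
          have hd1 : κ - M ≤ |S κ (x i) - S κ (x j)| := by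
            rw [hdenv j]
            exact hlb _ _ (hsub _ (hxΩ i) _ (hxΩ j)) (hz1 τ (ρ j) hτρ)
          have hdne : S κ (x i) - S κ (x j) ≠ 0 := by
            intro h0
            rw [h0, abs_zero] at hd1
            linarith
          rw [div_sub_one hdne]
          have hnd : S κ t - S κ (x j) - (S κ (x i) - S κ (x j)) = t - x i := by
            rw [hnum j, hdenv j]; ring
          rw [hnd, abs_div]
          exact div_le_div₀ hM.le (hsub t htI _ (hxΩ i)) hκM hd1
        · have hc : ((Finset.univ.erase i).filter (fun j => ¬ρ j = τ)).card ≤ n + 1 :=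
            hcard_le _
          have h11 : (1 : ℝ) ≤ 1 + B1 κ := by linarith
          exact sub_le_sub_right (pow_le_pow_right₀ h11 hc) 1
      have hPb : |∏ j ∈ (Finset.univ.filter (fun j : Fin (n + 1) => ρ j = τ)).erase i,
          ((t - x j) / (x i - x j))| ≤ R ^ n := by
        rw [Finset.abs_prod]
        refine le_trans (prod_le_pow_of_le hR0 (fun j hj => abs_nonneg _) (fun j hj => ?_))
          (pow_le_pow_right₀ hR1 (hcard_erase_le i _))
        obtain ⟨hji, _⟩ := Finset.mem_erase.mp hj
        rw [abs_div]
        exact hRb t htI i j (Ne.symm hji)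
      rw [hℓPQ]
      calc |(∏ j ∈ (Finset.univ.filter (fun j : Fin (n + 1) => ρ j = τ)).erase i,
            ((t - x j) / (x i - x j))) *
          (∏ j ∈ (Finset.univ.erase i).filter (fun j => ¬ρ j = τ),
            (S κ t - S κ (x j)) / (S κ (x i) - S κ (x j))) -
          (∏ j ∈ (Finset.univ.filter (fun j : Fin (n + 1) => ρ j = τ)).erase i,
            ((t - x j) / (x i - x j)))|
          = |∏ j ∈ (Finset.univ.filter (fun j : Fin (n + 1) => ρ j = τ)).erase i,
            ((t - x j) / (x i - x j))| *
            |(∏ j ∈ (Finset.univ.erase i).filter (fun j => ¬ρ j = τ),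
            (S κ t - S κ (x j)) / (S κ (x i) - S κ (x j))) - 1| := by
            rw [← abs_mul]; congr 1; ring
        _ ≤ R ^ n * ((1 + B1 κ) ^ (n + 1) - 1) :=
            mul_le_mul hPb hQ1 (abs_nonneg _) (pow_nonneg hR0 n)
        _ = h κ := rfl
    -- (E2) nodes in other regions
    have hE2 : ∀ i : Fin (n + 1), ¬ρ i = τ → |ℓ κ i t| ≤ g κ := by
      intro i hiτ
      have hσd : ρ i ≤ d := hρd i
      have hdenv : ∀ j, S κ (x i) - S κ (x j) = (x i - x j) + ((ρ i : ℝ) - ρ j) * κ := by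
        intro j; rw [hSx, hSx]; ring
      rw [hℓ, Finset.abs_prod]
      have h1 := Finset.prod_filter_mul_prod_filter_not (Finset.univ.erase i)
        (fun j => ρ j = τ) (fun j => |(S κ t - S κ (x j)) / (S κ (x i) - S κ (x j))|)
      have h2 := Finset.prod_filter_mul_prod_filter_not
        ((Finset.univ.erase i).filter (fun j => ¬ρ j = τ))
        (fun j => ρ j = ρ i) (fun j => |(S κ t - S κ (x j)) / (S κ (x i) - S κ (x j))|)
      rw [← h1, ← h2]
      set s1 := (Finset.univ.erase i).filter (fun j => ρ j = τ) with hs1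
      set s2 := ((Finset.univ.erase i).filter (fun j => ¬ρ j = τ)).filter
        (fun j => ρ j = ρ i) with hs2
      set s3 := ((Finset.univ.erase i).filter (fun j => ¬ρ j = τ)).filter
        (fun j => ¬ρ j = ρ i) with hs3
      have hs1card : s1.card = (Finset.univ.filter (fun j : Fin (n + 1) => ρ j = τ)).card := by
        congr 1
        rw [hs1]
        ext j
        constructor
        · intro hj
          exact Finset.mem_filter.mpr ⟨Finset.mem_univ _, (Finset.mem_filter.mp hj).2⟩
        · intro hj
          have hjτ := (Finset.mem_filter.mp hj).2
          refine Finset.mem_filter.mpr ⟨Finset.mem_erase.mpr ⟨?_, Finset.mem_univ _⟩, hjτ⟩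
          intro hji
          rw [hji] at hjτ
          exact hiτ hjτ
      have hs2eq : s2 = (Finset.univ.filter (fun j : Fin (n + 1) => ρ j = ρ i)).erase i := by
        rw [hs2]
        ext j
        constructor
        · intro hj
          have hm := Finset.mem_filter.mp hj
          have hm1 := Finset.mem_filter.mp hm.1
          have hji := (Finset.mem_erase.mp hm1.1).1
          exact Finset.mem_erase.mpr ⟨hji, Finset.mem_filter.mpr ⟨Finset.mem_univ _, hm.2⟩⟩
        · intro hj
          have hji := (Finset.mem_erase.mp hj).1
          have hjρ := (Finset.mem_filter.mp (Finset.mem_erase.mp hj).2).2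
          refine Finset.mem_filter.mpr ⟨Finset.mem_filter.mpr
            ⟨Finset.mem_erase.mpr ⟨hji, Finset.mem_univ _⟩, ?_⟩, hjρ⟩
          intro hh
          exact hiτ (hjρ.symm.trans hh)
      have hcard2 : s2.card + 1 = s1.card := by
        have himem : i ∈ Finset.univ.filter (fun j : Fin (n + 1) => ρ j = ρ i) :=
          Finset.mem_filter.mpr ⟨Finset.mem_univ _, rfl⟩
        rw [hs2eq, Finset.card_erase_of_mem himem, hs1card,
          ← hsize (ρ i) hσd τ hτ]
        have hpos : 0 < (Finset.univ.filter (fun j : Fin (n + 1) => ρ j = ρ i)).card :=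
          Finset.card_pos.mpr ⟨i, Finset.mem_filter.mpr ⟨Finset.mem_univ _, rfl⟩⟩
        omega
      have hb1 : ∀ j ∈ s1, |(S κ t - S κ (x j)) / (S κ (x i) - S κ (x j))| ≤ B1 κ := by
        intro j hj
        rw [hs1] at hj
        obtain ⟨hj1, hjτ⟩ := Finset.mem_filter.mp hj
        have hnumv : S κ t - S κ (x j) = t - x j := by rw [hnum j, hjτ]; ring
        have hden : κ - M ≤ |S κ (x i) - S κ (x j)| := by
          rw [hdenv j]
          refine hlb _ _ (hsub _ (hxΩ i) _ (hxΩ j)) (hz1 (ρ i) (ρ j) ?_)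
          exact fun hh => hiτ (hh.trans hjτ)
        rw [abs_div, hnumv]
        exact div_le_div₀ hM.le (hsub t htI _ (hxΩ j)) hκM hden
      have hb2 : ∀ j ∈ s2, |(S κ t - S κ (x j)) / (S κ (x i) - S κ (x j))|
          ≤ (M + d * κ) / δ := by
        intro j hj
        rw [hs2] at hj
        obtain ⟨hj1, hjρ⟩ := Finset.mem_filter.mp hj
        obtain ⟨hj2, _⟩ := Finset.mem_filter.mp hj1
        have hji : j ≠ i := (Finset.mem_erase.mp hj2).1
        have hdenv2 : S κ (x i) - S κ (x j) = x i - x j := by rw [hdenv j, hjρ]; ring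
        have hnumb : |S κ t - S κ (x j)| ≤ M + d * κ := by
          rw [hnum j]
          exact hub _ _ (hsub t htI _ (hxΩ j)) (hzd τ (ρ j) hτ (hρd j))
        rw [abs_div, hdenv2]
        exact div_le_div₀ (by positivity) hnumb hδpos (hδle i j (Ne.symm hji))
      have hb3 : ∀ j ∈ s3, |(S κ t - S κ (x j)) / (S κ (x i) - S κ (x j))| ≤ B3 κ := by
        intro j hj
        rw [hs3] at hj
        obtain ⟨hj1, hjρ⟩ := Finset.mem_filter.mp hj
        have hnumb : |S κ t - S κ (x j)| ≤ M + d * κ := by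
          rw [hnum j]
          exact hub _ _ (hsub t htI _ (hxΩ j)) (hzd τ (ρ j) hτ (hρd j))
        have hden : κ - M ≤ |S κ (x i) - S κ (x j)| := by
          rw [hdenv j]
          refine hlb _ _ (hsub _ (hxΩ i) _ (hxΩ j)) (hz1 (ρ i) (ρ j) ?_)
          exact fun hh => hjρ hh.symm
        rw [abs_div]
        exact div_le_div₀ (by positivity) hnumb hκM hden
      have hp1 : (∏ j ∈ s1, |(S κ t - S κ (x j)) / (S κ (x i) - S κ (x j))|)
          ≤ B1 κ ^ s1.card :=
        prod_le_pow_of_le hB1nn (fun j _ => abs_nonneg _) hb1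
      have hp2 : (∏ j ∈ s2, |(S κ t - S κ (x j)) / (S κ (x i) - S κ (x j))|)
          ≤ ((M + d * κ) / δ) ^ s2.card :=
        prod_le_pow_of_le (by positivity) (fun j _ => abs_nonneg _) hb2
      have hB3nn : 0 ≤ B3 κ := div_nonneg (by positivity) hκM.le
      have hp3 : (∏ j ∈ s3, |(S κ t - S κ (x j)) / (S κ (x i) - S κ (x j))|)
          ≤ B3 κ ^ s3.card :=
        prod_le_pow_of_le hB3nn (fun j _ => abs_nonneg _) hb3
      have hprodnn : ∀ s : Finset (Fin (n + 1)),
          0 ≤ ∏ j ∈ s, |(S κ t - S κ (x j)) / (S κ (x i) - S κ (x j))| :=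
        fun s => Finset.prod_nonneg (fun j _ => abs_nonneg _)
      calc (∏ j ∈ s1, |(S κ t - S κ (x j)) / (S κ (x i) - S κ (x j))|) *
            ((∏ j ∈ s2, |(S κ t - S κ (x j)) / (S κ (x i) - S κ (x j))|) *
             (∏ j ∈ s3, |(S κ t - S κ (x j)) / (S κ (x i) - S κ (x j))|))
          ≤ B1 κ ^ s1.card * (((M + d * κ) / δ) ^ s2.card * B3 κ ^ s3.card) := by
            refine mul_le_mul hp1 ?_ ?_ (pow_nonneg hB1nn _)
            · exact mul_le_mul hp2 hp3 (hprodnn s3) (by positivity)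
            · exact mul_nonneg (hprodnn s2) (hprodnn s3)
        _ = B1 κ * ((B1 κ * ((M + d * κ) / δ)) ^ s2.card * B3 κ ^ s3.card) := by
            rw [← hcard2, pow_succ', mul_pow]
            ring
        _ ≤ B1 κ * ((max 1 (B1 κ * ((M + d * κ) / δ))) ^ (n + 1) *
              (max 1 (B3 κ)) ^ (n + 1)) := by
            refine mul_le_mul_of_nonneg_left ?_ hB1nn
            have e1 : (B1 κ * ((M + d * κ) / δ)) ^ s2.card
                ≤ (max 1 (B1 κ * ((M + d * κ) / δ))) ^ (n + 1) := by
              refine le_trans (pow_le_pow_left₀ (by positivity) (le_max_right 1 _) _) ?_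
              exact pow_le_pow_right₀ (le_max_left _ _) (hcard_le _)
            have e3 : B3 κ ^ s3.card ≤ (max 1 (B3 κ)) ^ (n + 1) := by
              refine le_trans (pow_le_pow_left₀ hB3nn (le_max_right 1 _) _) ?_
              exact pow_le_pow_right₀ (le_max_left _ _) (hcard_le _)
            exact mul_le_mul e1 e3 (pow_nonneg hB3nn _) (by positivity)
        _ = g κ := by show _ = B1 κ * _ ^ (n + 1) * _ ^ (n + 1); ring
    -- assemble
    have hPabs : ∀ i : Fin (n + 1),
        (∏ j ∈ (Finset.univ.filter (fun j : Fin (n + 1) => ρ j = τ)).erase i,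
          |t - x j| / |x i - x j|)
        = |∏ j ∈ (Finset.univ.filter (fun j : Fin (n + 1) => ρ j = τ)).erase i,
          ((t - x j) / (x i - x j))| := by
      intro i
      rw [Finset.abs_prod]
      exact Finset.prod_congr rfl (fun j _ => (abs_div _ _).symm)
    have hsum := Finset.sum_filter_add_sum_filter_not Finset.univ
      (fun j : Fin (n + 1) => ρ j = τ) (fun i => |ℓ κ i t|)
    have hFL : F κ t - L τ t =
        (∑ i ∈ Finset.univ.filter (fun j : Fin (n + 1) => ρ j = τ),
          (|ℓ κ i t| - ∏ j ∈ (Finset.univ.filter (fun j : Fin (n + 1) => ρ j = τ)).erase i,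
            |t - x j| / |x i - x j|))
        + ∑ i ∈ Finset.univ.filter (fun j : Fin (n + 1) => ¬ρ j = τ), |ℓ κ i t| := by
      rw [Finset.sum_sub_distrib]
      show (∑ i : Fin (n + 1), |ℓ κ i t|) - L τ t = _
      rw [← hsum]
      ring
    rw [hFL]
    have hT1 : |∑ i ∈ Finset.univ.filter (fun j : Fin (n + 1) => ρ j = τ),
          (|ℓ κ i t| - ∏ j ∈ (Finset.univ.filter (fun j : Fin (n + 1) => ρ j = τ)).erase i,
            |t - x j| / |x i - x j|)|
        ≤ (n + 1 : ℝ) * h κ := by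
      refine le_trans (Finset.abs_sum_le_sum_abs _ _) ?_
      have hterm : ∀ i ∈ Finset.univ.filter (fun j : Fin (n + 1) => ρ j = τ),
          abs (|ℓ κ i t| - ∏ j ∈ (Finset.univ.filter (fun j : Fin (n + 1) => ρ j = τ)).erase i,
            |t - x j| / |x i - x j|) ≤ h κ := by
        intro i hi
        have hiτ : ρ i = τ := (Finset.mem_filter.mp hi).2
        rw [hPabs i]
        exact le_trans (abs_abs_sub_abs_le_abs_sub _ _) (hE1 i hiτ)
      calc ∑ i ∈ Finset.univ.filter (fun j : Fin (n + 1) => ρ j = τ),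
            abs (|ℓ κ i t| - ∏ j ∈ (Finset.univ.filter (fun j : Fin (n + 1) => ρ j = τ)).erase i,
              |t - x j| / |x i - x j|)
          ≤ ∑ _i ∈ Finset.univ.filter (fun j : Fin (n + 1) => ρ j = τ), h κ :=
            Finset.sum_le_sum hterm
        _ = ((Finset.univ.filter (fun j : Fin (n + 1) => ρ j = τ)).card : ℝ) * h κ := by
            rw [Finset.sum_const, nsmul_eq_mul]
        _ ≤ (n + 1 : ℝ) * h κ := by
            refine mul_le_mul_of_nonneg_right ?_ (hh0 κ hκ)
            exact_mod_cast hcard_le _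
    have hT2 : abs (∑ i ∈ Finset.univ.filter (fun j : Fin (n + 1) => ¬ρ j = τ), |ℓ κ i t|)
        ≤ (n + 1 : ℝ) * g κ := by
      rw [abs_of_nonneg (Finset.sum_nonneg (fun i _ => abs_nonneg _))]
      calc ∑ i ∈ Finset.univ.filter (fun j : Fin (n + 1) => ¬ρ j = τ), |ℓ κ i t|
          ≤ ∑ _i ∈ Finset.univ.filter (fun j : Fin (n + 1) => ¬ρ j = τ), g κ :=
            Finset.sum_le_sum (fun i hi => hE2 i (Finset.mem_filter.mp hi).2)
        _ = ((Finset.univ.filter (fun j : Fin (n + 1) => ¬ρ j = τ)).card : ℝ) * g κ := by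
            rw [Finset.sum_const, nsmul_eq_mul]
        _ ≤ (n + 1 : ℝ) * g κ := by
            refine mul_le_mul_of_nonneg_right ?_ (hg0 κ hκ)
            exact_mod_cast hcard_le _
    refine le_trans (abs_add_le _ _) (le_trans (add_le_add hT1 hT2) (le_of_eq ?_))
    show (n + 1 : ℝ) * h κ + (n + 1 : ℝ) * g κ = (n + 1 : ℝ) * (g κ + h κ)
    ring
  -- uniform upper bound for F on [a,b]
  have hFub : ∀ κ, 2 * M + 1 ≤ κ → ∀ t ∈ Set.Icc a b, F κ t ≤ K + e κ := by
    intro κ hκ t ht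
    obtain ⟨τ, hτ, hmem⟩ := hcover t ht
    have h1 : F κ t - L τ t ≤ e κ := le_trans (le_abs_self _) (hmaster κ hκ τ hτ t hmem)
    have h2 := hLK τ hτ t ht
    linarith
  have haI : a ∈ Set.Icc a b := ⟨le_rfl, hab.le⟩
  have hGnn : ∀ κ, 2 * M + 1 ≤ κ → 0 ≤ ⨆ t ∈ Set.Icc a b, F κ t := by
    intro κ hκ
    exact le_trans (hF0 κ a) (real_le_sup2 (fun t' ht' => hFub κ hκ t' ht') a haI)
  have hΛnn : 0 ≤ ⨆ τ ∈ Finset.range (d + 1), ⨆ t ∈ Reg τ, L τ t :=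
    real_sup2_nonneg (fun τ _ => real_sup2_nonneg (fun t _ => hL0 τ t))
  have hΛK : ∀ τ', τ' ∈ Finset.range (d + 1) → (⨆ t ∈ Reg τ', L τ' t) ≤ K := by
    intro τ' hτ'
    have hτd : τ' ≤ d := by
      have := Finset.mem_range.mp hτ'
      omega
    exact real_sup2_le (fun t' ht' => hLK τ' hτd t' (hRegSub τ' hτd ht')) hK0
  have hdir1 : ∀ κ, 2 * M + 1 ≤ κ →
      (⨆ t ∈ Set.Icc a b, F κ t) ≤
        (⨆ τ ∈ Finset.range (d + 1), ⨆ t ∈ Reg τ, L τ t) + e κ := by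
    intro κ hκ
    refine real_sup2_le (fun t ht => ?_) (add_nonneg hΛnn (he0 κ hκ))
    obtain ⟨τ, hτ, hmem⟩ := hcover t ht
    have h1 : F κ t - L τ t ≤ e κ := le_trans (le_abs_self _) (hmaster κ hκ τ hτ t hmem)
    have h2 : L τ t ≤ ⨆ t' ∈ Reg τ, L τ t' :=
      real_le_sup2 (fun t' ht' => hLK τ hτ t' (hRegSub τ hτ ht')) t hmem
    have h3 : (⨆ t' ∈ Reg τ, L τ t') ≤ ⨆ τ' ∈ Finset.range (d + 1), ⨆ t' ∈ Reg τ', L τ' t' :=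
      real_le_sup2 (p := fun τ' => τ' ∈ Finset.range (d + 1))
        (f := fun τ' => ⨆ t' ∈ Reg τ', L τ' t') hΛK τ (Finset.mem_range.mpr (by omega))
    linarith
  have hdir2 : ∀ κ, 2 * M + 1 ≤ κ →
      (⨆ τ ∈ Finset.range (d + 1), ⨆ t ∈ Reg τ, L τ t) ≤
        (⨆ t ∈ Set.Icc a b, F κ t) + e κ := by
    intro κ hκ
    refine real_sup2_le (fun τ hτr => ?_) (add_nonneg (hGnn κ hκ) (he0 κ hκ))
    have hτd : τ ≤ d := by
      have := Finset.mem_range.mp hτr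
      omega
    refine real_sup2_le (fun t ht => ?_) (add_nonneg (hGnn κ hκ) (he0 κ hκ))
    have h1 : L τ t - F κ t ≤ e κ := by
      have := le_trans (neg_le_abs (F κ t - L τ t)) (hmaster κ hκ τ hτd t ht)
      linarith
    have h2 : F κ t ≤ ⨆ t' ∈ Set.Icc a b, F κ t' :=
      real_le_sup2 (fun t' ht' => hFub κ hκ t' ht') t (hRegSub τ hτd ht)
    linarith
  have hlo : Tendsto (fun κ => (⨆ τ ∈ Finset.range (d + 1), ⨆ t ∈ Reg τ, L τ t) - e κ) atTop
      (𝓝 (⨆ τ ∈ Finset.range (d + 1), ⨆ t ∈ Reg τ, L τ t)) := by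
    have := (tendsto_const_nhds
      (x := ⨆ τ ∈ Finset.range (d + 1), ⨆ t ∈ Reg τ, L τ t)).sub het
    simpa using this
  have hhi : Tendsto (fun κ => (⨆ τ ∈ Finset.range (d + 1), ⨆ t ∈ Reg τ, L τ t) + e κ) atTop
      (𝓝 (⨆ τ ∈ Finset.range (d + 1), ⨆ t ∈ Reg τ, L τ t)) := by
    have := (tendsto_const_nhds
      (x := ⨆ τ ∈ Finset.range (d + 1), ⨆ t ∈ Reg τ, L τ t)).add het
    simpa using this
  refine tendsto_of_tendsto_of_tendsto_of_le_of_le' hlo hhi ?_ ?_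
  · filter_upwards [eventually_ge_atTop (2 * M + 1)] with κ hκ
    have := hdir2 κ hκ
    linarith
  · filter_upwards [eventually_ge_atTop (2 * M + 1)] with κ hκ
    have := hdir1 κ hκ
    linarith
end

section
/- (Local fake nodes are (β,γ)-Chebyshev) Let x_j = a + (b−a)j/n, j = 0,…,n, be equispaced nodes in Ω = [a,b], let a = ξ_0 < ξ_1 < ⋯ < ξ_d < ξ_{d+1} = b, set Ω¹ = [a,ξ_1], Ω^i = (ξ_{i−1},ξ_i] for i = 2,…,d+1, and X^i = {x_j : x_j ∈ Ω^i}. For each i with |X^i| ≥ 2 there exist β_i, γ_i ≥ 0 with β_i + γ_i < 2 such that F^i(X^i) = E^{β_i,γ_i}_{|X^i|}, and consequently (M_1 ∘ F^i)(X^i) = U^{β_i,γ_i}_{|X^i|}. -/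
open Real

set_option maxHeartbeats 1000000 in
open scoped Classical in
theorem stmt_17
    (a b : ℝ) (hab : a < b)
    (n : ℕ) (hn : 1 ≤ n)
    (x : ℕ → ℝ) (hx : ∀ j, x j = a + (b - a) * (j : ℝ) / (n : ℝ))
    (d : ℕ) (ξ : ℕ → ℝ) (hξ0 : ξ 0 = a) (hξlast : ξ (d + 1) = b)
    (hξmono : ∀ k ≤ d, ξ k < ξ (k + 1))
    (Reg : ℕ → Set ℝ)
    (hReg : ∀ τ, Reg τ = if τ = 0 then Set.Icc (ξ 0) (ξ 1) else Set.Ioc (ξ τ) (ξ (τ + 1)))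
    (F : ℕ → ℝ → ℝ)
    (hF : ∀ i t, F i t = 2 * (t - ξ i) / (ξ (i + 1) - ξ i) - 1)
    (i : ℕ) (hi : i ≤ d)
    (X : Finset ℕ) (hX : X = (Finset.range (n + 1)).filter (fun j => x j ∈ Reg i))
    (hcard : 2 ≤ X.card) :
    ∃ β γ : ℝ, 0 ≤ β ∧ 0 ≤ γ ∧ β + γ < 2 ∧
      X.image (fun j => F i (x j)) =
        (Finset.range X.card).image
          (fun j => 1 - γ - (2 - β - γ) * (j : ℝ) / ((X.card : ℝ) - 1)) ∧
      X.image (fun j => Real.sin (π * F i (x j) / 2)) =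
        (Finset.range X.card).image
          (fun j => Real.cos ((2 - β - γ) * (j : ℝ) * π / (2 * ((X.card : ℝ) - 1)) + γ * π / 2)) := by
  have hn0 : (n : ℝ) ≠ 0 := Nat.cast_ne_zero.2 (by omega)
  have hnpos : (0:ℝ) < n := by positivity
  have hh : 0 < ξ (i+1) - ξ i := sub_pos.2 (hξmono i hi)
  set s : ℝ := 2 * (b - a) / ((n:ℝ) * (ξ (i+1) - ξ i)) with hs_def
  have hs : 0 < s := by
    apply div_pos (by linarith) (by positivity)
  set f : ℕ → ℝ := fun j => F i (x j) with hf_def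
  have hfd : ∀ j k : ℕ, f j - f k = s * ((j:ℝ) - (k:ℝ)) := by
    intro j k
    simp only [hf_def, hF, hx, hs_def]
    field_simp
    ring
  -- monotonicity of x
  have hxmono : ∀ {j k : ℕ}, j ≤ k → x j ≤ x k := by
    intro j k hjk
    rw [hx, hx]
    have : (j:ℝ) ≤ k := Nat.cast_le.2 hjk
    have hba : (0:ℝ) < b - a := by linarith
    apply add_le_add_right
    apply div_le_div_of_nonneg_right ?_ hnpos.le
    nlinarith
  -- X nonempty
  have hne : X.Nonempty := Finset.card_pos.1 (by omega)
  set j0 := X.min' hne with hj0_def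
  set j1 := X.max' hne with hj1_def
  have hj0X : j0 ∈ X := X.min'_mem hne
  have hj1X : j1 ∈ X := X.max'_mem hne
  have hmin : ∀ j ∈ X, j0 ≤ j := fun j hj => X.min'_le j hj
  have hmax : ∀ j ∈ X, j ≤ j1 := fun j hj => X.le_max' j hj
  clear_value j0 j1
  have hmemX : ∀ j, j ∈ X ↔ j ≤ n ∧ x j ∈ Reg i := by
    intro j
    rw [hX, Finset.mem_filter, Finset.mem_range]
    constructor <;> intro h <;> exact ⟨by omega, h.2⟩
  have hRegSub : Reg i ⊆ Set.Icc (ξ i) (ξ (i+1)) := by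
    rw [hReg]
    split_ifs with h0
    · subst h0; exact le_refl _
    · exact Set.Ioc_subset_Icc_self
  have hRegOC : ∀ {u v w : ℝ}, u ∈ Reg i → w ∈ Reg i → u ≤ v → v ≤ w → v ∈ Reg i := by
    intro u v w hu hw huv hvw
    rw [hReg] at hu hw ⊢
    split_ifs at hu hw ⊢ with h0
    · exact ⟨le_trans hu.1 huv, le_trans hvw hw.2⟩
    · exact ⟨lt_of_lt_of_le hu.1 huv, le_trans hvw hw.2⟩
  have hXIcc : X = Finset.Icc j0 j1 := by
    ext j
    rw [Finset.mem_Icc]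
    constructor
    · intro hj; exact ⟨hmin j hj, hmax j hj⟩
    · rintro ⟨h1, h2⟩
      rw [hmemX]
      refine ⟨le_trans h2 ((hmemX j1).1 hj1X).1, ?_⟩
      exact hRegOC ((hmemX j0).1 hj0X).2 ((hmemX j1).1 hj1X).2 (hxmono h1) (hxmono h2)
  have hcard' : X.card = j1 - j0 + 1 := by
    rw [hXIcc, Nat.card_Icc]
    have : j0 ≤ j1 := hmin j1 hj1X
    omega
  have hj01 : j0 < j1 := by
    by_contra h
    have : j0 ≤ j1 := hmin j1 hj1X
    omega
  -- bounds
  have hx0 : ξ i ≤ x j0 := (hRegSub ((hmemX j0).1 hj0X).2).1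
  have hx1 : x j1 ≤ ξ (i+1) := (hRegSub ((hmemX j1).1 hj1X).2).2
  have hf0 : -1 ≤ f j0 := by
    simp only [hf_def, hF]
    rw [le_sub_iff_add_le]
    have : 0 ≤ 2 * (x j0 - ξ i) / (ξ (i+1) - ξ i) := by
      apply div_nonneg (by linarith) (le_of_lt hh)
    linarith
  have hf1 : f j1 ≤ 1 := by
    simp only [hf_def, hF]
    rw [sub_le_iff_le_add]
    rw [div_le_iff₀ hh]
    linarith
  have hsum : (1 + f j0) + (1 - f j1) < 2 := by
    have := hfd j1 j0
    have hdiff : (0:ℝ) < (j1:ℝ) - j0 := by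
      have : (j0:ℝ) < j1 := Nat.cast_lt.2 hj01
      linarith
    nlinarith
  -- common facts
  have hm1 : ((X.card : ℝ) - 1) = (j1:ℝ) - (j0:ℝ) := by
    rw [hcard']
    have : ((j1 - j0 + 1 : ℕ) : ℝ) = ((j1:ℝ) - j0) + 1 := by
      push_cast [Nat.cast_sub (le_of_lt hj01)]
      ring
    rw [this]; ring
  have hm1ne : ((X.card : ℝ) - 1) ≠ 0 := by
    rw [hm1]
    have : (j0:ℝ) < j1 := Nat.cast_lt.2 hj01
    linarith
  have hbg : 2 - (1 + f j0) - (1 - f j1) = f j1 - f j0 := by ring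
  -- key: value of the RHS linear function at k equals f (j1 - k) for k < X.card
  have hkey : ∀ k : ℕ, k < X.card →
      1 - (1 - f j1) - (2 - (1 + f j0) - (1 - f j1)) * (k:ℝ) / ((X.card:ℝ) - 1)
        = f (j1 - k) := by
    intro k hk
    have hkle : k ≤ j1 - j0 := by omega
    have hkle' : k ≤ j1 := by omega
    have h1 : f (j1 - k) - f j1 = s * (((j1 - k : ℕ):ℝ) - (j1:ℝ)) := hfd _ _
    have hcast : ((j1 - k : ℕ):ℝ) = (j1:ℝ) - (k:ℝ) := by
      push_cast [Nat.cast_sub hkle']; ring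
    rw [hcast] at h1
    have h2 : f j1 - f j0 = s * ((j1:ℝ) - (j0:ℝ)) := hfd _ _
    rw [hbg, h2, hm1]
    have hne' : (j1:ℝ) - (j0:ℝ) ≠ 0 := by rw [← hm1]; exact hm1ne
    field_simp
    nlinarith [h1]
  have himg1 : X.image (fun j => F i (x j)) =
      (Finset.range X.card).image
        (fun j : ℕ => 1 - (1 - f j1) - (2 - (1 + f j0) - (1 - f j1)) * (j : ℝ) / ((X.card : ℝ) - 1)) := by
    ext y
    simp only [Finset.mem_image, Finset.mem_range]
    constructor
    · rintro ⟨j, hj, rfl⟩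
      rw [hXIcc, Finset.mem_Icc] at hj
      refine ⟨j1 - j, by omega, ?_⟩
      rw [hkey (j1 - j) (by omega)]
      have hjj : j1 - (j1 - j) = j := by omega
      rw [hjj]
    · rintro ⟨k, hk, rfl⟩
      refine ⟨j1 - k, ?_, (hkey k hk).symm⟩
      rw [hXIcc, Finset.mem_Icc]
      omega
  -- second image via composing with t ↦ sin (π t / 2)
  have e1 : X.image (fun j => Real.sin (π * F i (x j) / 2))
      = (X.image (fun j => F i (x j))).image (fun t => Real.sin (π * t / 2)) := by
    rw [Finset.image_image]
    rfl
  have e2 : (Finset.range X.card).image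
        (fun j : ℕ => Real.cos ((2 - (1 + f j0) - (1 - f j1)) * (j : ℝ) * π / (2 * ((X.card : ℝ) - 1)) + (1 - f j1) * π / 2))
      = ((Finset.range X.card).image
          (fun j : ℕ => 1 - (1 - f j1) - (2 - (1 + f j0) - (1 - f j1)) * (j : ℝ) / ((X.card : ℝ) - 1))).image
          (fun t => Real.sin (π * t / 2)) := by
    rw [Finset.image_image]
    apply Finset.image_congr
    intro k _
    simp only [Function.comp_apply]
    rw [← Real.cos_pi_div_two_sub]
    congr 1
    rw [mul_comm (2:ℝ) ((X.card:ℝ) - 1), ← div_div, mul_div_assoc]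
    ring
  have hcoe : (do
      let a ← Finset.range X.card
      pure ((a : ℝ)) : Finset ℝ) = (Finset.range X.card).image (fun a : ℕ => (a : ℝ)) := by
    exact Finset.sup_singleton_apply _ _
  refine ⟨1 + f j0, 1 - f j1, by linarith, by linarith, hsum, ?_, ?_⟩
  · rw [hcoe, Finset.image_image]
    exact himg1
  · rw [hcoe, Finset.image_image, e1, himg1]
    exact e2.symm
end
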